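/- arXiv:2307.06653 — 15 statements merged into one kernel-verified Lean document; each statement's English description precedes it below -/
import Mathlib

section
/- Let (X, 𝓤) be a uniform space and let A, B ⊆ X be nonempty subsets. If there exists an entourage α ∈ 𝓤 such that A ∩ α[B] = ∅, where α[B] = {y ∈ X : (b, y) ∈ α for some b ∈ B}, then there exists a uniformly continuous function f : X → ℝ with 0 ≤ f(x) ≤ 1 for all x ∈ X, f = 1 on A, and f = 0 on B. -/
open Filter Set Metric
open scoped Uniformity
open scoped SetRel

theorem aux_metric {Y : Type*} [PseudoMetricSpace Y] (A B : Set Y) (hB : B.Nonempty)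
    (ε : ℝ) (hε : 0 < ε) (hAB : ∀ a ∈ A, ∀ b ∈ B, ε ≤ dist a b) :
    ∃ f : Y → ℝ, UniformContinuous f ∧ (∀ x, 0 ≤ f x ∧ f x ≤ 1) ∧
      (∀ a ∈ A, f a = 1) ∧ (∀ b ∈ B, f b = 0) := by
  refine ⟨fun x => min 1 (ε⁻¹ * infDist x B), ?_, ?_, ?_, ?_⟩
  · rw [Metric.uniformContinuous_iff]
    intro δ hδ
    refine ⟨ε * δ, mul_pos hε hδ, fun {x y} hxy => ?_⟩
    have h1 : |infDist x B - infDist y B| ≤ dist x y := by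
      rw [abs_sub_le_iff]
      have e1 := infDist_le_infDist_add_dist (x := x) (y := y) (s := B)
      have e2 := infDist_le_infDist_add_dist (x := y) (y := x) (s := B)
      rw [dist_comm] at e2
      constructor <;> linarith
    have h2 : |min 1 (ε⁻¹ * infDist x B) - min 1 (ε⁻¹ * infDist y B)| ≤
        |ε⁻¹ * infDist x B - ε⁻¹ * infDist y B| := by
      refine (abs_min_sub_min_le_max _ _ _ _).trans ?_
      simp
    have h3 : |ε⁻¹ * infDist x B - ε⁻¹ * infDist y B| = ε⁻¹ * |infDist x B - infDist y B| := by
      rw [← mul_sub, abs_mul, abs_of_nonneg (inv_nonneg.2 hε.le)]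
    have hεinv : (0 : ℝ) < ε⁻¹ := inv_pos.2 hε
    rw [Real.dist_eq]
    calc |min 1 (ε⁻¹ * infDist x B) - min 1 (ε⁻¹ * infDist y B)|
        ≤ ε⁻¹ * |infDist x B - infDist y B| := by rw [← h3]; exact h2
      _ ≤ ε⁻¹ * dist x y := by gcongr
      _ < ε⁻¹ * (ε * δ) := by gcongr
      _ = δ := by field_simp
  · intro x
    exact ⟨le_min zero_le_one (mul_nonneg (inv_nonneg.2 hε.le) Metric.infDist_nonneg),
      min_le_left _ _⟩
  · intro a ha
    have h1 : ε ≤ infDist a B := by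
      by_contra hlt
      push_neg at hlt
      obtain ⟨b, hb, hd⟩ := (infDist_lt_iff hB).1 hlt
      exact absurd hd (not_lt.2 (hAB a ha b hb))
    have h2 : 1 ≤ ε⁻¹ * infDist a B := by
      rw [← inv_mul_cancel₀ hε.ne']
      exact mul_le_mul_of_nonneg_left h1 (inv_nonneg.2 hε.le)
    simpa using min_eq_left h2
  · intro b hb
    simp [infDist_zero_of_mem hb]

theorem aux2 {X : Type*} (u : UniformSpace X) (I : PseudoMetricSpace X)
    (hle : 𝓤[u] ≤ 𝓤[I.toUniformSpace]) (A B : Set X) (hB : B.Nonempty)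
    (α : Set (X × X)) (hα : α ∈ 𝓤[I.toUniformSpace])
    (hAB : A ∩ {y : X | ∃ b ∈ B, (b, y) ∈ α} = ∅) :
    ∃ f : X → ℝ, @UniformContinuous X ℝ u _ f ∧ (∀ x, 0 ≤ f x ∧ f x ≤ 1) ∧
      (∀ a ∈ A, f a = 1) ∧ (∀ b ∈ B, f b = 0) := by
  letI := I
  obtain ⟨ε, hε, hball⟩ := Metric.mem_uniformity_dist.1 hα
  have key : ∀ a ∈ A, ∀ b ∈ B, ε ≤ dist a b := by
    intro a ha b hb
    by_contra hlt
    push_neg at hlt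
    have hba : (b, a) ∈ α := hball (by rwa [dist_comm])
    have : a ∈ A ∩ {y : X | ∃ b ∈ B, (b, y) ∈ α} := ⟨ha, ⟨b, hb, hba⟩⟩
    rw [hAB] at this
    exact this
  obtain ⟨f, hf, h01, hA1, hB0⟩ := aux_metric A B hB ε hε key
  exact ⟨f, hf.mono_left hle, h01, hA1, hB0⟩

theorem aux3 {X : Type*} (u : UniformSpace X) (A B : Set X) (hB : B.Nonempty)
    (α : Set (X × X)) (hα : α ∈ 𝓤[u])
    (hAB : A ∩ {y : X | ∃ b ∈ B, (b, y) ∈ α} = ∅) :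
    ∃ f : X → ℝ, @UniformContinuous X ℝ u _ f ∧ (∀ x, 0 ≤ f x ∧ f x ≤ 1) ∧
      (∀ a ∈ A, f a = 1) ∧ (∀ b ∈ B, f b = 0) := by
  classical
  choose Fnext hF1 hF2 hF3 using fun s : {s : Set (X × X) // s ∈ 𝓤[u]} =>
    @comp_symm_mem_uniformity_sets X u s.1 s.2
  let G : ℕ → {s : Set (X × X) // s ∈ 𝓤[u]} := fun n =>
    Nat.rec ⟨Fnext ⟨α, hα⟩, hF1 _⟩ (fun _ p => ⟨Fnext p, hF1 p⟩) n
  let V : ℕ → Set (X × X) := fun n => (G n).1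
  have hVmem : ∀ n, V n ∈ 𝓤[u] := fun n => (G n).2
  have hVsymm : ∀ n, SetRel.IsSymm (V n) := by
    intro n
    cases n with
    | zero => exact hF2 ⟨α, hα⟩
    | succ m => exact hF2 (G m)
  have hVcomp : ∀ n, V (n + 1) ○ V (n + 1) ⊆ V n := fun n => hF3 (G n)
  have hV0 : V 0 ○ V 0 ⊆ α := hF3 ⟨α, hα⟩
  have hid : ∀ n, SetRel.id ⊆ V n := fun n => by
    rintro ⟨x, y⟩ hxy
    rw [SetRel.mem_id] at hxy
    subst hxy
    exact refl_mem_uniformity (hVmem n)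
  have hVanti : Antitone V :=
    antitone_nat_of_succ_le fun n => (show V (n + 1) ⊆ V (n + 1) ○ V (n + 1) by haveI := SetRel.id_subset_iff.1 (hid (n + 1)); exact SetRel.left_subset_comp).trans (hVcomp n)
  set F : Filter (X × X) := ⨅ n, 𝓟 (V n) with hF
  have hVF : ∀ n, V n ∈ F := fun n => mem_iInf_of_mem n (mem_principal_self _)
  have hαF : α ∈ F := mem_of_superset (hVF 0) ((show V 0 ⊆ V 0 ○ V 0 by haveI := SetRel.id_subset_iff.1 (hid 0); exact SetRel.left_subset_comp).trans hV0)
  have hbasis : F.HasAntitoneBasis V :=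
    ⟨hasBasis_iInf_principal hVanti.directed_ge, hVanti⟩
  have hrefl : 𝓟 SetRel.id ≤ F := le_iInf fun n => principal_mono.2 (hid n)
  have hsymm : Tendsto Prod.swap F F := by
    refine le_iInf fun n => le_principal_iff.2 ?_
    rw [mem_map]
    have : Prod.swap ⁻¹' V n = V n := SetRel.inv_eq_self_iff.2 (hVsymm n)
    rw [this]
    exact hVF n
  have hcompF : (F.lift' fun s => s ○ s) ≤ F := by
    refine le_iInf fun n => le_principal_iff.2 ?_
    exact mem_of_superset (mem_lift' (hVF (n + 1))) (hVcomp n)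
  let u' : UniformSpace X := .ofCore ⟨F, hrefl, hsymm, hcompF⟩
  have hcg : F.IsCountablyGenerated := hbasis.toHasBasis.isCountablyGenerated
  obtain ⟨I, hI⟩ := @UniformSpace.metrizable_uniformity X u' hcg
  have hle : 𝓤[u] ≤ 𝓤[I.toUniformSpace] := by
    rw [hI]
    exact le_iInf fun n => le_principal_iff.2 (hVmem n)
  have hαI : α ∈ 𝓤[I.toUniformSpace] := by rw [hI]; exact hαF
  exact aux2 u I hle A B hB α hαI hAB

/-- Urysohn-type separation lemma for uniform spaces (Lemma 5.5). -/
theorem stmt0 {X : Type*} [UniformSpace X] (A B : Set X) (hA : A.Nonempty) (hB : B.Nonempty)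
    (h : ∃ α ∈ uniformity X, A ∩ {y : X | ∃ b ∈ B, (b, y) ∈ α} = ∅) :
    ∃ f : X → ℝ, UniformContinuous f ∧ (∀ x, 0 ≤ f x ∧ f x ≤ 1) ∧
      (∀ a ∈ A, f a = 1) ∧ (∀ b ∈ B, f b = 0) := by
  obtain ⟨α, hα, hAB⟩ := h
  exact aux3 ‹UniformSpace X› A B hB α hα hAB
end

section
/- Let G be a topological group with identity e and let t ∈ G with t ≠ e. Suppose there is a symmetric neighborhood V of e (i.e., V = V⁻¹) such that (t·V·V·V) ∩ (V·V·V) = ∅, and such that there is a finite set F ⊆ G with (V·V·V·t·V·V·V·t⁻¹) ∪ (V·V·V·t⁻¹·V·V·V·t) ⊆ V·F. Then there exist n ≥ 1 and pairwise disjoint sets P₁, …, Pₙ ⊆ G with P₁ ∪ ⋯ ∪ Pₙ = G and (t·Pₖ) ∩ (V·Pₖ) = ∅ for every k = 1, …, n. -/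
open scoped Pointwise

private def pred' {G : Type*} [Group G] (V : Set G) (d g : G) : Prop :=
  ∃ v ∈ V, ∃ w ∈ V, g = v * (w * d)

private def confL {G : Type*} [Group G] (V : Set G) (t d d' : G) : Prop :=
  ∃ p₁ ∈ V, ∃ p₂ ∈ V, ∃ q₁ ∈ V, ∃ q₂ ∈ V, ∃ q₃ ∈ V,
    t * (p₁ * (p₂ * d)) = q₁ * (q₂ * (q₃ * d'))

private def conf {G : Type*} [Group G] (V : Set G) (t d d' : G) : Prop :=
  confL V t d d' ∨ confL V t d' d

private lemma conf_symm {G : Type*} [Group G] (V : Set G) (t d d' : G) :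
    conf V t d d' → conf V t d' d := Or.symm

/-- Greedy transfinite coloring of a graph with fewer than `n` neighbors per vertex. -/
private lemma exists_coloring {G : Type*} (D : Set G) (C : G → G → Prop)
    (hCsymm : ∀ d d', C d d' → C d' d) (n : ℕ) (hn : 0 < n)
    (hbound : ∀ (g : G) (σ : Fin n → G), (∀ k, σ k ∈ D ∧ C g (σ k)) →
      ¬ Function.Injective σ) :
    ∃ c : G → Fin n, ∀ d ∈ D, ∀ d' ∈ D, C d d' → d ≠ d' → c d ≠ c d' := by
  classical
  have wf : WellFounded (WellOrderingRel : G → G → Prop) := IsWellFounded.wf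
  have hex : ∀ (g : G) (ih : ∀ y, WellOrderingRel y g → Fin n),
      ∃ k : Fin n, ∀ y (h : WellOrderingRel y g), y ∈ D → C g y → ih y h ≠ k := by
    intro g ih
    by_contra hcon
    push_neg at hcon
    choose σ hr hD hC hk using hcon
    refine hbound g σ (fun k => ⟨hD k, hC k⟩) ?_
    have hτ : ∀ k, (fun y => if h : WellOrderingRel y g then ih y h else ⟨0, hn⟩) (σ k) = k := by
      intro k
      simp only [dif_pos (hr k)]
      exact hk k
    intro k₁ k₂ he
    rw [← hτ k₁, ← hτ k₂, he]
  let body : ∀ g, (∀ y, WellOrderingRel y g → Fin n) → Fin n := fun g ih => (hex g ih).choose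
  let c : G → Fin n := wf.fix body
  have hc : ∀ g, c g = body g (fun y _ => c y) := fun g => wf.fix_eq body g
  refine ⟨c, ?_⟩
  have key : ∀ d d', WellOrderingRel d' d → d ∈ D → d' ∈ D → C d d' → c d' ≠ c d := by
    intro d d' hr' hdD hd'D hC'
    have spec := (hex d (fun y _ => c y)).choose_spec
    have hcd : c d = (hex d (fun y _ => c y)).choose := hc d
    rw [hcd]
    exact spec d' hr' hd'D hC'
  intro d hd d' hd' hC hne
  rcases trichotomous_of WellOrderingRel d d' with h | h | h
  · exact key d' d h hd' hd (hCsymm _ _ hC)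
  · exact absurd h hne
  · exact fun he => key d d' h hd hd' hC he.symm

/-- Lemma 5.6: the uniformly separated finite partition lemma. -/
theorem stmt2 {G : Type*} [Group G] [TopologicalSpace G] [IsTopologicalGroup G]
    (t : G) (ht : t ≠ 1) (V : Set G) (hV : V ∈ nhds (1 : G)) (hsymm : V⁻¹ = V)
    (hdisj : (t • (V * V * V)) ∩ (V * V * V) = ∅)
    (hcov : ∃ F : Finset G,
      (V * V * V * ({t} : Set G) * (V * V * V) * ({t⁻¹} : Set G)) ∪
        (V * V * V * ({t⁻¹} : Set G) * (V * V * V) * ({t} : Set G)) ⊆ V * (F : Set G)) :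
    ∃ (n : ℕ) (P : Fin n → Set G), 1 ≤ n ∧
      (∀ i j : Fin n, i ≠ j → Disjoint (P i) (P j)) ∧
      (⋃ i, P i) = Set.univ ∧
      ∀ i : Fin n, (t • P i) ∩ (V * P i) = ∅ := by
  classical
  obtain ⟨F, hF⟩ := hcov
  have h1V : (1 : G) ∈ V := mem_of_mem_nhds hV
  have hVinv : ∀ x ∈ V, x⁻¹ ∈ V := by
    intro x hx
    rw [← hsymm]
    simpa using hx
  have hVVV : ∀ {a b c : G}, a ∈ V → b ∈ V → c ∈ V → a * b * c ∈ V * V * V :=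
    fun ha hb hc => Set.mul_mem_mul (Set.mul_mem_mul ha hb) hc
  have hd : ∀ x ∈ V * V * V, t * x ∈ V * V * V → False := by
    intro x hx htx
    have hmem : t * x ∈ (t • (V * V * V)) ∩ (V * V * V) := ⟨⟨x, hx, rfl⟩, htx⟩
    rw [hdisj] at hmem
    exact hmem
  -- a maximal V-separated subset D of G
  obtain ⟨D, hDmax⟩ := zorn_subset
      {D : Set G | ∀ d ∈ D, ∀ d' ∈ D, d ≠ d' → ¬ pred' V d d'} (by
    intro c hc hchain
    refine ⟨⋃₀ c, ?_, fun s hs => Set.subset_sUnion_of_mem hs⟩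
    rintro d ⟨s, hs, hds⟩ d' ⟨s', hs', hd's'⟩ hne
    rcases hchain.total hs hs' with h | h
    · exact hc hs' d (h hds) d' hd's' hne
    · exact hc hs d hds d' (h hd's') hne)
  have hD : ∀ d ∈ D, ∀ d' ∈ D, d ≠ d' → ¬ pred' V d d' := hDmax.1
  have hpred_symm : ∀ d g, pred' V d g → pred' V g d := by
    rintro d g ⟨v, hv, w, hw, rfl⟩
    exact ⟨w⁻¹, hVinv _ hw, v⁻¹, hVinv _ hv, by group⟩
  have hcover : ∀ g, ∃ d ∈ D, pred' V d g := by
    intro g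
    by_contra hcon
    push_neg at hcon
    have hgD : g ∉ D := fun h => hcon g h ⟨1, h1V, 1, h1V, by group⟩
    have hins : insert g D ∈ {D : Set G | ∀ d ∈ D, ∀ d' ∈ D, d ≠ d' → ¬ pred' V d d'} := by
      rintro d (rfl | hd1) d' (rfl | hd'1) hne
      · exact absurd rfl hne
      · exact fun hp => hcon d' hd'1 (hpred_symm _ _ hp)
      · exact hcon d hd1
      · exact hD d hd1 d' hd'1 hne
    have hsub := hDmax.2 hins (Set.subset_insert g D)
    exact hgD (hsub (Set.mem_insert g D))
  choose φ hφD hφp using hcover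
  -- anchor extraction from the covering hypothesis
  have anchor : ∀ d d', conf V t d d' →
      ∃ f ∈ F, ∃ s : Bool, ∃ v ∈ V, d' = v * ((f : G) * ((cond s t t⁻¹) * d)) := by
    rintro d d' (⟨p₁, hp₁, p₂, hp₂, q₁, hq₁, q₂, hq₂, q₃, hq₃, he⟩ |
        ⟨p₁, hp₁, p₂, hp₂, q₁, hq₁, q₂, hq₂, q₃, hq₃, he⟩)
    · have hmem : (q₃⁻¹ * q₂⁻¹ * q₁⁻¹ * t * (p₁ * p₂ * 1)) * t⁻¹ ∈ V * (F : Set G) := by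
        apply hF
        apply Set.mem_union_left
        exact Set.mul_mem_mul (Set.mul_mem_mul (Set.mul_mem_mul
          (hVVV (hVinv _ hq₃) (hVinv _ hq₂) (hVinv _ hq₁)) rfl)
          (hVVV hp₁ hp₂ h1V)) rfl
      rw [Set.mem_mul] at hmem
      obtain ⟨v, hv, f, hf, hvf⟩ := hmem
      refine ⟨f, hf, true, v, hv, ?_⟩
      have hd' : d' = q₃⁻¹ * q₂⁻¹ * q₁⁻¹ * (t * (p₁ * (p₂ * d))) := by rw [he]; group
      have hfE : f = v⁻¹ * ((q₃⁻¹ * q₂⁻¹ * q₁⁻¹ * t * (p₁ * p₂ * 1)) * t⁻¹) := by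
        rw [← hvf]; group
      rw [hd', Bool.cond_true, hfE]; group
    · have hmem : (p₂⁻¹ * p₁⁻¹ * 1 * t⁻¹ * (q₁ * q₂ * q₃)) * t ∈ V * (F : Set G) := by
        apply hF
        apply Set.mem_union_right
        exact Set.mul_mem_mul (Set.mul_mem_mul (Set.mul_mem_mul
          (hVVV (hVinv _ hp₂) (hVinv _ hp₁) h1V) rfl)
          (hVVV hq₁ hq₂ hq₃)) rfl
      rw [Set.mem_mul] at hmem
      obtain ⟨v, hv, f, hf, hvf⟩ := hmem
      refine ⟨f, hf, false, v, hv, ?_⟩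
      have hd' : d' = p₂⁻¹ * (p₁⁻¹ * (t⁻¹ * (q₁ * (q₂ * (q₃ * d))))) := by rw [← he]; group
      have hfE : f = v⁻¹ * ((p₂⁻¹ * p₁⁻¹ * 1 * t⁻¹ * (q₁ * q₂ * q₃)) * t) := by
        rw [← hvf]; group
      rw [hd', Bool.cond_false, hfE]; group
  set n : ℕ := 2 * F.card + 1 with hn
  have hn0 : 0 < n := Nat.succ_pos _
  -- degree bound
  have hbound : ∀ (g : G) (σ : Fin n → G), (∀ k, σ k ∈ D ∧ conf V t g (σ k)) →
      ¬ Function.Injective σ := by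
    intro g σ hσ hinj
    have h1 : ∀ k, ∃ p : {f // f ∈ F} × Bool, ∃ v ∈ V,
        σ k = v * ((p.1 : G) * ((cond p.2 t t⁻¹) * g)) := by
      intro k
      obtain ⟨f, hf, s, v, hv, he⟩ := anchor g (σ k) (hσ k).2
      exact ⟨(⟨f, hf⟩, s), v, hv, he⟩
    choose ψ w hwV hwe using h1
    have hψ : Function.Injective ψ := by
      intro k₁ k₂ he
      have e1 := hwe k₁
      have e2 := hwe k₂
      rw [← he] at e2
      have hpred : pred' V (σ k₁) (σ k₂) :=
        ⟨w k₂, hwV k₂, (w k₁)⁻¹, hVinv _ (hwV k₁), by rw [e2, e1]; group⟩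
      by_cases hss : σ k₁ = σ k₂
      · exact hinj hss
      · exact absurd hpred (hD (σ k₁) (hσ k₁).1 (σ k₂) (hσ k₂).1 hss)
    have hcard := Fintype.card_le_of_injective ψ hψ
    simp only [Fintype.card_fin, Fintype.card_prod, Fintype.card_coe, Fintype.card_bool] at hcard
    omega
  obtain ⟨c, hcprop⟩ := exists_coloring D (conf V t) (conf_symm V t) n hn0 hbound
  refine ⟨n, fun k => {g | c (φ g) = k}, le_refl 1 |>.trans (by omega), ?_, ?_, ?_⟩
  · intro i j hij
    rw [Set.disjoint_left]
    intro g hgi hgj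
    exact hij (hgi.symm.trans hgj)
  · rw [Set.eq_univ_iff_forall]
    intro g
    exact Set.mem_iUnion.mpr ⟨c (φ g), rfl⟩
  · intro k
    rw [Set.eq_empty_iff_forall_notMem]
    rintro x ⟨hx1, hx2⟩
    obtain ⟨g, hg, rfl⟩ := hx1
    rw [Set.mem_mul] at hx2
    obtain ⟨v, hvV, h, hh, hvh⟩ := hx2
    replace hvh : v * h = t * g := hvh
    obtain ⟨a, haV, b, hbV, heg⟩ := hφp g
    obtain ⟨a', ha'V, b', hb'V, heh⟩ := hφp h
    have hconf : confL V t (φ g) (φ h) :=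
      ⟨a, haV, b, hbV, v, hvV, a', ha'V, b', hb'V, by rw [← heg, ← heh]; exact hvh.symm⟩
    by_cases hdd : φ g = φ h
    · rw [← hdd] at hconf
      obtain ⟨p₁, hp₁, p₂, hp₂, q₁, hq₁, q₂, hq₂, q₃, hq₃, he⟩ := hconf
      have h3 : (t * (p₁ * p₂ * 1)) * φ g = (q₁ * q₂ * q₃) * φ g := by
        calc (t * (p₁ * p₂ * 1)) * φ g = t * (p₁ * (p₂ * φ g)) := by group
        _ = q₁ * (q₂ * (q₃ * φ g)) := he
        _ = (q₁ * q₂ * q₃) * φ g := by group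
      have h4 := mul_right_cancel h3
      exact hd (p₁ * p₂ * 1) (hVVV hp₁ hp₂ h1V) (by rw [h4]; exact hVVV hq₁ hq₂ hq₃)
    · exact hcprop (φ g) (hφD g) (φ h) (hφD h) (Or.inl hconf) hdd (hg.trans hh.symm)
end

section
/- Let G be a Hausdorff topological group with identity e and let t ∈ G with t ≠ e. Suppose there is a symmetric neighborhood V of e (V = V⁻¹) such that (t·V·V·V) ∩ (V·V·V) = ∅ and there is a finite set F ⊆ G with (V·V·V·t·V·V·V·t⁻¹) ∪ (V·V·V·t⁻¹·V·V·V·t) ⊆ V·F. Then for every continuous linear functional μ on the Banach space of bounded continuous complex-valued functions on G that lies in the weak-* closure of the set of evaluation functionals {f ↦ f(s) : s ∈ G}, there exists a bounded continuous function f : G → ℂ which is left-uniformly continuous (for every ε > 0 there is a neighborhood W of e with |f(w·x) − f(x)| < ε for all w ∈ W, x ∈ G) such that μ(x ↦ f(t·x)) ≠ μ(f). -/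
open Filter Set
open scoped Pointwise Uniformity

lemma veech_metrization {X : Type*} (U : ℕ → Set (X × X))
    (hrefl : ∀ n x, (x, x) ∈ U n)
    (hsy : ∀ n x y, (x, y) ∈ U n → (y, x) ∈ U n)
    (hcomp : ∀ n x y z, (x, y) ∈ U (n + 1) → (y, z) ∈ U (n + 1) → (x, z) ∈ U n) :
    ∃ d : X → X → ℝ, (∀ x, d x x = 0) ∧ (∀ x y, d x y = d y x) ∧
      (∀ x y z, d x z ≤ d x y + d y z) ∧ (∀ x y, 0 ≤ d x y) ∧
      (∀ ε : ℝ, 0 < ε → ∃ n, ∀ x y, (x, y) ∈ U n → d x y < ε) ∧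
      (∀ n, ∃ c : ℝ, 0 < c ∧ ∀ x y, d x y < c → (x, y) ∈ U n) := by
  have hmono : ∀ n, U (n + 1) ⊆ U n := by
    rintro n ⟨x, y⟩ hp
    exact hcomp n x x y (hrefl _ x) hp
  have hanti : Antitone U := antitone_nat_of_succ_le hmono
  letI us : UniformSpace X := UniformSpace.ofCore
    { uniformity := ⨅ n, 𝓟 (U n)
      refl := le_iInf fun n => by
        rw [le_principal_iff, mem_principal]
        rintro ⟨x, y⟩ hxy
        rw [SetRel.mem_id] at hxy
        subst hxy
        exact hrefl n x
      symm := by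
        refine le_iInf fun n => ?_
        refine le_trans (Filter.map_mono (iInf_le _ n)) ?_
        rw [Filter.map_principal, le_principal_iff, mem_principal]
        rintro ⟨x, y⟩ ⟨⟨a, b⟩, hab, h⟩
        have : (b, a) = (x, y) := h
        obtain ⟨rfl, rfl⟩ := Prod.mk.injEq .. ▸ this
        exact hsy n a b hab
      comp := by
        refine le_iInf fun n => ?_
        rw [le_principal_iff]
        refine mem_of_superset (mem_lift' (mem_iInf_of_mem (n + 1) (mem_principal_self _))) ?_
        rintro ⟨x, z⟩ ⟨y, h1, h2⟩
        exact hcomp n x y z h1 h2 }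
  have huni : 𝓤 X = ⨅ n, 𝓟 (U n) := rfl
  have hbasis : (𝓤 X).HasBasis (fun _ : ℕ => True) U := by
    rw [huni]
    exact hasBasis_iInf_principal hanti.directed_ge
  haveI : (𝓤 X).IsCountablyGenerated := hbasis.isCountablyGenerated
  obtain ⟨I, hI⟩ := UniformSpace.metrizable_uniformity X
  refine ⟨I.dist, I.dist_self, I.dist_comm, I.dist_triangle, ?_, ?_, ?_⟩
  · intro x y
    letI := I
    exact dist_nonneg
  · intro ε hε
    have hmem : {p : X × X | I.dist p.1 p.2 < ε} ∈ 𝓤 X := by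
      rw [← hI]
      exact @Metric.dist_mem_uniformity X I ε hε
    obtain ⟨n, -, hn⟩ := hbasis.mem_iff.1 hmem
    exact ⟨n, fun x y hxy => hn hxy⟩
  · intro n
    have hmem : U n ∈ 𝓤[I.toUniformSpace] := by
      rw [hI, huni]
      exact mem_iInf_of_mem n (mem_principal_self _)
    obtain ⟨c, hc, h⟩ := (@Metric.mem_uniformity_dist X I _).1 hmem
    exact ⟨c, hc, fun x y hxy => h hxy⟩

/-- A left-uniformly continuous bump function: `1` on `V*V`, supported in `V*V*V`. -/
lemma veech_bump {G : Type*} [Group G] [TopologicalSpace G] [IsTopologicalGroup G]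
    (V : Set G) (hV : V ∈ nhds 1) (hsymm : V⁻¹ = V) :
    ∃ φ : G → ℝ, (∀ y, 0 ≤ φ y) ∧ (∀ y, φ y ≤ 1) ∧ (∀ y ∈ V * V, φ y = 1) ∧
      (∀ y, φ y ≠ 0 → y ∈ V * V * V) ∧
      (∀ ε : ℝ, 0 < ε → ∃ N ∈ nhds (1 : G), ∀ w ∈ N, ∀ y, |φ (w * y) - φ y| ≤ ε) := by
  classical
  have hV1 : (1 : G) ∈ V := mem_of_mem_nhds hV
  -- a chain of symmetric neighborhoods
  have step : ∀ S : {S : Set G // S ∈ nhds 1 ∧ S⁻¹ = S},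
      ∃ T : Set G, (T ∈ nhds 1 ∧ T⁻¹ = T) ∧ T * T ⊆ S.1 := by
    rintro ⟨S, hS, -⟩
    obtain ⟨T₀, hT₀, hmul⟩ := exists_nhds_one_split hS
    refine ⟨T₀ ∩ T₀⁻¹, ⟨Filter.inter_mem hT₀ (inv_mem_nhds_one G hT₀), ?_⟩, ?_⟩
    · rw [Set.inter_inv, inv_inv, Set.inter_comm]
    · rintro z hz
      rw [Set.mem_mul] at hz
      obtain ⟨a, ha, b, hb, rfl⟩ := hz
      exact hmul a ha.1 b hb.1
  let Wc : ℕ → {S : Set G // S ∈ nhds 1 ∧ S⁻¹ = S} := fun n =>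
    Nat.rec ⟨V, hV, hsymm⟩ (fun _ S => ⟨(step S).choose, (step S).choose_spec.1⟩) n
  let W : ℕ → Set G := fun n => (Wc n).1
  have hW0 : W 0 = V := rfl
  have hWmem : ∀ n, W n ∈ nhds 1 := fun n => (Wc n).2.1
  have hWsymm : ∀ n, (W n)⁻¹ = W n := fun n => (Wc n).2.2
  have hWmul : ∀ n, W (n + 1) * W (n + 1) ⊆ W n := fun n => (step (Wc n)).choose_spec.2
  have hW1 : ∀ n, (1 : G) ∈ W n := fun n => mem_of_mem_nhds (hWmem n)
  -- the entourages
  let U : ℕ → Set (G × G) := fun n => {p : G × G | p.2 * p.1⁻¹ ∈ W n}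
  obtain ⟨d, hd0, hdcomm, hdtri, hdnn, hda, hdb⟩ := veech_metrization U
    (fun n x => by simp [U, hW1 n])
    (fun n x y h => by
      have h' : (x * y⁻¹)⁻¹ ∈ W n := by
        rw [mul_inv_rev, inv_inv]; exact h
      show x * y⁻¹ ∈ W n
      rw [← hWsymm n]
      exact Set.mem_inv.2 h')
    (fun n x y z h1 h2 => by
      have : (z * y⁻¹) * (y * x⁻¹) ∈ W (n + 1) * W (n + 1) := Set.mul_mem_mul h2 h1
      have he : (z * y⁻¹) * (y * x⁻¹) = z * x⁻¹ := by group
      exact hWmul n (he ▸ this))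
  obtain ⟨c, hc, hcV⟩ := hdb 0
  -- distance to the set V*V
  have hVV1 : (1 : G) ∈ V * V := by
    have := Set.mul_mem_mul hV1 hV1
    rwa [one_mul] at this
  have hne : ∀ y : G, ((fun a => d a y) '' (V * V)).Nonempty := fun y => ⟨d 1 y, 1, hVV1, rfl⟩
  have hbdd : ∀ y : G, BddBelow ((fun a => d a y) '' (V * V)) := fun y =>
    ⟨0, by rintro r ⟨a, -, rfl⟩; exact hdnn a y⟩
  let δ : G → ℝ := fun y => sInf ((fun a => d a y) '' (V * V))
  have hδnn : ∀ y, 0 ≤ δ y := fun y => le_csInf (hne y) (by rintro r ⟨a, -, rfl⟩; exact hdnn a y)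
  have hδlip : ∀ y y', δ y ≤ δ y' + d y' y := by
    intro y y'
    rw [← sub_le_iff_le_add]
    refine le_csInf (hne y') ?_
    rintro r ⟨a, ha, rfl⟩
    rw [sub_le_iff_le_add]
    calc δ y ≤ d a y := csInf_le (hbdd y) ⟨a, ha, rfl⟩
      _ ≤ d a y' + d y' y := hdtri a y' y
  have hδVV : ∀ y ∈ V * V, δ y = 0 := fun y hy =>
    le_antisymm (by simpa [hd0 y] using csInf_le (hbdd y) ⟨y, hy, rfl⟩) (hδnn y)
  let φ : G → ℝ := fun y => max 0 (1 - δ y / c)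
  refine ⟨φ, fun y => le_max_left _ _, ?_, ?_, ?_, ?_⟩
  · intro y
    refine max_le (by norm_num) ?_
    have := hδnn y
    have : 0 ≤ δ y / c := div_nonneg this hc.le
    linarith
  · intro y hy
    simp [φ, hδVV y hy]
  · intro y hy
    have hlt : δ y < c := by
      by_contra hge
      push_neg at hge
      have : 1 - δ y / c ≤ 0 := by
        rw [sub_nonpos, le_div_iff₀ hc]
        linarith
      exact hy (by simp [φ, max_eq_left this])
    obtain ⟨r, ⟨a, ha, rfl⟩, hr⟩ := (csInf_lt_iff (hbdd y) (hne y)).1 hlt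
    have hmem : y * a⁻¹ ∈ V := hcV a y hr
    have : (y * a⁻¹) * a ∈ V * (V * V) := Set.mul_mem_mul hmem ha
    rw [inv_mul_cancel_right] at this
    rwa [mul_assoc]
  · intro ε hε
    obtain ⟨n, hn⟩ := hda (ε * c) (by positivity)
    refine ⟨W n, hWmem n, fun w hw y => ?_⟩
    have hdy : d y (w * y) < ε * c := by
      refine hn y (w * y) ?_
      show (w * y) * y⁻¹ ∈ W n
      rwa [mul_inv_cancel_right]
    have h1 : |φ (w * y) - φ y| ≤ |(1 - δ (w * y) / c) - (1 - δ y / c)| := by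
      have e1 : φ (w * y) = max (1 - δ (w * y) / c) 0 := max_comm _ _
      have e2 : φ y = max (1 - δ y / c) 0 := max_comm _ _
      rw [e1, e2]
      exact abs_max_sub_max_le_abs _ _ _
    have h2 : |(1 - δ (w * y) / c) - (1 - δ y / c)| = |δ y - δ (w * y)| / c := by
      have : (1 - δ (w * y) / c) - (1 - δ y / c) = (δ y - δ (w * y)) / c := by ring
      rw [this, abs_div, abs_of_pos hc]
    have h3 : |δ y - δ (w * y)| ≤ d y (w * y) := by
      rw [abs_sub_le_iff]
      constructor
      · have := hδlip y (w * y)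
        rw [hdcomm (w * y) y] at this
        linarith
      · have := hδlip (w * y) y
        linarith
    calc |φ (w * y) - φ y| ≤ |δ y - δ (w * y)| / c := h1.trans_eq h2
      _ ≤ d y (w * y) / c := by gcongr
      _ ≤ ε := by rw [div_le_iff₀ hc]; linarith

/-- Greedy coloring of a graph with neighborhoods covered by a small finite index. -/
lemma veech_coloring {α : Type*} {ι : Type*} [Fintype ι] (m : ℕ)
    (hm : Fintype.card ι < m) (Rel : α → α → Prop) (hsym : ∀ a b, Rel a b → Rel b a)
    (hirr : ∀ a, ¬Rel a a) (pick : α → ι → α)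
    (hpick : ∀ a b, Rel a b → ∃ i, pick a i = b) :
    ∃ col : α → Fin m, ∀ a b, Rel a b → col a ≠ col b := by
  classical
  have hm0 : 0 < m := lt_of_le_of_lt (Nat.zero_le _) hm
  have exfree : ∀ (a : α) (ih : ∀ b, WellOrderingRel b a → Fin m),
      ∃ c : Fin m, ∀ b (h : WellOrderingRel b a), Rel a b → ih b h ≠ c := by
    intro a ih
    by_contra hcon
    push_neg at hcon
    have hsurj : Function.Surjective
        (fun i => if h : WellOrderingRel (pick a i) a then ih _ h else ⟨0, hm0⟩ :
          ι → Fin m) := by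
      intro c
      obtain ⟨b, h, hR, hc⟩ := hcon c
      obtain ⟨i, hi⟩ := hpick a b hR
      refine ⟨i, ?_⟩
      simp only
      rw [hi, dif_pos h]
      exact hc
    have := Fintype.card_le_of_surjective _ hsurj
    rw [Fintype.card_fin] at this
    omega
  let col : α → Fin m := IsWellFounded.fix WellOrderingRel fun a ih => (exfree a ih).choose
  have hcol : ∀ a, col a = (exfree a fun b _ => col b).choose :=
    IsWellFounded.fix_eq WellOrderingRel _
  have spec : ∀ a b (h : WellOrderingRel b a), Rel a b → col b ≠ col a := by
    intro a b h hR
    have := (exfree a fun b _ => col b).choose_spec b h hR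
    rwa [← hcol a] at this
  refine ⟨col, fun a b hR => ?_⟩
  rcases trichotomous_of WellOrderingRel a b with h | h | h
  · exact spec b a h (hsym a b hR)
  · exact absurd (h ▸ hR) (hirr b)
  · exact (spec a b h hR).symm

/-- A maximal `V*V`-separated set. -/
lemma veech_net {G : Type*} [Group G] (V : Set G) (hsymm : (V * V)⁻¹ = V * V)
    (h1 : (1 : G) ∈ V * V) :
    ∃ D : Set G, (∀ d ∈ D, ∀ d' ∈ D, d ≠ d' → d * d'⁻¹ ∉ V * V) ∧
      (∀ x : G, ∃ d ∈ D, x * d⁻¹ ∈ V * V) := by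
  classical
  have hZ : ∀ c ⊆ {D : Set G | ∀ d ∈ D, ∀ d' ∈ D, d ≠ d' → d * d'⁻¹ ∉ V * V},
      IsChain (· ⊆ ·) c → ∃ ub ∈ {D : Set G | ∀ d ∈ D, ∀ d' ∈ D, d ≠ d' → d * d'⁻¹ ∉ V * V},
        ∀ s ∈ c, s ⊆ ub := by
    intro c hc hchain
    refine ⟨⋃₀ c, ?_, fun s hs => Set.subset_sUnion_of_mem hs⟩
    rintro d ⟨s, hs, hds⟩ d' ⟨s', hs', hd's'⟩ hne
    rcases hchain.total hs hs' with h | h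
    · exact hc hs' d (h hds) d' hd's' hne
    · exact hc hs d hds d' (h hd's') hne
  obtain ⟨D, hD⟩ := zorn_subset
    {D : Set G | ∀ d ∈ D, ∀ d' ∈ D, d ≠ d' → d * d'⁻¹ ∉ V * V} hZ
  · refine ⟨D, hD.prop, fun x => ?_⟩
    by_cases hx : x ∈ D
    · exact ⟨x, hx, by simpa using h1⟩
    by_contra hcon
    push_neg at hcon
    have hmem : insert x D ∈ {D : Set G | ∀ d ∈ D, ∀ d' ∈ D, d ≠ d' → d * d'⁻¹ ∉ V * V} := by
      have hsep : ∀ a b : G, a * b⁻¹ ∈ V * V → b * a⁻¹ ∈ V * V := by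
        intro a b hc
        have h' : b * a⁻¹ ∈ (V * V)⁻¹ :=
          Set.mem_inv.2 (by simpa [mul_inv_rev] using hc)
        rwa [hsymm] at h'
      intro d hd0 d' hd0' hne hc
      rcases Set.mem_insert_iff.1 hd0 with h1' | hd
      · rcases Set.mem_insert_iff.1 hd0' with h2' | hd'
        · exact hne (h1'.trans h2'.symm)
        · exact hcon d' hd' (h1' ▸ hc)
      · rcases Set.mem_insert_iff.1 hd0' with h2' | hd'
        · exact hcon d hd (h2' ▸ hsep d d' hc)
        · exact hD.prop d hd d' hd' hne hc
    exact hx (hD.2 hmem (Set.subset_insert x D) (Set.mem_insert x D))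

/-- difference of sups -/
lemma veech_isup_abs_le {ι : Sort*} (u v : ι → ℝ) (hu1 : ∀ i, u i ≤ 1) (hv1 : ∀ i, v i ≤ 1)
    {ε : ℝ} (hε : 0 ≤ ε) (h : ∀ i, |v i - u i| ≤ ε) :
    |(⨆ i, v i) - ⨆ i, u i| ≤ ε := by
  rcases isEmpty_or_nonempty ι with hemp | hne
  · simpa [Real.iSup_of_isEmpty] using hε
  · have hbu : BddAbove (Set.range u) := ⟨1, by rintro _ ⟨i, rfl⟩; exact hu1 i⟩
    have hbv : BddAbove (Set.range v) := ⟨1, by rintro _ ⟨i, rfl⟩; exact hv1 i⟩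
    rw [abs_sub_le_iff]
    constructor
    · rw [sub_le_iff_le_add]
      refine ciSup_le fun i => ?_
      have h1 := (abs_sub_le_iff.1 (h i)).1
      have h2 := le_ciSup hbu i
      linarith
    · rw [sub_le_iff_le_add]
      refine ciSup_le fun i => ?_
      have h1 := (abs_sub_le_iff.1 (h i)).2
      have h2 := le_ciSup hbv i
      linarith

/-- Theorem 5.7 (first part, generalized Veech theorem): under the quasi-total boundedness
condition at `t ≠ 1`, the element `t` acts without fixed points on `G^LUC`, i.e. for every
weak-* limit `μ` of evaluation functionals there is a left-uniformly continuous bounded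
continuous function `f` with `(t·μ)(f) ≠ μ(f)`. -/
theorem stmt3 {G : Type*} [Group G] [TopologicalSpace G] [IsTopologicalGroup G] [T2Space G]
    (t : G) (ht : t ≠ 1) (V : Set G) (hV : V ∈ nhds (1 : G)) (hsymm : V⁻¹ = V)
    (hdisj : (t • (V * V * V)) ∩ (V * V * V) = ∅)
    (hcov : ∃ F : Finset G,
      (V * V * V * ({t} : Set G) * (V * V * V) * ({t⁻¹} : Set G)) ∪
        (V * V * V * ({t⁻¹} : Set G) * (V * V * V) * ({t} : Set G)) ⊆ V * (F : Set G))
    (μ : WeakDual ℂ (BoundedContinuousFunction G ℂ))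
    (hμ : μ ∈ closure {ν : WeakDual ℂ (BoundedContinuousFunction G ℂ) |
      ∃ s : G, ∀ h : BoundedContinuousFunction G ℂ, ν h = h s}) :
    ∃ f g : BoundedContinuousFunction G ℂ,
      (∀ x : G, g x = f (t * x)) ∧
      (∀ ε : ℝ, 0 < ε → ∃ W ∈ nhds (1 : G), ∀ w ∈ W, ∀ x : G, ‖f (w * x) - f x‖ < ε) ∧
      μ g ≠ μ f := by
  classical
  obtain ⟨F, hcovF⟩ := hcov
  have hV1 : (1 : G) ∈ V := mem_of_mem_nhds hV
  have hVV1 : (1 : G) ∈ V * V := by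
    have := Set.mul_mem_mul hV1 hV1; rwa [one_mul] at this
  have hVVsymm : (V * V)⁻¹ = V * V := by
    rw [mul_inv_rev, hsymm]
  have hA3symm : (V * V * V)⁻¹ = V * V * V := by
    rw [mul_inv_rev, hVVsymm, hsymm, mul_assoc]
  have hVVsub : V * V ⊆ V * V * V := fun s hs => by
    have := Set.mul_mem_mul hs hV1; rwa [mul_one] at this
  -- S1 : elements of the covering sets cannot multiply through `t` to `1`
  have S1 : ∀ a b : G, a ∈ V * V * V → b ∈ V * V * V → a * t * b ≠ 1 := by
    intro a b ha hb heq
    have hb' : t * b = a⁻¹ := by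
      have : a⁻¹ * (a * t * b) = a⁻¹ * 1 := by rw [heq]
      rw [mul_one] at this
      rw [← this]; group
    have hmem1 : t * b ∈ t • (V * V * V) := ⟨b, hb, rfl⟩
    have hmem2 : t * b ∈ V * V * V := by
      rw [hb']
      rw [← hA3symm]
      exact Set.inv_mem_inv.2 ha
    have : t * b ∈ (t • (V * V * V)) ∩ (V * V * V) := ⟨hmem1, hmem2⟩
    rw [hdisj] at this
    exact this
  -- membership criterion for A*{τ}*A
  have memAtA : ∀ τ z : G, z ∈ V * V * V * ({τ} : Set G) * (V * V * V) ↔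
      ∃ a ∈ V * V * V, ∃ b ∈ V * V * V, z = a * τ * b := by
    intro τ z
    constructor
    · rintro ⟨u, hu, b, hb, rfl⟩
      obtain ⟨a, ha, τ', hτ', rfl⟩ := hu
      rw [Set.mem_singleton_iff] at hτ'
      subst hτ'
      exact ⟨a, ha, b, hb, rfl⟩
    · rintro ⟨a, ha, b, hb, rfl⟩
      exact ⟨a * τ, ⟨a, ha, τ, rfl, rfl⟩, b, hb, rfl⟩
  -- covering consequences
  have S2a : ∀ z : G, z ∈ V * V * V * ({t} : Set G) * (V * V * V) →
      ∃ f ∈ F, ∃ v ∈ V, z = v * f * t := by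
    intro z hz
    have hz' : z * t⁻¹ ∈ V * (F : Set G) := by
      apply hcovF
      left
      exact ⟨z, hz, t⁻¹, rfl, rfl⟩
    obtain ⟨v, hv, f, hf, hvf⟩ := hz'
    refine ⟨f, hf, v, hv, ?_⟩
    have hvf' : v * f = z * t⁻¹ := hvf
    rw [hvf', inv_mul_cancel_right]
  have S2b : ∀ z : G, z ∈ V * V * V * ({t⁻¹} : Set G) * (V * V * V) →
      ∃ f ∈ F, ∃ v ∈ V, z = v * f * t⁻¹ := by
    intro z hz
    have hz' : z * t ∈ V * (F : Set G) := by
      apply hcovF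
      right
      exact ⟨z, hz, t, rfl, rfl⟩
    obtain ⟨v, hv, f, hf, hvf⟩ := hz'
    refine ⟨f, hf, v, hv, ?_⟩
    have hvf' : v * f = z * t := hvf
    rw [hvf', mul_inv_cancel_right]
  -- the bump function
  obtain ⟨φ, hφ0, hφ1, hφVV, hφsupp, hφm⟩ := veech_bump V hV hsymm
  -- the net
  obtain ⟨D, hDsep, hDcov⟩ := veech_net V hVVsymm hVV1
  -- the graph
  set Rel : G → G → Prop := fun d d' => d ∈ D ∧ d' ∈ D ∧ d ≠ d' ∧
      (d' * d⁻¹ ∈ V * V * V * ({t} : Set G) * (V * V * V) ∨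
       d' * d⁻¹ ∈ V * V * V * ({t⁻¹} : Set G) * (V * V * V)) with hRel
  have hRelsym : ∀ d d', Rel d d' → Rel d' d := by
    rintro d d' ⟨hd, hd', hne, hor⟩
    refine ⟨hd', hd, hne.symm, ?_⟩
    rcases hor with h | h
    · right
      obtain ⟨a, ha, b, hb, hz⟩ := (memAtA t _).1 h
      refine (memAtA t⁻¹ _).2 ⟨b⁻¹, by rw [← hA3symm]; exact Set.inv_mem_inv.2 hb,
        a⁻¹, by rw [← hA3symm]; exact Set.inv_mem_inv.2 ha, ?_⟩
      have : d * d'⁻¹ = (d' * d⁻¹)⁻¹ := by group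
      rw [this, hz]; group
    · left
      obtain ⟨a, ha, b, hb, hz⟩ := (memAtA t⁻¹ _).1 h
      refine (memAtA t _).2 ⟨b⁻¹, by rw [← hA3symm]; exact Set.inv_mem_inv.2 hb,
        a⁻¹, by rw [← hA3symm]; exact Set.inv_mem_inv.2 ha, ?_⟩
      have : d * d'⁻¹ = (d' * d⁻¹)⁻¹ := by group
      rw [this, hz]; group
  have hRelirr : ∀ d, ¬Rel d d := by rintro d ⟨-, -, hne, -⟩; exact hne rfl
  -- pick functions
  set m : ℕ := 2 * F.card + 1 with hm
  set pick : G → (↥F × Bool) → G := fun d p =>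
    if h : ∃ d', d' ∈ D ∧ ∃ v ∈ V, d' = v * (p.1 : G) * (cond p.2 t t⁻¹) * d
    then h.choose else 1 with hpickdef
  have hpick : ∀ d d', Rel d d' → ∃ p : ↥F × Bool, pick d p = d' := by
    rintro d d' ⟨hd, hd', hne, hor⟩
    have main : ∀ (f : G) (hf : f ∈ F) (s : Bool), (∃ v ∈ V, d' = v * f * (cond s t t⁻¹) * d) →
        pick d (⟨f, hf⟩, s) = d' := by
      rintro f hf s hex
      have hhyp : ∃ e, e ∈ D ∧ ∃ v ∈ V, e = v * f * (cond s t t⁻¹) * d := ⟨d', hd', hex⟩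
      have : pick d (⟨f, hf⟩, s) = hhyp.choose := dif_pos hhyp
      obtain ⟨he, v₁, hv₁, he'⟩ := hhyp.choose_spec
      obtain ⟨v, hv, hd'eq⟩ := hex
      rw [this]
      by_contra hcon
      have hdiff : hhyp.choose * d'⁻¹ ∈ V * V := by
        have : hhyp.choose * d'⁻¹ = v₁ * v⁻¹ := by rw [he', hd'eq]; group
        rw [this]
        exact Set.mul_mem_mul hv₁ (by rw [← hsymm]; exact Set.inv_mem_inv.2 hv)
      exact hDsep _ he _ hd' hcon hdiff
    rcases hor with h | h
    · obtain ⟨f, hf, v, hv, hz⟩ := S2a _ h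
      refine ⟨(⟨f, hf⟩, true), main f hf true ⟨v, hv, ?_⟩⟩
      have : d' * d⁻¹ * d = v * f * t * d := by rw [hz]
      rwa [inv_mul_cancel_right] at this
    · obtain ⟨f, hf, v, hv, hz⟩ := S2b _ h
      refine ⟨(⟨f, hf⟩, false), main f hf false ⟨v, hv, ?_⟩⟩
      have : d' * d⁻¹ * d = v * f * t⁻¹ * d := by rw [hz]
      rwa [inv_mul_cancel_right] at this
  have hcard : Fintype.card (↥F × Bool) < m := by
    rw [Fintype.card_prod, Fintype.card_coe, Fintype.card_bool, hm]
    omega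
  obtain ⟨col, hcol⟩ := veech_coloring m hcard Rel hRelsym hRelirr pick hpick
  -- the functions
  set fval : Fin m → G → ℝ := fun k x =>
    ⨆ i : {d : G // d ∈ D ∧ col d = k}, φ (x * (i : G)⁻¹) with hfval
  have hbddR : ∀ (k : Fin m) (x : G),
      BddAbove (Set.range fun i : {d : G // d ∈ D ∧ col d = k} => φ (x * (i : G)⁻¹)) :=
    fun k x => ⟨1, by rintro _ ⟨i, rfl⟩; exact hφ1 _⟩
  have hf0 : ∀ k x, 0 ≤ fval k x := fun k x => Real.iSup_nonneg fun i => hφ0 _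
  have hf1 : ∀ k x, fval k x ≤ 1 := by
    intro k x
    rcases isEmpty_or_nonempty {d : G // d ∈ D ∧ col d = k} with h | h
    · rw [hfval]; simp [Real.iSup_of_isEmpty]
    · exact ciSup_le fun i => hφ1 _
  -- key pointwise property
  have key : ∀ x : G, ∃ k : Fin m, fval k x = 1 ∧ fval k (t * x) = 0 := by
    intro x
    obtain ⟨d, hd, hxd⟩ := hDcov x
    refine ⟨col d, ?_, ?_⟩
    · refine le_antisymm (hf1 _ _) ?_
      have := le_ciSup (hbddR (col d) x) ⟨d, hd, rfl⟩
      simpa [hφVV _ hxd] using this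
    · have hzero : ∀ i : {e : G // e ∈ D ∧ col e = col d}, φ (t * x * (i : G)⁻¹) = 0 := by
        rintro ⟨d', hd', hcd'⟩
        by_contra hne0
        have hsupp := hφsupp _ hne0
        have ha : d' * x⁻¹ * t⁻¹ ∈ V * V * V := by
          have : d' * x⁻¹ * t⁻¹ = (t * x * d'⁻¹)⁻¹ := by group
          rw [this, ← hA3symm]
          exact Set.inv_mem_inv.2 hsupp
        have hmem : d' * d⁻¹ ∈ V * V * V * ({t} : Set G) * (V * V * V) := by
          refine (memAtA t _).2 ⟨d' * x⁻¹ * t⁻¹, ha, x * d⁻¹, hVVsub hxd, ?_⟩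
          group
        by_cases hdd : d' = d
        · subst hdd
          have h1 : (1 : G) ∈ V * V * V * ({t} : Set G) * (V * V * V) := by
            rwa [mul_inv_cancel] at hmem
          obtain ⟨a, haa, b, hbb, h1'⟩ := (memAtA t _).1 h1
          exact S1 a b haa hbb h1'.symm
        · exact hcol d d' ⟨hd, hd', fun h => hdd h.symm, Or.inl hmem⟩ hcd'.symm
      refine le_antisymm ?_ (hf0 _ _)
      rcases isEmpty_or_nonempty {e : G // e ∈ D ∧ col e = col d} with h | h
      · rw [hfval]; simp [Real.iSup_of_isEmpty]
      · exact ciSup_le fun i => (hzero i).le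
  -- uniform continuity of fval
  have hLUC : ∀ (k : Fin m) (ε : ℝ), 0 < ε → ∃ N ∈ nhds (1 : G), ∀ w ∈ N, ∀ x,
      |fval k (w * x) - fval k x| ≤ ε := by
    intro k ε hε
    obtain ⟨N, hN, hNm⟩ := hφm ε hε
    refine ⟨N, hN, fun w hw x => ?_⟩
    refine veech_isup_abs_le _ _ (fun i => hφ1 _) (fun i => hφ1 _) hε.le fun i => ?_
    have : w * x * (i : G)⁻¹ = w * (x * (i : G)⁻¹) := by group
    rw [this]
    exact hNm w hw _
  -- continuity of fval
  have hcontR : ∀ k : Fin m, Continuous (fval k) := by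
    intro k
    rw [continuous_iff_continuousAt]
    intro x
    rw [ContinuousAt, Metric.tendsto_nhds]
    intro ε hε
    obtain ⟨N, hN, hNm⟩ := hLUC k (ε / 2) (by linarith)
    have hmem : (fun y : G => y * x⁻¹) ⁻¹' N ∈ nhds x := by
      refine (continuous_mul_right x⁻¹).continuousAt.preimage_mem_nhds ?_
      simpa using hN
    filter_upwards [hmem] with y hy
    have := hNm _ hy x
    rw [inv_mul_cancel_right] at this
    rw [Real.dist_eq]
    linarith
  -- package as bounded continuous functions
  set fB : Fin m → BoundedContinuousFunction G ℂ := fun k =>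
    BoundedContinuousFunction.ofNormedAddCommGroup (fun x => (fval k x : ℂ))
      (Complex.continuous_ofReal.comp (hcontR k)) 1
      (fun x => by
        rw [Complex.norm_real, Real.norm_eq_abs, abs_le]
        exact ⟨by linarith [hf0 k x], hf1 k x⟩) with hfB
  set gB : Fin m → BoundedContinuousFunction G ℂ := fun k =>
    BoundedContinuousFunction.ofNormedAddCommGroup (fun x => (fval k (t * x) : ℂ))
      ((Complex.continuous_ofReal.comp (hcontR k)).comp (continuous_mul_left t)) 1
      (fun x => by
        rw [Complex.norm_real, Real.norm_eq_abs, abs_le]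
        exact ⟨by linarith [hf0 k (t * x)], hf1 k (t * x)⟩) with hgB
  have hfBapp : ∀ k x, fB k x = (fval k x : ℂ) := fun k x => rfl
  have hgBapp : ∀ k x, gB k x = (fval k (t * x) : ℂ) := fun k x => rfl
  -- the weak-* argument
  set Φ : WeakDual ℂ (BoundedContinuousFunction G ℂ) → (Fin m → ℂ) :=
    fun ν k => ν (gB k) - ν (fB k) with hΦ
  have hΦcont : Continuous Φ :=
    continuous_pi fun k => (WeakDual.eval_continuous (gB k)).sub (WeakDual.eval_continuous (fB k))
  set C : Set (Fin m → ℂ) := {z | ∃ k, 1 ≤ ‖z k‖} with hC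
  have hCclosed : IsClosed C := by
    have : C = ⋃ k : Fin m, {z : Fin m → ℂ | 1 ≤ ‖z k‖} := by
      ext z; simp [hC]
    rw [this]
    exact isClosed_iUnion_of_finite fun k =>
      isClosed_le continuous_const ((continuous_apply k).norm)
  have hSsub : Φ '' {ν : WeakDual ℂ (BoundedContinuousFunction G ℂ) |
      ∃ s : G, ∀ h : BoundedContinuousFunction G ℂ, ν h = h s} ⊆ C := by
    rintro _ ⟨ν, ⟨s, hνs⟩, rfl⟩
    obtain ⟨k, hk1, hk0⟩ := key s
    refine ⟨k, ?_⟩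
    rw [hΦ]
    simp only
    rw [hνs (gB k), hνs (fB k), hgBapp, hfBapp, hk1, hk0]
    norm_num
  have hμC : Φ μ ∈ C := by
    have h1 : Φ μ ∈ Φ '' closure {ν : WeakDual ℂ (BoundedContinuousFunction G ℂ) |
        ∃ s : G, ∀ h : BoundedContinuousFunction G ℂ, ν h = h s} := ⟨μ, hμ, rfl⟩
    have h2 := image_closure_subset_closure_image hΦcont (s := {ν : WeakDual ℂ
        (BoundedContinuousFunction G ℂ) |
        ∃ s : G, ∀ h : BoundedContinuousFunction G ℂ, ν h = h s})
    exact closure_minimal hSsub hCclosed (h2 h1)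
  obtain ⟨k, hk⟩ := hμC
  refine ⟨fB k, gB k, fun x => rfl, ?_, ?_⟩
  · intro ε hε
    obtain ⟨N, hN, hNm⟩ := hLUC k (ε / 2) (by linarith)
    refine ⟨N, hN, fun w hw x => ?_⟩
    have := hNm w hw x
    rw [hfBapp, hfBapp, ← Complex.ofReal_sub, Complex.norm_real, Real.norm_eq_abs]
    linarith
  · intro heq
    have : Φ μ k = 0 := by rw [hΦ]; simp only; rw [heq]; ring
    rw [this, norm_zero] at hk
    linarith
end

section
/- Let G be a Hausdorff topological group with identity e that is locally quasi-totally bounded: for every t ∈ G with t ≠ e there exists a symmetric neighborhood V of e (V = V⁻¹) such that (t·V·V·V) ∩ (V·V·V) = ∅ and there is a finite set F ⊆ G with (V·V·V·t·V·V·V·t⁻¹) ∪ (V·V·V·t⁻¹·V·V·V·t) ⊆ V·F. Then for every t ∈ G with t ≠ e and every continuous linear functional μ on the Banach space of bounded continuous complex-valued functions on G lying in the weak-* closure of the set of evaluation functionals {f ↦ f(s) : s ∈ G}, there exists a bounded continuous function f : G → ℂ with μ(x ↦ f(t·x)) ≠ μ(f); that is, G acts freely on its LUC-compactification. -/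
open scoped Pointwise
open scoped Uniformity
open scoped SetRel
open Set Filter Topology

section Aux


lemma bump_lemma {H : Type*} [Group H] (P : ℕ → Set H)
    (h1 : ∀ n, (1 : H) ∈ P n) (hsym : ∀ n, (P n)⁻¹ = P n)
    (hcomp : ∀ n, P (n+1) * P (n+1) ⊆ P n) :
    ∃ q : H → ℝ, q 1 = 1 ∧ (∀ x, 0 ≤ q x) ∧ (∀ x, q x ≤ 1) ∧
      (∀ x, q x ≠ 0 → x ∈ P 0) ∧
      ∀ ε : ℝ, 0 < ε → ∃ n, ∀ x y : H, x * y⁻¹ ∈ P n → |q x - q y| ≤ ε := by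
  classical
  -- the entourages
  set E : ℕ → Set (H × H) := fun n => {p : H × H | p.1 * p.2⁻¹ ∈ P n} with hE
  have hPanti : ∀ n, P (n+1) ⊆ P n := by
    intro n x hx
    have : x * 1 ∈ P n := hcomp n (Set.mul_mem_mul hx (h1 (n+1)))
    simpa using this
  have hEanti : Antitone E := by
    apply antitone_nat_of_succ_le
    intro n p hp
    exact hPanti n hp
  have hdir : Directed (· ≥ ·) E := hEanti.directed_ge
  set 𝔘 : Filter (H × H) := ⨅ n, 𝓟 (E n) with h𝔘
  have hbasis : 𝔘.HasBasis (fun _ => True) E := Filter.hasBasis_iInf_principal hdir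
  have hmemE : ∀ n, E n ∈ 𝔘 := fun n => hbasis.mem_of_mem trivial
  have hrefl : ∀ r ∈ 𝔘, ∀ (x : H), (x, x) ∈ r := by
    intro r hr x
    rcases (hbasis.mem_iff.mp hr) with ⟨n, -, hsub⟩
    exact hsub (by simp [hE, h1 n])
  have hsymmE : ∀ n, Prod.swap ⁻¹' (E n) = E n := by
    intro n
    ext p
    simp only [hE, Set.mem_preimage, Set.mem_setOf_eq, Prod.fst_swap, Prod.snd_swap]
    constructor
    · intro h
      have : (p.2 * p.1⁻¹)⁻¹ ∈ (P n)⁻¹ := inv_mem_inv.mpr h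
      simpa [hsym n, mul_inv_rev] using this
    · intro h
      have : (p.1 * p.2⁻¹)⁻¹ ∈ (P n)⁻¹ := inv_mem_inv.mpr h
      simpa [hsym n, mul_inv_rev] using this
  have hsymm : ∀ r ∈ 𝔘, Prod.swap ⁻¹' r ∈ 𝔘 := by
    intro r hr
    rcases hbasis.mem_iff.mp hr with ⟨n, -, hsub⟩
    refine Filter.mem_of_superset (hmemE n) ?_
    intro p hp
    apply hsub
    rw [← hsymmE n] at hp
    exact hp
  have hcompE : ∀ n, E (n+1) ○ E (n+1) ⊆ E n := by
    intro n p hp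
    rcases hp with ⟨z, h1z, h2z⟩
    have : (p.1 * z⁻¹) * (z * p.2⁻¹) ∈ P n := hcomp n (Set.mul_mem_mul h1z h2z)
    simpa [mul_assoc, hE] using this
  have hcompU : ∀ r ∈ 𝔘, ∃ t ∈ 𝔘, t ○ t ⊆ r := by
    intro r hr
    rcases hbasis.mem_iff.mp hr with ⟨n, -, hsub⟩
    exact ⟨E (n+1), hmemE _, (hcompE n).trans hsub⟩
  have hcg : IsCountablyGenerated (⨅ n, 𝓟 (E n)) := hbasis.isCountablyGenerated
  obtain ⟨I, hI⟩ := @UniformSpace.metrizable_uniformity H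
    (UniformSpace.ofCore (UniformSpace.Core.mk' 𝔘 hrefl hsymm hcompU)) hcg
  letI := I
  have hUeq2 : (𝓤 H) = 𝔘 := by
    exact congrArg (@uniformity H) hI
  have hbasis2 : (𝓤 H).HasBasis (fun _ => True) E := hUeq2 ▸ hbasis
  -- get r > 0 with dist-ball inside E 0
  obtain ⟨r, hr0, hrsub⟩ := Metric.mem_uniformity_dist.mp (hUeq2.symm ▸ hmemE 0)
  refine ⟨fun x => max (1 - dist x 1 / r) 0, ?_, ?_, ?_, ?_, ?_⟩
  · simp
  · intro x; exact le_max_right _ _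
  · intro x
    refine max_le ?_ (by norm_num)
    have : 0 ≤ dist x 1 / r := div_nonneg dist_nonneg hr0.le
    linarith
  · intro x hx
    have hlt : 0 < 1 - dist x 1 / r := by
      rcases lt_or_ge 0 (1 - dist x 1 / r) with h | h
      · exact h
      · exact absurd (max_eq_right h) hx
    have : dist x 1 < r := by
      have := (div_lt_one hr0).mp (by linarith)
      exact this
    have h2 := hrsub this
    simpa [hE] using h2
  · intro ε hε
    have hmem : {p : H × H | dist p.1 p.2 < ε * r} ∈ 𝓤 H :=
      Metric.dist_mem_uniformity (by positivity)
    rcases hbasis2.mem_iff.mp hmem with ⟨n, -, hsub⟩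
    refine ⟨n, fun x y hxy => ?_⟩
    have hd : dist x y < ε * r := hsub (show (x,y) ∈ E n from hxy)
    have h1 : |(1 - dist x 1 / r) - (1 - dist y 1 / r)| ≤ ε := by
      have heq : (1 - dist x 1 / r) - (1 - dist y 1 / r) = (dist y 1 - dist x 1) / r := by
        ring
      rw [heq, abs_div, abs_of_pos hr0, div_le_iff₀ hr0]
      calc |dist y 1 - dist x 1| ≤ dist y x := abs_dist_sub_le _ _ _
        _ ≤ ε * r := by rw [dist_comm]; exact hd.le
    calc |max (1 - dist x 1 / r) 0 - max (1 - dist y 1 / r) 0|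
        ≤ |(1 - dist x 1 / r) - (1 - dist y 1 / r)| := abs_max_sub_max_le_abs _ _ _
      _ ≤ ε := h1



variable {G : Type*} [Group G]

private lemma mem_mul3 {A B C : Set G} {x : G} :
    x ∈ A * B * C ↔ ∃ a ∈ A, ∃ b ∈ B, ∃ c ∈ C, a * b * c = x := by
  constructor
  · rintro ⟨ab, ⟨a, ha, b, hb, rfl⟩, c, hc, rfl⟩
    exact ⟨a, ha, b, hb, c, hc, rfl⟩
  · rintro ⟨a, ha, b, hb, c, hc, rfl⟩
    exact ⟨a * b, ⟨a, ha, b, hb, rfl⟩, c, hc, rfl⟩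

private lemma mem_tri {A B : Set G} {t x : G} :
    x ∈ A * ({t} : Set G) * B ↔ ∃ a ∈ A, ∃ b ∈ B, a * t * b = x := by
  rw [mem_mul3]
  constructor
  · rintro ⟨a, ha, s, rfl, b, hb, rfl⟩
    exact ⟨a, ha, b, hb, rfl⟩
  · rintro ⟨a, ha, b, hb, rfl⟩
    exact ⟨a, ha, t, rfl, b, hb, rfl⟩

lemma exists_cover (t : G) (V : Set G) (F : Finset G)
    (h1 : (1 : G) ∈ V) (hsym : V⁻¹ = V)
    (ht : t ∉ (V * V * V) * (V * V * V))
    (hS : (V * V * V) * ({t} : Set G) * (V * V * V) ∪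
        (V * V * V) * ({t⁻¹} : Set G) * (V * V * V) ⊆ V * (F : Set G)) :
    ∃ (k : ℕ), 0 < k ∧ ∃ A : Fin k → Set G, (∀ x, ∃ j, x ∈ A j) ∧
      ∀ j, ∀ a ∈ A j, ∀ b ∈ A j, a * b⁻¹ ∉ V * ({t} : Set G) * V := by
  classical
  set U : Set G := V * V * V with hU
  set St : Set G := U * ({t} : Set G) * U ∪ U * ({t⁻¹} : Set G) * U with hSt
  have hVmem : ∀ {v : G}, v ∈ V → v⁻¹ ∈ V := by
    intro v hv
    rw [← hsym]
    exact Set.inv_mem_inv.mpr hv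
  have hUmem : ∀ {u : G}, u ∈ U → u⁻¹ ∈ U := by
    rintro u ⟨ab, ⟨a, ha, b, hb, rfl⟩, c, hc, rfl⟩
    rw [hU]
    refine mem_mul3.mpr ⟨c⁻¹, hVmem hc, b⁻¹, hVmem hb, a⁻¹, hVmem ha, by group⟩
  have hStsymm : ∀ {x : G}, x ∈ St → x⁻¹ ∈ St := by
    intro x hx
    rcases hx with hx | hx
    · rcases mem_tri.mp hx with ⟨a, ha, b, hb, rfl⟩
      exact Or.inr (mem_tri.mpr ⟨b⁻¹, hUmem hb, a⁻¹, hUmem ha, by group⟩)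
    · rcases mem_tri.mp hx with ⟨a, ha, b, hb, rfl⟩
      refine Or.inl (mem_tri.mpr ⟨b⁻¹, hUmem hb, a⁻¹, hUmem ha, by group⟩)
  -- the maximal separated set
  obtain ⟨M, hMmax⟩ := zorn_subset
      {M : Set G | ∀ a ∈ M, ∀ b ∈ M, a ≠ b → a * b⁻¹ ∉ V * V} (by
    intro c hc hchain
    refine ⟨⋃₀ c, ?_, fun s hs => subset_sUnion_of_mem hs⟩
    rintro a ⟨s, hs, has⟩ b ⟨s', hs', hbs'⟩ hab
    rcases hchain.total hs hs' with h | h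
    · exact hc hs' _ (h has) _ hbs' hab
    · exact hc hs _ has _ (h hbs') hab)
  have hMsep : ∀ a ∈ M, ∀ b ∈ M, a ≠ b → a * b⁻¹ ∉ V * V := hMmax.1
  have hMcov : ∀ x : G, ∃ m ∈ M, x * m⁻¹ ∈ V * V := by
    intro x
    by_contra hno
    push_neg at hno
    have hxM : x ∉ M := by
      intro hxM
      exact hno x hxM (by simpa using Set.mul_mem_mul h1 h1)
    have : insert x M ∈ {M : Set G | ∀ a ∈ M, ∀ b ∈ M, a ≠ b → a * b⁻¹ ∉ V * V} := by
      rintro a (rfl | ha) b (rfl | hb) hab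
      · exact absurd rfl hab
      · exact hno b hb
      · intro hmem
        apply hno a ha
        have : (a * b⁻¹)⁻¹ ∈ (V * V)⁻¹ := Set.inv_mem_inv.mpr hmem
        rw [mul_inv_rev, hsym] at this
        simpa [mul_inv_rev] using this
      · exact hMsep a ha b hb hab
    have := hMmax.2 this (subset_insert x M)
    exact hxM (this (mem_insert x M))
  -- neighbours of a point of M
  set nbrs : G → Set G := fun m => {m' ∈ M | m' ≠ m ∧ m' * m⁻¹ ∈ St} with hnbrs
  have hpick : ∀ m m' : G, m' * m⁻¹ ∈ St → ∃ f ∈ F, ∃ v ∈ V, v * f = m' * m⁻¹ := by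
    intro m m' h
    rcases hS h with ⟨v, hv, f, hf, heq⟩
    exact ⟨f, hf, v, hv, heq⟩
  have hnbrs_fin : ∀ m : G, (nbrs m).Finite ∧ (nbrs m).ncard ≤ F.card := by
    intro m
    set φ : G → G := fun m' => if h : ∃ f ∈ F, ∃ v ∈ V, v * f = m' * m⁻¹ then h.choose else 1
      with hφ
    have hmaps : ∀ m' ∈ nbrs m, φ m' ∈ (F : Set G) := by
      rintro m' ⟨hm'M, -, hm'St⟩
      have h := hpick m m' hm'St
      rw [hφ]
      simp only [dif_pos h]
      exact h.choose_spec.1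
    have hinj : Set.InjOn φ (nbrs m) := by
      rintro a ⟨haM, -, haSt⟩ b ⟨hbM, -, hbSt⟩ hab
      have ha := hpick m a haSt
      have hb := hpick m b hbSt
      have hfa : ∃ v ∈ V, v * (φ a) = a * m⁻¹ := by
        rw [hφ]; simp only [dif_pos ha]; exact ha.choose_spec.2
      have hfb : ∃ v ∈ V, v * (φ b) = b * m⁻¹ := by
        rw [hφ]; simp only [dif_pos hb]; exact hb.choose_spec.2
      rcases hfa with ⟨v, hv, hva⟩
      rcases hfb with ⟨w, hw, hwb⟩
      by_contra hne
      apply hMsep a haM b hbM hne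
      have : a * b⁻¹ = v * w⁻¹ := by
        have h1' : a = v * (φ a) * m := by rw [hva]; group
        have h2' : b = w * (φ b) * m := by rw [hwb]; group
        rw [h1', h2', hab]; group
      rw [this]
      exact Set.mul_mem_mul hv (hVmem hw)
    have hfin : (nbrs m).Finite :=
      Set.Finite.of_finite_image (F.finite_toSet.subset (Set.image_subset_iff.mpr hmaps)) hinj
    refine ⟨hfin, ?_⟩
    have := Set.ncard_le_ncard_of_injOn φ hmaps hinj F.finite_toSet
    simpa using this
  -- Zorn: proper partial colorings
  set C := Fin (F.card + 1) with hC
  set Col : Set (Set (G × C)) := {R | (∀ p ∈ R, (p : G × C).1 ∈ M) ∧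
      (∀ p ∈ R, ∀ q ∈ R, (p : G × C).1 = (q : G × C).1 → p.2 = q.2) ∧
      (∀ p ∈ R, ∀ q ∈ R, (p : G × C).1 ≠ (q : G × C).1 →
        (p : G × C).1 * (q : G × C).1⁻¹ ∈ St → p.2 ≠ q.2)} with hCol
  obtain ⟨R, -, hRmax⟩ := zorn_subset_nonempty Col (by
      intro c hc hchain hcne
      refine ⟨⋃₀ c, ⟨?_, ?_, ?_⟩, fun s hs => subset_sUnion_of_mem hs⟩
      · rintro p ⟨s, hs, hps⟩
        exact (hc hs).1 p hps
      · rintro p ⟨s, hs, hps⟩ q ⟨s', hs', hqs'⟩ hpq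
        rcases hchain.total hs hs' with h | h
        · exact (hc hs').2.1 p (h hps) q hqs' hpq
        · exact (hc hs).2.1 p hps q (h hqs') hpq
      · rintro p ⟨s, hs, hps⟩ q ⟨s', hs', hqs'⟩ hpq hmem
        rcases hchain.total hs hs' with h | h
        · exact (hc hs').2.2 p (h hps) q hqs' hpq hmem
        · exact (hc hs).2.2 p hps q (h hqs') hpq hmem)
    ∅ (by refine ⟨?_, ?_, ?_⟩ <;> simp)
  have hRcol : R ∈ Col := hRmax.1
  -- maximal coloring is total on M
  have hRtot : ∀ m ∈ M, ∃ cl : C, (m, cl) ∈ R := by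
    intro m₀ hm₀
    by_contra hno
    push_neg at hno
    set Cu : Set C := {cl | ∃ m', (m', cl) ∈ R ∧ m' ≠ m₀ ∧ m' * m₀⁻¹ ∈ St} with hCu
    have hCu_small : Cu.ncard ≤ F.card := by
      set ψ : C → G := fun cl => if h : ∃ m', (m', cl) ∈ R ∧ m' ≠ m₀ ∧ m' * m₀⁻¹ ∈ St
        then h.choose else 1 with hψ
      have hmaps : ∀ cl ∈ Cu, ψ cl ∈ nbrs m₀ := by
        intro cl hcl
        have hcl' : ∃ m', (m', cl) ∈ R ∧ m' ≠ m₀ ∧ m' * m₀⁻¹ ∈ St := hcl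
        rw [show ψ cl = hcl'.choose from dif_pos hcl']
        obtain ⟨h1', h2', h3'⟩ := hcl'.choose_spec
        exact ⟨hRcol.1 _ h1', h2', h3'⟩
      have hinj : Set.InjOn ψ Cu := by
        intro a ha b hb hab
        have ha' : ∃ m', (m', a) ∈ R ∧ m' ≠ m₀ ∧ m' * m₀⁻¹ ∈ St := ha
        have hb' : ∃ m', (m', b) ∈ R ∧ m' ≠ m₀ ∧ m' * m₀⁻¹ ∈ St := hb
        rw [show ψ a = ha'.choose from dif_pos ha',
          show ψ b = hb'.choose from dif_pos hb'] at hab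
        exact hRcol.2.1 _ ha'.choose_spec.1 _ hb'.choose_spec.1 (by simpa using hab)
      calc Cu.ncard ≤ (nbrs m₀).ncard :=
            Set.ncard_le_ncard_of_injOn ψ hmaps hinj (hnbrs_fin m₀).1
        _ ≤ F.card := (hnbrs_fin m₀).2
    have hCu_ne : Cu ≠ Set.univ := by
      intro h
      have : Cu.ncard = F.card + 1 := by
        rw [h, Set.ncard_univ, hC]
        simp
      omega
    obtain ⟨cl, hcl⟩ : ∃ cl : C, cl ∉ Cu := by
      by_contra hall
      push_neg at hall
      exact hCu_ne (Set.eq_univ_of_forall hall)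
    -- extend the coloring
    have hins : insert (m₀, cl) R ∈ Col := by
      refine ⟨?_, ?_, ?_⟩
      · rintro p (rfl | hp)
        · exact hm₀
        · exact hRcol.1 p hp
      · rintro p (rfl | hp) q (rfl | hq) h
        · rfl
        · obtain ⟨q1, q2⟩ := q
          simp only at h
          exact absurd (h ▸ hq) (hno q2)
        · obtain ⟨p1, p2⟩ := p
          simp only at h
          exact absurd (h ▸ hp) (hno p2)
        · exact hRcol.2.1 p hp q hq h
      · rintro p (rfl | hp) q (rfl | hq) hne hmem
        · simp at hne
        · obtain ⟨q1, q2⟩ := q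
          simp only at hne hmem ⊢
          intro hclq
          apply hcl
          refine ⟨q1, ?_, fun h => hne h.symm, ?_⟩
          · rw [hclq]; exact hq
          · have := hStsymm hmem
            simpa using this
        · obtain ⟨p1, p2⟩ := p
          simp only at hne hmem ⊢
          intro hclq
          exact hcl ⟨p1, by rw [← hclq]; exact hp, hne, hmem⟩
        · exact hRcol.2.2 p hp q hq hne hmem
    have := hRmax.2 hins (subset_insert _ R)
    have hmem : (m₀, cl) ∈ R := this (mem_insert _ _)
    exact hno cl hmem
  -- the coloring function
  set c : G → C := fun x => if h : ∃ cl : C, (x, cl) ∈ R then h.choose else Classical.arbitrary C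
    with hc
  have hcmem : ∀ m ∈ M, (m, c m) ∈ R := by
    intro m hm
    have h : ∃ cl : C, (m, cl) ∈ R := hRtot m hm
    rw [hc]
    simp only [dif_pos h]
    exact h.choose_spec
  have hcproper : ∀ m ∈ M, ∀ m' ∈ M, m ≠ m' → m * m'⁻¹ ∈ St → c m ≠ c m' := by
    intro m hm m' hm' hne hmem
    exact hRcol.2.2 (m, c m) (hcmem m hm) (m', c m') (hcmem m' hm') hne hmem
  -- the selection function
  set sel : G → G := fun x => if h : ∃ m ∈ M, x * m⁻¹ ∈ V * V then h.choose else 1 with hsel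
  have hselM : ∀ x : G, sel x ∈ M ∧ x * (sel x)⁻¹ ∈ V * V := by
    intro x
    have h := hMcov x
    rw [hsel]
    simp only [dif_pos h]
    exact h.choose_spec
  -- final sets
  refine ⟨F.card + 1, by omega, fun j => {x | c (sel x) = j}, fun x => ⟨c (sel x), rfl⟩, ?_⟩
  rintro j a (ha : c (sel a) = j) b (hb : c (sel b) = j) hmem
  rcases mem_tri.mp hmem with ⟨v, hv, w, hw, hvw⟩
  set m := sel a with hm
  set m' := sel b with hm'
  obtain ⟨hmM, hma⟩ := hselM a
  obtain ⟨hm'M, hm'b⟩ := hselM b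
  -- m * m'⁻¹ = (m * a⁻¹) * (a * b⁻¹) * (b * m'⁻¹) ∈ (VV)(VtV)(VV) = U t U
  rcases hma with ⟨va, hva, vb, hvb, hab⟩
  rcases hm'b with ⟨wa, hwa, wb, hwb, hwab⟩
  -- a = va * vb * m , b = wa * wb * m'
  have haeq : a = va * vb * m := by
    have : a * m⁻¹ = va * vb := hab.symm
    have := congrArg (· * m) this
    simpa [mul_assoc] using this
  have hbeq : b = wa * wb * m' := by
    have : b * m'⁻¹ = wa * wb := hwab.symm
    have := congrArg (· * m') this
    simpa [mul_assoc] using this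
  have hmm' : m * m'⁻¹ = (vb⁻¹ * va⁻¹ * v) * t * (w * wa * wb) := by
    have hab' : a * b⁻¹ = v * t * w := hvw.symm
    rw [haeq, hbeq] at hab'
    -- (va vb m)(m'⁻¹ wb⁻¹ wa⁻¹) = v t w
    have : m * m'⁻¹ = vb⁻¹ * va⁻¹ * (v * t * w) * wa * wb := by
      rw [← hab']
      group
    rw [this]; group
  by_cases hcase : m = m'
  · -- then t ∈ U * U, contradiction
    apply ht
    have h1' : (vb⁻¹ * va⁻¹ * v) * t * (w * wa * wb) = 1 := by
      rw [← hmm', hcase]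
      group
    have hteq : t = (vb⁻¹ * va⁻¹ * v)⁻¹ * (w * wa * wb)⁻¹ := by
      have h3 : (vb⁻¹ * va⁻¹ * v)⁻¹ * ((vb⁻¹ * va⁻¹ * v) * t * (w * wa * wb)) *
          (w * wa * wb)⁻¹ = t := by group
      rw [h1'] at h3
      rw [← h3]
      group
    rw [hteq]
    apply Set.mul_mem_mul
    · apply hUmem
      exact mem_mul3.mpr ⟨vb⁻¹, hVmem hvb, va⁻¹, hVmem hva, v, hv, rfl⟩
    · apply hUmem
      exact mem_mul3.mpr ⟨w, hw, wa, hwa, wb, hwb, rfl⟩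
  · -- edge in the graph : colors differ, contradiction
    apply hcproper m hmM m' hm'M hcase
    · rw [hSt]
      left
      refine mem_tri.mpr ⟨vb⁻¹ * va⁻¹ * v, ?_, w * wa * wb, ?_, hmm'.symm⟩
      · exact mem_mul3.mpr ⟨vb⁻¹, hVmem hvb, va⁻¹, hVmem hva, v, hv, rfl⟩
      · exact mem_mul3.mpr ⟨w, hw, wa, hwa, wb, hwb, rfl⟩
    · rw [ha, hb]

variable {G : Type*} [Group G] [TopologicalSpace G] [IsTopologicalGroup G]


lemma exists_funcs (t : G) (V : Set G) (F : Finset G)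
    (hV : V ∈ 𝓝 (1 : G)) (hsym : V⁻¹ = V)
    (hdis : (t • (V * V * V)) ∩ (V * V * V) = ∅)
    (hK : (V * V * V * ({t} : Set G) * (V * V * V) * ({t⁻¹} : Set G)) ∪
          (V * V * V * ({t⁻¹} : Set G) * (V * V * V) * ({t} : Set G)) ⊆ V * (F : Set G)) :
    ∃ (k : ℕ), 0 < k ∧ ∃ ψ : Fin k → BoundedContinuousFunction G ℝ,
      (∀ j x, 0 ≤ ψ j x) ∧ (∀ x, 1 ≤ ∑ j, ψ j x) ∧
      (∀ j x, ψ j x * ψ j (t * x) = 0) := by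
  classical
  have h1V : (1 : G) ∈ V := mem_of_mem_nhds hV
  set U : Set G := V * V * V with hU
  have h1U : (1 : G) ∈ U := by
    have := Set.mul_mem_mul (Set.mul_mem_mul h1V h1V) h1V
    simpa using this
  have hVinv : ∀ {v : G}, v ∈ V → v⁻¹ ∈ V := fun hv => by
    rw [← hsym]; exact Set.inv_mem_inv.mpr hv
  have hUinv : ∀ {u : G}, u ∈ U → u⁻¹ ∈ U := by
    rintro u ⟨ab, ⟨a, ha, b, hb, rfl⟩, c, hc, rfl⟩
    exact ⟨c⁻¹ * b⁻¹, Set.mul_mem_mul (hVinv hc) (hVinv hb), a⁻¹, hVinv ha, by group⟩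
  -- t ∉ U * U
  have ht : t ∉ U * U := by
    rintro ⟨u, hu, w, hw, hdef⟩
    have hdef' : u * w = t := hdef
    have h1 : u ∈ t • U := ⟨w⁻¹, hUinv hw, show t • w⁻¹ = u by rw [smul_eq_mul, ← hdef']; group⟩
    have h2 : u ∈ (t • U) ∩ U := ⟨h1, hu⟩
    rw [hdis] at h2
    exact h2
  -- the enlarged finite set
  set F₂ : Finset G := F.image (· * t) ∪ F.image (· * t⁻¹) with hF₂
  have hS : U * ({t} : Set G) * U ∪ U * ({t⁻¹} : Set G) * U ⊆ V * (F₂ : Set G) := by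
    rintro x (hx | hx)
    · have : x * t⁻¹ ∈ U * ({t} : Set G) * U * ({t⁻¹} : Set G) :=
        Set.mul_mem_mul hx (Set.mem_singleton _)
      have hmem := hK (Or.inl this)
      rcases hmem with ⟨v, hv, f, hf, hvf⟩
      have hvf' : v * f = x * t⁻¹ := hvf
      refine ⟨v, hv, f * t, ?_, show v * (f * t) = x by rw [← mul_assoc, hvf']; group⟩
      simp only [hF₂, Finset.coe_union, Finset.coe_image, Set.mem_union, Set.mem_image]
      exact Or.inl ⟨f, hf, rfl⟩
    · have : x * t ∈ U * ({t⁻¹} : Set G) * U * ({t} : Set G) :=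
        Set.mul_mem_mul hx (Set.mem_singleton _)
      have hmem := hK (Or.inr this)
      rcases hmem with ⟨v, hv, f, hf, hvf⟩
      have hvf' : v * f = x * t := hvf
      refine ⟨v, hv, f * t⁻¹, ?_, show v * (f * t⁻¹) = x by rw [← mul_assoc, hvf']; group⟩
      simp only [hF₂, Finset.coe_union, Finset.coe_image, Set.mem_union, Set.mem_image]
      exact Or.inr ⟨f, hf, rfl⟩
  obtain ⟨k, hk, A, hAcov, hAfree⟩ := exists_cover t V F₂ h1V hsym ht hS
  -- the chain of neighborhoods
  have hstep : ∀ S : Set G, S ∈ 𝓝 (1 : G) →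
      ∃ S' : Set G, (S' ∈ 𝓝 (1 : G) ∧ S'⁻¹ = S') ∧ S' * S' ⊆ S := by
    intro S hS'
    obtain ⟨Q, hQ, hQmul⟩ := exists_nhds_one_split hS'
    have hQinv : Q⁻¹ ∈ 𝓝 (1 : G) :=
      continuous_inv.continuousAt.preimage_mem_nhds (by simpa using hQ)
    refine ⟨Q ∩ Q⁻¹, ⟨Filter.inter_mem hQ hQinv, by
      simp [Set.inter_inv, Set.inter_comm]⟩, ?_⟩
    rintro z ⟨a, ⟨ha, -⟩, b, ⟨hb, -⟩, rfl⟩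
    exact hQmul a ha b hb
  choose! σ hσ1 hσ2 using hstep
  set P : ℕ → {S : Set G // S ∈ 𝓝 (1 : G) ∧ S⁻¹ = S} :=
    fun n => Nat.rec ⟨σ V, hσ1 V hV⟩ (fun _ prev => ⟨σ prev.1, hσ1 prev.1 prev.2.1⟩) n
    with hP
  have hPmem : ∀ n, (P n).1 ∈ 𝓝 (1 : G) := fun n => (P n).2.1
  have hPsym : ∀ n, ((P n).1)⁻¹ = (P n).1 := fun n => (P n).2.2
  have hP1 : ∀ n, (1 : G) ∈ (P n).1 := fun n => mem_of_mem_nhds (hPmem n)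
  have hPcomp : ∀ n, (P (n+1)).1 * (P (n+1)).1 ⊆ (P n).1 :=
    fun n => hσ2 (P n).1 (hPmem n)
  have hP0V : (P 0).1 ⊆ V := by
    intro x hx
    have : x * 1 ∈ (P 0).1 * (P 0).1 := Set.mul_mem_mul hx (hP1 0)
    have h2 : x * 1 ∈ V := hσ2 V hV this
    simpa using h2
  -- the bump function
  obtain ⟨q, hq1, hq0, hqle, hqsupp, hqmod⟩ :=
    bump_lemma (fun n => (P n).1) hP1 hPsym hPcomp
  -- the functions
  have hBdd : ∀ (j : Fin k) (x : G),
      BddAbove (insert (0:ℝ) ((fun a => q (x * a⁻¹)) '' (A j))) := by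
    intro j x
    refine ⟨1, ?_⟩
    rintro y (rfl | ⟨a, -, rfl⟩)
    · norm_num
    · exact hqle _
  set ψ₀ : Fin k → G → ℝ :=
    fun j x => sSup (insert (0:ℝ) ((fun a => q (x * a⁻¹)) '' (A j))) with hψ₀
  have hne : ∀ (j : Fin k) (x : G),
      (insert (0:ℝ) ((fun a => q (x * a⁻¹)) '' (A j))).Nonempty :=
    fun j x => ⟨0, mem_insert _ _⟩
  have hψ₀nonneg : ∀ j x, 0 ≤ ψ₀ j x := fun j x => le_csSup (hBdd j x) (mem_insert _ _)
  have hψ₀le : ∀ j x, ψ₀ j x ≤ 1 := by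
    intro j x
    apply Real.sSup_le _ (by norm_num)
    rintro y (rfl | ⟨a, -, rfl⟩)
    · norm_num
    · exact hqle _
  have hψ₀one : ∀ j, ∀ x ∈ A j, 1 ≤ ψ₀ j x := by
    intro j x hx
    have : q (x * x⁻¹) ∈ (fun a => q (x * a⁻¹)) '' (A j) := ⟨x, hx, rfl⟩
    have h2 : (1:ℝ) ∈ insert (0:ℝ) ((fun a => q (x * a⁻¹)) '' (A j)) := by
      right
      simpa [hq1] using this
    exact le_csSup (hBdd j x) h2
  have hψ₀pos : ∀ j x, ψ₀ j x ≠ 0 → ∃ a ∈ A j, x * a⁻¹ ∈ V := by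
    intro j x hpos
    by_contra hno
    push_neg at hno
    apply hpos
    have hle : ψ₀ j x ≤ 0 := by
      apply Real.sSup_le _ le_rfl
      rintro y (rfl | ⟨a, ha, rfl⟩)
      · exact le_rfl
      · rcases eq_or_ne (q (x * a⁻¹)) 0 with h | h
        · exact h.le
        · exact absurd (hP0V (hqsupp _ h)) (hno a ha)
    exact le_antisymm hle (hψ₀nonneg j x)
  have hψ₀mod : ∀ ε : ℝ, 0 < ε → ∃ n, ∀ (j : Fin k) (x y : G),
      x * y⁻¹ ∈ (P n).1 → ψ₀ j x ≤ ψ₀ j y + ε := by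
    intro ε hε
    obtain ⟨n, hn⟩ := hqmod ε hε
    refine ⟨n, fun j x y hxy => ?_⟩
    apply Real.sSup_le _ (by have := hψ₀nonneg j y; linarith)
    rintro z (rfl | ⟨a, ha, rfl⟩)
    · have := hψ₀nonneg j y; linarith
    · have h1 : |q (x * a⁻¹) - q (y * a⁻¹)| ≤ ε := by
        apply hn
        have : (x * a⁻¹) * (y * a⁻¹)⁻¹ = x * y⁻¹ := by group
        rw [this]
        exact hxy
      have h2 : q (y * a⁻¹) ≤ ψ₀ j y :=
        le_csSup (hBdd j y) (Or.inr ⟨a, ha, rfl⟩)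
      have := abs_le.mp h1
      linarith [this.2]
  have hψ₀cont : ∀ j, Continuous (ψ₀ j) := by
    intro j
    rw [continuous_iff_continuousAt]
    intro x₀
    rw [ContinuousAt, Metric.tendsto_nhds]
    intro ε hε
    obtain ⟨n, hn⟩ := hψ₀mod (ε / 2) (by positivity)
    have hnbhd1 : {y : G | y * x₀⁻¹ ∈ (P n).1} ∈ 𝓝 x₀ := by
      have hc : ContinuousAt (fun y : G => y * x₀⁻¹) x₀ :=
        (continuous_mul_right x₀⁻¹).continuousAt
      exact hc.preimage_mem_nhds (by rw [mul_inv_cancel]; exact hPmem n)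
    have hnbhd2 : {y : G | x₀ * y⁻¹ ∈ (P n).1} ∈ 𝓝 x₀ := by
      have hc : ContinuousAt (fun y : G => x₀ * y⁻¹) x₀ :=
        (continuous_const.mul continuous_inv).continuousAt
      exact hc.preimage_mem_nhds (by rw [mul_inv_cancel]; exact hPmem n)
    filter_upwards [hnbhd1, hnbhd2] with y hy1 hy2
    have h1 := hn j y x₀ hy1
    have h2 := hn j x₀ y hy2
    rw [Real.dist_eq, abs_sub_lt_iff]
    constructor <;> linarith
  set ψ : Fin k → BoundedContinuousFunction G ℝ := fun j =>
    BoundedContinuousFunction.mkOfBound ⟨ψ₀ j, hψ₀cont j⟩ 1 (by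
      intro x y
      rw [Real.dist_eq, abs_sub_le_iff]
      constructor
      · have := hψ₀le j x
        have := hψ₀nonneg j y
        dsimp only [ContinuousMap.coe_mk]
        linarith
      · have := hψ₀le j y
        have := hψ₀nonneg j x
        dsimp only [ContinuousMap.coe_mk]
        linarith) with hψ
  have hψval : ∀ j x, ψ j x = ψ₀ j x := fun j x => rfl
  refine ⟨k, hk, ψ, ?_, ?_, ?_⟩
  · intro j x
    rw [hψval]
    exact hψ₀nonneg j x
  · intro x
    obtain ⟨j₀, hj₀⟩ := hAcov x
    calc (1:ℝ) ≤ ψ₀ j₀ x := hψ₀one j₀ x hj₀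
      _ = ψ j₀ x := rfl
      _ ≤ ∑ j, ψ j x := by
          apply Finset.single_le_sum (fun j _ => ?_) (Finset.mem_univ j₀)
          rw [hψval]
          exact hψ₀nonneg j x
  · intro j x
    by_contra hne0
    obtain ⟨h1, h2⟩ := mul_ne_zero_iff.mp hne0
    rw [hψval] at h1 h2
    obtain ⟨a, ha, hva⟩ := hψ₀pos j x h1
    obtain ⟨b, hb, hvb⟩ := hψ₀pos j (t * x) h2
    apply hAfree j b hb a ha
    have heq : b * a⁻¹ = ((t * x) * b⁻¹)⁻¹ * t * (x * a⁻¹) := by group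
    rw [heq]
    exact Set.mul_mem_mul (Set.mul_mem_mul (hVinv hvb) (Set.mem_singleton t)) hva

end Aux

set_option maxHeartbeats 1000000 in
/-- Theorem 5.7 (concluding assertion): a locally quasi-totally bounded Hausdorff
topological group acts freely on its LUC-compactification. -/
theorem stmt4 {G : Type*} [Group G] [TopologicalSpace G] [IsTopologicalGroup G] [T2Space G]
    (hqtb : ∀ t : G, t ≠ 1 → ∃ V ∈ nhds (1 : G), V⁻¹ = V ∧
      (t • (V * V * V)) ∩ (V * V * V) = ∅ ∧
      ∃ F : Finset G,
        (V * V * V * ({t} : Set G) * (V * V * V) * ({t⁻¹} : Set G)) ∪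
          (V * V * V * ({t⁻¹} : Set G) * (V * V * V) * ({t} : Set G)) ⊆ V * (F : Set G)) :
    ∀ t : G, t ≠ 1 →
      ∀ μ : WeakDual ℂ (BoundedContinuousFunction G ℂ),
        μ ∈ closure {ν : WeakDual ℂ (BoundedContinuousFunction G ℂ) |
          ∃ s : G, ∀ h : BoundedContinuousFunction G ℂ, ν h = h s} →
        ∃ f g : BoundedContinuousFunction G ℂ,
          (∀ x : G, g x = f (t * x)) ∧ μ g ≠ μ f := by
  intro t ht μ hμ
  by_contra hcon
  push_neg at hcon
  obtain ⟨V, hV, hsym, hdis, F, hK⟩ := hqtb t ht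
  obtain ⟨k, hk, ψ, hnn, hsum, hzero⟩ := exists_funcs t V F hV hsym hdis hK
  -- complexified functions
  set Ψ : Fin k → BoundedContinuousFunction G ℂ := fun j =>
    BoundedContinuousFunction.comp Complex.ofReal Complex.isometry_ofReal.lipschitz (ψ j)
    with hΨ
  have hΨval : ∀ j x, Ψ j x = ((ψ j x : ℝ) : ℂ) := fun j x => rfl
  -- μ of any h lies in the closure of the range of h
  have hval : ∀ h : BoundedContinuousFunction G ℂ, μ h ∈ closure (Set.range h) := by
    intro h
    have hc : Continuous fun ν : WeakDual ℂ (BoundedContinuousFunction G ℂ) => ν h :=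
      WeakDual.eval_continuous h
    have h0 : (fun ν : WeakDual ℂ (BoundedContinuousFunction G ℂ) => ν h) μ ∈
        closure (Set.range h) := by
      refine map_mem_closure (f := fun ν : WeakDual ℂ (BoundedContinuousFunction G ℂ) => ν h)
        hc hμ ?_
      rintro ν ⟨s, hs⟩
      exact ⟨s, (hs h).symm⟩
    exact h0
  -- μ is multiplicative
  have hmul : ∀ f g : BoundedContinuousFunction G ℂ, μ (f * g) = μ f * μ g := by
    intro f g
    have hcl : IsClosed {ν : WeakDual ℂ (BoundedContinuousFunction G ℂ) |
        ν (f * g) = ν f * ν g} :=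
      isClosed_eq (WeakDual.eval_continuous _)
        ((WeakDual.eval_continuous f).mul (WeakDual.eval_continuous g))
    have hsub : {ν : WeakDual ℂ (BoundedContinuousFunction G ℂ) |
        ∃ s : G, ∀ h : BoundedContinuousFunction G ℂ, ν h = h s} ⊆
        {ν : WeakDual ℂ (BoundedContinuousFunction G ℂ) | ν (f * g) = ν f * ν g} := by
      rintro ν ⟨s, hs⟩
      simp only [Set.mem_setOf_eq, hs (f * g), hs f, hs g,
        BoundedContinuousFunction.mul_apply]
    exact closure_minimal hsub hcl hμ
  -- translation invariance from the contradiction hypothesis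
  set L : C(G, G) := ⟨fun x => t * x, continuous_const.mul continuous_id⟩ with hL
  have hinv : ∀ f : BoundedContinuousFunction G ℂ, μ (f.compContinuous L) = μ f := by
    intro f
    apply hcon f (f.compContinuous L)
    intro x
    rw [BoundedContinuousFunction.compContinuous_apply]
    rfl
  -- the sum has μ-value with real part at least 1
  have hsum_ne : μ (∑ j, Ψ j) ≠ 0 := by
    have h1 := hval (∑ j, Ψ j)
    have h2 : Set.range ((∑ j, Ψ j : BoundedContinuousFunction G ℂ)) ⊆
        {z : ℂ | 1 ≤ z.re} := by
      rintro z ⟨x, rfl⟩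
      have : ((∑ j, Ψ j : BoundedContinuousFunction G ℂ)) x = ∑ j, Ψ j x := by
        rw [BoundedContinuousFunction.coe_sum, Finset.sum_apply]
      rw [Set.mem_setOf_eq, this]
      have : (∑ j, Ψ j x) = (((∑ j, ψ j x : ℝ)) : ℂ) := by
        rw [Complex.ofReal_sum]
        exact Finset.sum_congr rfl (fun j _ => hΨval j x)
      rw [this, Complex.ofReal_re]
      exact hsum x
    have hclosed : IsClosed {z : ℂ | 1 ≤ z.re} :=
      isClosed_le continuous_const Complex.continuous_re
    have h3 : μ (∑ j, Ψ j) ∈ {z : ℂ | 1 ≤ z.re} :=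
      (hclosed.closure_subset_iff.mpr h2) h1
    intro h0
    rw [h0] at h3
    simp at h3
    linarith
  -- some individual term is nonzero
  have h4 : (∑ j, μ (Ψ j)) ≠ 0 := by
    rw [← map_sum]
    exact hsum_ne
  obtain ⟨j, -, hj⟩ := Finset.exists_ne_zero_of_sum_ne_zero h4
  -- the product with the translate is zero
  have hprod : (Ψ j) * ((Ψ j).compContinuous L) = 0 := by
    ext x
    rw [BoundedContinuousFunction.mul_apply]
    have h5 : ((Ψ j).compContinuous L) x = Ψ j (t * x) := rfl
    rw [h5, hΨval, hΨval, ← Complex.ofReal_mul, hzero j x]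
    simp
  have h6 : μ ((Ψ j) * ((Ψ j).compContinuous L)) = μ (Ψ j) * μ (Ψ j) := by
    rw [hmul, hinv]
  rw [hprod, map_zero] at h6
  exact hj (mul_self_eq_zero.mp h6.symm)
end

section
/- Let G be a Hausdorff topological group with identity e that is locally totally bounded: there exists a neighborhood U of e such that for every neighborhood V of e there is a finite set F ⊆ U with U ⊆ V·F. Then for every t ∈ G with t ≠ e and every continuous linear functional μ on the Banach space of bounded continuous complex-valued functions on G lying in the weak-* closure of the set of evaluation functionals {f ↦ f(s) : s ∈ G}, there exists a bounded continuous function f : G → ℂ with μ(x ↦ f(t·x)) ≠ μ(f); that is, G acts freely on its LUC-compactification. -/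
set_option linter.unusedSectionVars false
set_option maxHeartbeats 1000000

open scoped Pointwise

section VeechAux
open Filter Set Uniformity Topology

lemma exists_dist_of_chain {X : Type*} (U : ℕ → Set (X × X))
    (hrefl : ∀ n x, (x, x) ∈ U n)
    (hsymm : ∀ n x y, (x, y) ∈ U n → (y, x) ∈ U n)
    (hcomp : ∀ n, ∀ x y z : X, (x, y) ∈ U (n + 1) → (y, z) ∈ U (n + 1) → (x, z) ∈ U n)
    (hanti : ∀ n, U (n + 1) ⊆ U n) :
    ∃ d : X → X → ℝ, (∀ x, d x x = 0) ∧ (∀ x y, 0 ≤ d x y) ∧ (∀ x y, d x y = d y x) ∧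
      (∀ x y z, d x z ≤ d x y + d y z) ∧
      (∀ n, ∃ ε > (0:ℝ), ∀ x y, d x y < ε → (x, y) ∈ U n) ∧
      (∀ ε > (0:ℝ), ∃ n, ∀ x y, (x, y) ∈ U n → d x y < ε) := by
  have hantitone : Antitone U := antitone_nat_of_succ_le hanti
  have hdir : Directed (· ≥ ·) U := hantitone.directed_ge
  set F : Filter (X × X) := ⨅ n, 𝓟 (U n) with hF
  have hB : F.HasBasis (fun _ : ℕ => True) U := hasBasis_iInf_principal hdir
  have hmem : ∀ n, U n ∈ F := fun n => hB.mem_of_mem trivial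
  have hFb : ∀ {s : Set (X × X)}, s ∈ F ↔ ∃ n, U n ⊆ s := by
    intro s; simpa using hB.mem_iff
  let core : UniformSpace.Core X := UniformSpace.Core.mk' F
    (fun r hr x => by rcases hFb.1 hr with ⟨n, hn⟩; exact hn (hrefl n x))
    (fun r hr => by
      rcases hFb.1 hr with ⟨n, hn⟩
      exact mem_of_superset (hmem n) (fun p hp => hn (hsymm n _ _ hp)))
    (fun r hr => by
      rcases hFb.1 hr with ⟨n, hn⟩
      exact ⟨U (n + 1), hmem (n + 1), fun p hp => by
        rcases hp with ⟨z, h1, h2⟩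
        exact hn (hcomp n _ _ _ h1 h2)⟩)
  let u : UniformSpace X := UniformSpace.ofCore core
  have huni : 𝓤[u] = F := rfl
  have hcg : @Filter.IsCountablyGenerated _ (𝓤[u]) := by
    rw [huni]; exact hB.isCountablyGenerated
  obtain ⟨I, hI⟩ := @UniformSpace.metrizable_uniformity X u hcg
  have hIu : 𝓤[I.toUniformSpace] = F := by rw [hI]; rfl
  refine ⟨I.dist, fun x => @dist_self X I x, fun x y => @dist_nonneg X I x y,
    fun x y => @dist_comm X I x y, fun x y z => @dist_triangle X I x y z, ?_, ?_⟩
  · intro n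
    have := (@Metric.mem_uniformity_dist X I _).1 (by rw [hIu]; exact hmem n)
    rcases this with ⟨ε, hε, h⟩
    exact ⟨ε, hε, fun x y hd => h hd⟩
  · intro ε hε
    have : {p : X × X | I.dist p.1 p.2 < ε} ∈ 𝓤[I.toUniformSpace] :=
      @Metric.dist_mem_uniformity X I ε hε
    rw [hIu] at this
    rcases hFb.1 this with ⟨n, hn⟩
    exact ⟨n, fun x y h => hn h⟩

section Group
variable {G : Type*} [Group G] [TopologicalSpace G] [IsTopologicalGroup G]

lemma exists_bump {W : Set G} (hW : W ∈ 𝓝 (1 : G)) :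
    ∃ ψ : G → ℝ, Continuous ψ ∧ ψ 1 = 1 ∧ (∀ y, 0 ≤ ψ y) ∧ (∀ y, ψ y ≤ 1) ∧
      (∀ y, y ∉ W → ψ y = 0) := by
  classical
  -- a "halving" step producing symmetric neighborhoods
  have step : ∀ A : Set G, A ∈ 𝓝 (1 : G) → ∃ B : Set G, (B ∈ 𝓝 (1 : G) ∧ ∀ x ∈ B, x⁻¹ ∈ B) ∧
      (∀ x ∈ B, ∀ y ∈ B, x * y ∈ A) ∧ B ⊆ A := by
    intro A hA
    obtain ⟨V, hV, hVmul⟩ := exists_nhds_one_split hA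
    have hVA : V ∩ A ∈ 𝓝 (1 : G) := Filter.inter_mem hV hA
    refine ⟨(V ∩ A) ∩ (V ∩ A)⁻¹, ⟨Filter.inter_mem hVA (inv_mem_nhds_one G hVA), ?_⟩, ?_, ?_⟩
    · rintro x ⟨hx1, hx2⟩
      exact ⟨by rwa [Set.mem_inv] at hx2, by simpa [Set.mem_inv] using hx1⟩
    · rintro x ⟨⟨hx, -⟩, -⟩ y ⟨⟨hy, -⟩, -⟩
      exact hVmul x hx y hy
    · rintro x ⟨⟨-, hx⟩, -⟩
      exact hx
  set T := {S : Set G // S ∈ 𝓝 (1 : G) ∧ ∀ x ∈ S, x⁻¹ ∈ S} with hT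
  have step' : ∀ A : T, ∃ B : T, (∀ x ∈ B.1, ∀ y ∈ B.1, x * y ∈ A.1) ∧ B.1 ⊆ A.1 := by
    intro A
    obtain ⟨B, hB1, hB2, hB3⟩ := step A.1 A.2.1
    exact ⟨⟨B, hB1⟩, hB2, hB3⟩
  choose next hnext1 hnext2 using step'
  obtain ⟨W0', hW0'1, hW0'2, hW0'3⟩ := step W hW
  set W0 : T := ⟨W0', hW0'1⟩ with hW0
  set Wc : ℕ → T := fun n => next^[n] W0 with hWc
  have hWcsucc : ∀ n, Wc (n + 1) = next (Wc n) := fun n => Function.iterate_succ_apply' next n W0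
  have hWcnhds : ∀ n, (Wc n).1 ∈ 𝓝 (1 : G) := fun n => (Wc n).2.1
  have hWcsymm : ∀ n, ∀ x ∈ (Wc n).1, x⁻¹ ∈ (Wc n).1 := fun n => (Wc n).2.2
  have hWcmul : ∀ n, ∀ x ∈ (Wc (n+1)).1, ∀ y ∈ (Wc (n+1)).1, x * y ∈ (Wc n).1 := by
    intro n; rw [hWcsucc n]; exact hnext1 (Wc n)
  have hWcsub : ∀ n, (Wc (n+1)).1 ⊆ (Wc n).1 := by
    intro n; rw [hWcsucc n]; exact hnext2 (Wc n)
  -- the chain of entourages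
  set U : ℕ → Set (G × G) := fun n => {p : G × G | p.1 * p.2⁻¹ ∈ (Wc n).1} with hU
  obtain ⟨d, hd0, hdnn, hdsymm, hdtri, hd1, hd2⟩ := exists_dist_of_chain U
    (fun n x => by simp [hU, mem_of_mem_nhds (hWcnhds n)])
    (fun n x y hxy => by
      have := hWcsymm n _ hxy
      simpa [hU, mul_inv_rev] using this)
    (fun n x y z h1 h2 => by
      have := hWcmul n _ h1 _ h2
      simpa [hU, mul_assoc] using this)
    (fun n p hp => hWcsub n hp)
  obtain ⟨ε₀, hε₀, hball⟩ := hd1 0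
  set ψ : G → ℝ := fun y => max 0 (1 - d y 1 / ε₀) with hψ
  have hdist_cont : Continuous fun y : G => d y 1 := by
    rw [continuous_iff_continuousAt]
    intro y₀
    rw [ContinuousAt, Metric.tendsto_nhds]
    intro δ hδ
    obtain ⟨n, hn⟩ := hd2 δ hδ
    have hmem : {y : G | y * y₀⁻¹ ∈ (Wc n).1} ∈ 𝓝 y₀ := by
      have hc : ContinuousAt (fun y : G => y * y₀⁻¹) y₀ := (continuous_mul_right y₀⁻¹).continuousAt
      exact hc.preimage_mem_nhds (by simpa using hWcnhds n)
    filter_upwards [hmem] with y hy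
    have hdy : d y y₀ < δ := hn y y₀ hy
    have h1 : d y 1 ≤ d y y₀ + d y₀ 1 := hdtri y y₀ 1
    have h2 : d y₀ 1 ≤ d y₀ y + d y 1 := hdtri y₀ y 1
    rw [Real.dist_eq, abs_lt]
    constructor
    · nlinarith [hdsymm y y₀]
    · nlinarith [hdsymm y y₀]
  refine ⟨ψ, ?_, ?_, fun y => le_max_left _ _, ?_, ?_⟩
  · exact continuous_const.max (continuous_const.sub (hdist_cont.div_const ε₀))
  · simp [hψ, hd0]
  · intro y
    have : d y 1 / ε₀ ≥ 0 := div_nonneg (hdnn y 1) hε₀.le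
    simp only [hψ]
    rw [max_le_iff]
    constructor <;> linarith
  · intro y hy
    have : ¬ d y 1 < ε₀ := by
      intro hlt
      have := hball y 1 hlt
      simp only [hU, Set.mem_setOf_eq, inv_one, mul_one] at this
      exact hy (hW0'3 this)
    have h2 : 1 - d y 1 / ε₀ ≤ 0 := by
      rw [not_lt] at this
      have : ε₀ / ε₀ ≤ d y 1 / ε₀ := by gcongr
      rw [div_self hε₀.ne'] at this
      linarith
    simp [hψ, max_eq_left h2]

/-- Pointwise formulation of total boundedness used in this file. -/
def VTB (S : Set G) : Prop :=
  ∀ V ∈ 𝓝 (1 : G), ∃ F : Finset G, ∀ s ∈ S, ∃ v ∈ V, ∃ f ∈ (F : Set G), s = v * f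

lemma VTB.mono {S S' : Set G} (h : S' ⊆ S) (hS : VTB S) : VTB S' := by
  intro V hV
  obtain ⟨F, hF⟩ := hS V hV
  exact ⟨F, fun s hs => hF s (h hs)⟩

lemma VTB.singleton (a : G) : VTB ({a} : Set G) := by
  intro V hV
  refine ⟨{a}, fun s hs => ⟨1, mem_of_mem_nhds hV, a, by simp, ?_⟩⟩
  rw [Set.mem_singleton_iff] at hs
  simp [hs]

lemma VTB.union {S S' : Set G} (hS : VTB S) (hS' : VTB S') : VTB (S ∪ S') := by
  intro V hV
  obtain ⟨F, hF⟩ := hS V hV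
  obtain ⟨F', hF'⟩ := hS' V hV
  classical
  refine ⟨F ∪ F', fun s hs => ?_⟩
  rcases hs with hs | hs
  · obtain ⟨v, hv, f, hf, hE⟩ := hF s hs
    exact ⟨v, hv, f, by simp at hf ⊢; exact Or.inl hf, hE⟩
  · obtain ⟨v, hv, f, hf, hE⟩ := hF' s hs
    exact ⟨v, hv, f, by simp at hf ⊢; exact Or.inr hf, hE⟩

lemma VTB.mul {S S' : Set G} (hS : VTB S) (hS' : VTB S') :
    VTB {g | ∃ s ∈ S, ∃ s' ∈ S', g = s * s'} := by
  classical
  intro V hV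
  obtain ⟨Q, hQnhds, hQmul⟩ := exists_nhds_one_split hV
  obtain ⟨F, hF⟩ := hS Q hQnhds
  -- for each f, a cover of S' adapted to conjugation by f
  have hconj : ∀ f : G, {x : G | f * x * f⁻¹ ∈ Q} ∈ 𝓝 (1 : G) := by
    intro f
    have hc : ContinuousAt (fun x : G => f * x * f⁻¹) 1 :=
      ((continuous_mul_left f).mul continuous_const).continuousAt
    have := hc.preimage_mem_nhds (by simpa using hQnhds)
    simpa [Set.preimage] using this
  have hch : ∀ f : G, ∃ E : Finset G, ∀ s ∈ S', ∃ v ∈ {x : G | f * x * f⁻¹ ∈ Q},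
      ∃ e ∈ (E : Set G), s = v * e := fun f => hS' _ (hconj f)
  choose E hE using hch
  refine ⟨F.biUnion (fun f => (E f).image (f * ·)), ?_⟩
  rintro g ⟨s, hs, s', hs', rfl⟩
  obtain ⟨v, hv, f, hf, rfl⟩ := hF s hs
  obtain ⟨w, hw, e, he, rfl⟩ := hE f s' hs'
  refine ⟨v * (f * w * f⁻¹), hQmul v hv _ hw, f * e, ?_, by group⟩
  simp only [Finset.coe_biUnion, Set.mem_iUnion, Finset.coe_image, Set.mem_image]
  exact ⟨f, hf, e, he, rfl⟩

lemma VTB.mul_right {S : Set G} (hS : VTB S) (a : G) : VTB {g | ∃ s ∈ S, g = s * a} := by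
  have := hS.mul (VTB.singleton a)
  apply VTB.mono _ this
  rintro g ⟨s, hs, rfl⟩
  exact ⟨s, hs, a, rfl, rfl⟩

lemma card_bound_of_cover {D S V' R : Set G} {F : Finset G}
    (hcov : ∀ s ∈ S, ∃ v ∈ V', ∃ f ∈ (F : Set G), s = v * f)
    (hV'R : ∀ a ∈ V', ∀ b ∈ V', a * b⁻¹ ∈ R)
    (hsep : ∀ d₁ ∈ D, ∀ d₂ ∈ D, d₂ * d₁⁻¹ ∈ R → d₂ = d₁) :
    (D ∩ S).Finite ∧ (D ∩ S).ncard ≤ F.card := by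
  classical
  choose v hv f hf he using hcov
  set φ : G → G := fun d => if h : d ∈ S then f d h else 1 with hφ
  have hinj : Set.InjOn φ (D ∩ S) := by
    rintro d₁ ⟨hd₁D, hd₁S⟩ d₂ ⟨hd₂D, hd₂S⟩ hEq
    simp only [hφ, dif_pos hd₁S, dif_pos hd₂S] at hEq
    have h₁ := he d₁ hd₁S
    have h₂ := he d₂ hd₂S
    have hv₁ := hv d₁ hd₁S
    have hv₂ := hv d₂ hd₂S
    rw [hEq] at h₁
    set a₁ := v d₁ hd₁S with ha₁
    set a₂ := v d₂ hd₂S with ha₂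
    set b := f d₂ hd₂S with hb
    have : d₂ * d₁⁻¹ ∈ R := by
      rw [h₁, h₂]
      have hgrp : a₂ * b * (a₁ * b)⁻¹ = a₂ * a₁⁻¹ := by group
      rw [hgrp]
      exact hV'R _ hv₂ _ hv₁
    exact (hsep d₁ hd₁D d₂ hd₂D this).symm
  have himg : φ '' (D ∩ S) ⊆ (F : Set G) := by
    rintro x ⟨d, ⟨-, hdS⟩, rfl⟩
    simp only [hφ, dif_pos hdS]
    exact hf d hdS
  have hfin : (D ∩ S).Finite :=
    Set.Finite.of_finite_image (F.finite_toSet.subset himg) hinj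
  refine ⟨hfin, ?_⟩
  calc (D ∩ S).ncard = (φ '' (D ∩ S)).ncard := (Set.ncard_image_of_injOn hinj).symm
    _ ≤ (F : Set G).ncard := Set.ncard_le_ncard himg F.finite_toSet
    _ = F.card := Set.ncard_coe_finset F

lemma card_bound_translate {D K R : Set G} (hK : VTB K) (hR : R ∈ 𝓝 (1 : G))
    (hsep : ∀ d₁ ∈ D, ∀ d₂ ∈ D, d₂ * d₁⁻¹ ∈ R → d₂ = d₁) :
    ∃ N : ℕ, ∀ a : G, (D ∩ {g | ∃ k ∈ K, g = k * a}).Finite ∧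
      (D ∩ {g | ∃ k ∈ K, g = k * a}).ncard ≤ N := by
  classical
  obtain ⟨V', hV'nhds, hV'⟩ := exists_nhds_split_inv hR
  obtain ⟨F, hF⟩ := hK V' hV'nhds
  refine ⟨F.card, fun a => ?_⟩
  have hcov : ∀ s ∈ {g | ∃ k ∈ K, g = k * a}, ∃ x ∈ V', ∃ y ∈ ((F.image (· * a)) : Set G),
      s = x * y := by
    rintro s ⟨k, hk, rfl⟩
    obtain ⟨x, hx, y, hy, rfl⟩ := hF k hk
    refine ⟨x, hx, y * a, ?_, by group⟩
    simp only [Finset.coe_image, Set.mem_image]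
    exact ⟨y, hy, rfl⟩
  have := card_bound_of_cover hcov (fun x hx y hy => by
    have := hV' x hx y hy; rwa [div_eq_mul_inv] at this) hsep
  exact ⟨this.1, le_trans this.2 (Finset.card_image_le)⟩

lemma exists_maximal_separated {R : Set G} (hR : R ∈ 𝓝 (1 : G))
    (hRsymm : ∀ x ∈ R, x⁻¹ ∈ R) :
    ∃ D : Set G, (∀ d₁ ∈ D, ∀ d₂ ∈ D, d₂ * d₁⁻¹ ∈ R → d₂ = d₁) ∧
      (∀ y : G, ∃ d ∈ D, y * d⁻¹ ∈ R) := by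
  classical
  set 𝒮 : Set (Set G) := {D | ∀ d₁ ∈ D, ∀ d₂ ∈ D, d₂ * d₁⁻¹ ∈ R → d₂ = d₁} with h𝒮
  obtain ⟨D, hDmax⟩ := zorn_subset 𝒮 (by
    intro c hc hchain
    refine ⟨⋃₀ c, ?_, fun s hs => Set.subset_sUnion_of_mem hs⟩
    intro d₁ hd₁ d₂ hd₂ hR'
    obtain ⟨s₁, hs₁, hd₁'⟩ := hd₁
    obtain ⟨s₂, hs₂, hd₂'⟩ := hd₂
    rcases hchain.total hs₁ hs₂ with h | h
    · exact hc hs₂ d₁ (h hd₁') d₂ hd₂' hR'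
    · exact hc hs₁ d₁ hd₁' d₂ (h hd₂') hR')
  refine ⟨D, hDmax.prop, ?_⟩
  intro y
  by_contra hy
  push_neg at hy
  have hyD : y ∉ D := by
    intro hyD
    exact (hy y hyD) (by simpa using mem_of_mem_nhds hR)
  have hins : insert y D ∈ 𝒮 := by
    intro d₁ hd₁ d₂ hd₂ hR'
    rcases hd₁ with rfl | hd₁ <;> rcases hd₂ with rfl | hd₂
    · rfl
    · exact absurd (hRsymm _ (by simpa using hR')) (by simpa [mul_inv_rev] using hy d₂ hd₂)
    · exact absurd hR' (hy d₁ hd₁)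
    · exact hDmax.prop d₁ hd₁ d₂ hd₂ hR'
  have := hDmax.2 hins (Set.subset_insert y D)
  exact hyD (this (Set.mem_insert y D))

lemma exists_coloring_s5 {α : Type*} (Adj : α → α → Prop) (hsymm : ∀ a b, Adj a b → Adj b a)
    (hirr : ∀ a, ¬ Adj a a) (N : ℕ)
    (hdeg : ∀ a, {b | Adj a b}.Finite ∧ {b | Adj a b}.ncard ≤ N) :
    ∃ c : α → Fin (N + 1), ∀ a b, Adj a b → c a ≠ c b := by
  classical
  set 𝒮 : Set (Set (α × Fin (N + 1))) :=
    {σ | (∀ p ∈ σ, ∀ q ∈ σ, (p : α × Fin (N+1)).1 = (q : α × Fin (N+1)).1 → p = q) ∧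
      (∀ p ∈ σ, ∀ q ∈ σ, Adj (p : α × Fin (N+1)).1 (q : α × Fin (N+1)).1 → p.2 ≠ q.2)} with h𝒮
  obtain ⟨σ, hσmax⟩ := zorn_subset 𝒮 (by
    intro c hc hchain
    refine ⟨⋃₀ c, ⟨?_, ?_⟩, fun s hs => Set.subset_sUnion_of_mem hs⟩
    · rintro p ⟨s₁, hs₁, hp⟩ q ⟨s₂, hs₂, hq⟩ hEq
      rcases hchain.total hs₁ hs₂ with h | h
      · exact (hc hs₂).1 p (h hp) q hq hEq
      · exact (hc hs₁).1 p hp q (h hq) hEq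
    · rintro p ⟨s₁, hs₁, hp⟩ q ⟨s₂, hs₂, hq⟩ hAdj
      rcases hchain.total hs₁ hs₂ with h | h
      · exact (hc hs₂).2 p (h hp) q hq hAdj
      · exact (hc hs₁).2 p hp q (h hq) hAdj)
  -- the partial coloring as a function
  set κ : α → Fin (N + 1) := fun a => if h : ∃ i, (a, i) ∈ σ then h.choose else 0 with hκ
  have hκ_spec : ∀ a i, (a, i) ∈ σ → κ a = i := by
    intro a i hai
    have hex : ∃ j, (a, j) ∈ σ := ⟨i, hai⟩
    have := hσmax.prop.1 _ hex.choose_spec _ hai rfl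
    simp only [hκ, dif_pos hex]
    exact congrArg Prod.snd this
  -- every vertex is colored
  have htotal : ∀ a, ∃ i, (a, i) ∈ σ := by
    intro a
    by_contra ha
    push_neg at ha
    -- colors used by neighbors
    set C : Set (Fin (N + 1)) := {i | ∃ b, Adj a b ∧ (b, i) ∈ σ} with hC
    have hCsub : C ⊆ κ '' {b | Adj a b} := by
      rintro i ⟨b, hab, hbi⟩
      exact ⟨b, hab, hκ_spec b i hbi⟩
    have hCcard : C.ncard ≤ N := by
      calc C.ncard ≤ (κ '' {b | Adj a b}).ncard :=
            Set.ncard_le_ncard hCsub ((hdeg a).1.image κ)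
        _ ≤ {b | Adj a b}.ncard := Set.ncard_image_le (hdeg a).1
        _ ≤ N := (hdeg a).2
    have : ∃ i : Fin (N + 1), i ∉ C := by
      by_contra hall
      push_neg at hall
      have : (Set.univ : Set (Fin (N + 1))) ⊆ C := fun i _ => hall i
      have := Set.ncard_le_ncard this (Set.toFinite C)
      rw [Set.ncard_univ] at this
      simp [Nat.card_eq_fintype_card] at this
      omega
    obtain ⟨i₀, hi₀⟩ := this
    have hins : insert (a, i₀) σ ∈ 𝒮 := by
      constructor
      · rintro p (rfl | hp) q (rfl | hq) hEq
        · rfl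
        · simp only at hEq
          exact absurd (show (a, q.2) ∈ σ by rw [hEq]; exact hq) (ha q.2)
        · simp only at hEq
          exact absurd (show (a, p.2) ∈ σ by rw [← hEq]; exact hp) (ha p.2)
        · exact hσmax.prop.1 p hp q hq hEq
      · rintro p (rfl | hp) q (rfl | hq) hAdj
        · exact absurd hAdj (hirr a)
        · intro hEq
          simp only at hEq hAdj
          exact hi₀ ⟨q.1, hAdj, show (q.1, i₀) ∈ σ by rw [hEq]; exact hq⟩
        · intro hEq
          simp only at hEq hAdj
          exact hi₀ ⟨p.1, hsymm _ _ hAdj, show (p.1, i₀) ∈ σ by rw [← hEq]; exact hp⟩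
        · exact hσmax.prop.2 p hp q hq hAdj
    have := hσmax.2 hins (Set.subset_insert _ σ)
    exact ha i₀ (this (Set.mem_insert _ σ))
  refine ⟨κ, fun a b hab => ?_⟩
  obtain ⟨i, hi⟩ := htotal a
  obtain ⟨j, hj⟩ := htotal b
  rw [hκ_spec a i hi, hκ_spec b j hj]
  exact hσmax.prop.2 (a, i) hi (b, j) hj hab

end Group
end VeechAux

/-- Corollary 5.7.1: Veech's theorem for locally totally bounded Hausdorff topological
groups — `G` acts freely on its LUC-compactification. -/
theorem stmt5 {G : Type*} [Group G] [TopologicalSpace G] [IsTopologicalGroup G] [T2Space G]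
    (hltb : ∃ U ∈ nhds (1 : G), ∀ V ∈ nhds (1 : G),
      ∃ F : Finset G, (F : Set G) ⊆ U ∧ U ⊆ V * (F : Set G)) :
    ∀ t : G, t ≠ 1 →
      ∀ μ : WeakDual ℂ (BoundedContinuousFunction G ℂ),
        μ ∈ closure {ν : WeakDual ℂ (BoundedContinuousFunction G ℂ) |
          ∃ s : G, ∀ h : BoundedContinuousFunction G ℂ, ν h = h s} →
        ∃ f g : BoundedContinuousFunction G ℂ,
          (∀ x : G, g x = f (t * x)) ∧ μ g ≠ μ f := by
  classical
  intro t ht μ hμ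
  by_contra hcon
  push_neg at hcon
  obtain ⟨U, hU, hUtb⟩ := hltb
  have hUtb' : VTB U := by
    intro V hV
    obtain ⟨F, -, hF⟩ := hUtb V hV
    refine ⟨F, fun s hs => ?_⟩
    obtain ⟨v, hv, f, hf, hvf⟩ := Set.mem_mul.1 (hF hs)
    exact ⟨v, hv, f, hf, hvf.symm⟩
  -- a small symmetric neighborhood W₁ of 1 inside U with t ∉ W₁ * W₁
  have hctc : ({t}ᶜ : Set G) ∈ nhds (1 : G) :=
    isOpen_compl_singleton.mem_nhds (by simpa using ht.symm)
  obtain ⟨A, hA, hAmul⟩ := exists_nhds_one_split hctc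
  set B : Set G := A ∩ U with hB
  have hBnhds : B ∈ nhds (1 : G) := Filter.inter_mem hA hU
  set W₁ : Set G := B ∩ B⁻¹ with hW₁
  have hW₁nhds : W₁ ∈ nhds (1 : G) := Filter.inter_mem hBnhds (inv_mem_nhds_one G hBnhds)
  have hW₁symm : ∀ x ∈ W₁, x⁻¹ ∈ W₁ := by
    rintro x ⟨hx1, hx2⟩
    exact ⟨by rwa [Set.mem_inv] at hx2, by simpa [Set.mem_inv] using hx1⟩
  have hW₁U : W₁ ⊆ U := fun x hx => hx.1.2
  have hW₁t : ∀ a ∈ W₁, ∀ b ∈ W₁, a * b ≠ t := by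
    intro a ha b hb
    have := hAmul a ha.1.1 b hb.1.1
    simpa using this
  have hW₁tb : VTB W₁ := hUtb'.mono hW₁U
  have h1W₁ : (1 : G) ∈ W₁ := mem_of_mem_nhds hW₁nhds
  -- the bump function
  obtain ⟨ψ, hψcont, hψ1, hψ0, hψle1, hψout⟩ := exists_bump hW₁nhds
  have hψW₁ : ∀ y : G, ψ y ≠ 0 → y ∈ W₁ := by
    intro y hy
    by_contra h
    exact hy (hψout y h)
  -- the symmetric neighborhood R
  set R : Set G := {y | 1/2 < ψ y ∧ 1/2 < ψ y⁻¹} with hR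
  have hRnhds : R ∈ nhds (1 : G) := by
    have hopen : IsOpen R :=
      (isOpen_Ioi.preimage hψcont).inter (isOpen_Ioi.preimage (hψcont.comp continuous_inv))
    refine hopen.mem_nhds ?_
    constructor <;> · simp only [inv_one, hψ1]; norm_num
  have hRsymm : ∀ x ∈ R, x⁻¹ ∈ R := by
    rintro x ⟨h1, h2⟩
    exact ⟨h2, by simpa using h1⟩
  have hRW₁ : R ⊆ W₁ := by
    rintro x ⟨h1, -⟩
    refine hψW₁ x (by linarith)
  -- maximal R-separated set D
  obtain ⟨D, hDsep, hDcov⟩ := exists_maximal_separated hRnhds hRsymm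
  -- the totally bounded sets K, K', K₂
  set K : Set G := {g | ∃ a ∈ W₁, ∃ b ∈ W₁, g = a * t * b} with hK
  set K' : Set G := {g | ∃ a ∈ W₁, ∃ b ∈ W₁, g = a * t⁻¹ * b} with hK'
  have hKtb : VTB K := by
    refine VTB.mono ?_ ((hW₁tb.mul (VTB.singleton t)).mul hW₁tb)
    rintro g ⟨a, ha, b, hb, rfl⟩
    exact ⟨a * t, ⟨a, ha, t, rfl, rfl⟩, b, hb, rfl⟩
  have hK'tb : VTB K' := by
    refine VTB.mono ?_ ((hW₁tb.mul (VTB.singleton t⁻¹)).mul hW₁tb)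
    rintro g ⟨a, ha, b, hb, rfl⟩
    exact ⟨a * t⁻¹, ⟨a, ha, t⁻¹, rfl, rfl⟩, b, hb, rfl⟩
  -- degree bound N and multiplicity bound M
  obtain ⟨N, hN⟩ := card_bound_translate (hKtb.union hK'tb) hRnhds hDsep
  obtain ⟨M, hM⟩ := card_bound_translate (hW₁tb.mul hW₁tb) hRnhds hDsep
  -- adjacency and coloring
  set Adj : G → G → Prop := fun a b => a ∈ D ∧ b ∈ D ∧ a ≠ b ∧ (a * b⁻¹ ∈ K ∨ b * a⁻¹ ∈ K)
    with hAdj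
  have hAdjsymm : ∀ a b, Adj a b → Adj b a := by
    rintro a b ⟨h1, h2, h3, h4⟩
    exact ⟨h2, h1, h3.symm, h4.symm⟩
  have hAdjirr : ∀ a, ¬ Adj a a := by
    rintro a ⟨-, -, h, -⟩
    exact h rfl
  have hAdjdeg : ∀ a, {b | Adj a b}.Finite ∧ {b | Adj a b}.ncard ≤ N := by
    intro a
    have hsub : {b | Adj a b} ⊆ D ∩ {g | ∃ k ∈ K ∪ K', g = k * a} := by
      rintro b ⟨haD, hbD, hne, hK1 | hK2⟩
      · refine ⟨hbD, b * a⁻¹, ?_, by group⟩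
        obtain ⟨x, hx, y, hy, hxy⟩ := hK1
        refine Or.inr ⟨y⁻¹, hW₁symm y hy, x⁻¹, hW₁symm x hx, ?_⟩
        have : b * a⁻¹ = (a * b⁻¹)⁻¹ := by group
        rw [this, hxy]; group
      · exact ⟨hbD, b * a⁻¹, Or.inl hK2, by group⟩
    exact ⟨(hN a).1.subset hsub, le_trans (Set.ncard_le_ncard hsub (hN a).1) (hN a).2⟩
  obtain ⟨c, hc⟩ := exists_coloring_s5 Adj hAdjsymm hAdjirr N hAdjdeg
  -- the functions Φ i
  set Φ : Fin (N + 1) → G → ℝ := fun i y => ∑ᶠ x ∈ {x ∈ D | c x = i}, ψ (y * x⁻¹) with hΦ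
  -- support control
  have hsupp : ∀ y₀ y : G, y * y₀⁻¹ ∈ W₁ → ∀ x ∈ D, ψ (y * x⁻¹) ≠ 0 →
      x ∈ D ∩ {g | ∃ k ∈ {g | ∃ a ∈ W₁, ∃ b ∈ W₁, g = a * b}, g = k * y₀} := by
    intro y₀ y hy x hxD hψx
    have hx : y * x⁻¹ ∈ W₁ := hψW₁ _ hψx
    refine ⟨hxD, (y * x⁻¹)⁻¹ * (y * y₀⁻¹), ⟨(y * x⁻¹)⁻¹, hW₁symm _ hx, y * y₀⁻¹, hy, rfl⟩, by group⟩
  -- evaluation of Φ as a finite sum near a base point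
  have hval : ∀ y₀ y : G, y * y₀⁻¹ ∈ W₁ → ∀ i, Φ i y =
      ∑ x ∈ ((hM y₀).1.toFinset.filter (fun x => c x = i)), ψ (y * x⁻¹) := by
    intro y₀ y hy i
    refine finsum_mem_eq_sum_of_subset _ ?_ ?_
    · rintro x ⟨⟨hxD, hxc⟩, hxs⟩
      rw [Finset.coe_filter]
      refine ⟨(hM y₀).1.mem_toFinset.2 (hsupp y₀ y hy x hxD hxs), hxc⟩
    · intro x hx
      rw [Finset.coe_filter] at hx
      obtain ⟨hx1, hx2⟩ := hx
      exact ⟨((hM y₀).1.mem_toFinset.1 hx1).1, hx2⟩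
  have hself : ∀ y : G, y * y⁻¹ ∈ W₁ := by intro y; simpa using h1W₁
  have hΦnn : ∀ i (y : G), 0 ≤ Φ i y := by
    intro i y
    rw [hval y y (hself y) i]
    exact Finset.sum_nonneg fun x _ => hψ0 _
  have hΦle : ∀ i (y : G), Φ i y ≤ M := by
    intro i y
    rw [hval y y (hself y) i]
    calc ∑ x ∈ ((hM y).1.toFinset.filter (fun x => c x = i)), ψ (y * x⁻¹)
        ≤ ∑ x ∈ ((hM y).1.toFinset.filter (fun x => c x = i)), 1 :=
          Finset.sum_le_sum fun x _ => hψle1 _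
      _ = ((hM y).1.toFinset.filter (fun x => c x = i)).card := by simp
      _ ≤ (hM y).1.toFinset.card := by
          exact_mod_cast Nat.cast_le.2 (Finset.card_filter_le _ _)
      _ ≤ M := by
          have := (hM y).2
          rw [Set.ncard_eq_toFinset_card _ (hM y).1] at this
          exact_mod_cast Nat.cast_le.2 this
  have hΦcont : ∀ i, Continuous (Φ i) := by
    intro i
    rw [continuous_iff_continuousAt]
    intro y₀
    have hΩ : {y : G | y * y₀⁻¹ ∈ W₁} ∈ nhds y₀ :=
      (continuous_mul_right y₀⁻¹).continuousAt.preimage_mem_nhds (by simpa using hW₁nhds)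
    have hcsum : Continuous fun y : G =>
        ∑ x ∈ ((hM y₀).1.toFinset.filter (fun x => c x = i)), ψ (y * x⁻¹) :=
      continuous_finset_sum _ fun x _ => hψcont.comp (continuous_mul_right x⁻¹)
    refine ContinuousAt.congr hcsum.continuousAt ?_
    filter_upwards [hΩ] with y hy
    exact (hval y₀ y hy i).symm
  -- pointwise separation
  have hlow : ∀ s : G, ∃ i, 1/2 < Φ i s ∧ Φ i (t * s) = 0 := by
    intro s
    obtain ⟨d, hdD, hsd⟩ := hDcov s
    have hrW : s * d⁻¹ ∈ W₁ := hRW₁ hsd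
    refine ⟨c d, ?_, ?_⟩
    · rw [hval s s (hself s) (c d)]
      have hdmem : d ∈ (hM s).1.toFinset.filter (fun x => c x = c d) := by
        rw [Finset.mem_filter]
        refine ⟨(hM s).1.mem_toFinset.2 ⟨hdD, (s * d⁻¹)⁻¹ * 1,
          ⟨(s * d⁻¹)⁻¹, hW₁symm _ hrW, 1, h1W₁, rfl⟩, by group⟩, rfl⟩
      calc (1:ℝ)/2 < ψ (s * d⁻¹) := hsd.1
        _ ≤ _ := Finset.single_le_sum (f := fun x => ψ (s * x⁻¹)) (fun x _ => hψ0 _) hdmem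
    · refine finsum_mem_eq_zero_of_forall_eq_zero ?_
      rintro x ⟨hxD, hxc⟩
      by_contra hne
      have hw : t * s * x⁻¹ ∈ W₁ := hψW₁ _ (by simpa [mul_assoc] using hne)
      have hkey : x * d⁻¹ = (t * s * x⁻¹)⁻¹ * t * (s * d⁻¹) := by group
      by_cases hxd : x = d
      · subst hxd
        have hteq : (t * s * x⁻¹) * (s * x⁻¹)⁻¹ = t := by group
        exact hW₁t _ hw _ (hW₁symm _ hrW) hteq
      · have hAdjxd : Adj x d :=
          ⟨hxD, hdD, hxd, Or.inl ⟨(t * s * x⁻¹)⁻¹, hW₁symm _ hw, s * d⁻¹, hrW, by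
            rw [hkey]⟩⟩
        exact (hc x d hAdjxd) (by rw [hxc])
  -- the bounded continuous functions
  set fC : Fin (N + 1) → BoundedContinuousFunction G ℂ := fun i =>
    BoundedContinuousFunction.ofNormedAddCommGroup (fun y => (Φ i y : ℂ))
      (Complex.continuous_ofReal.comp (hΦcont i)) M
      (fun y => by
        rw [Complex.norm_real]
        rw [Real.norm_eq_abs, abs_of_nonneg (hΦnn i y)]
        exact hΦle i y) with hfC
  set gC : Fin (N + 1) → BoundedContinuousFunction G ℂ := fun i =>
    (fC i).compContinuous ⟨fun x => t * x, continuous_mul_left t⟩ with hgC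
  have hgf : ∀ i (x : G), gC i x = fC i (t * x) := fun i x => rfl
  have hμeq : ∀ i, μ (gC i) = μ (fC i) := fun i => hcon (fC i) (gC i) (hgf i)
  -- the weak-* open neighborhood
  set O : Set (WeakDual ℂ (BoundedContinuousFunction G ℂ)) :=
    ⋂ i : Fin (N + 1), {ν | ‖ν (gC i - fC i)‖ < 1/4} with hO
  have hOopen : IsOpen O := by
    refine isOpen_iInter_of_finite fun i => ?_
    have : Continuous fun ν : WeakDual ℂ (BoundedContinuousFunction G ℂ) =>
        ‖ν (gC i - fC i)‖ := (WeakDual.eval_continuous (gC i - fC i)).norm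
    exact isOpen_Iio.preimage this
  have hμO : μ ∈ O := by
    refine Set.mem_iInter.2 fun i => ?_
    show ‖μ (gC i - fC i)‖ < 1/4
    rw [map_sub, hμeq i, sub_self, norm_zero]
    norm_num
  obtain ⟨ν, hνO, s, hνs⟩ := _root_.mem_closure_iff.1 hμ O hOopen hμO
  obtain ⟨i, hi1, hi2⟩ := hlow s
  have hν := Set.mem_iInter.1 hνO i
  rw [Set.mem_setOf_eq, hνs (gC i - fC i)] at hν
  have hsub : (gC i - fC i) s = ((Φ i (t * s) - Φ i s : ℝ) : ℂ) := by
    simp only [BoundedContinuousFunction.coe_sub, Pi.sub_apply]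
    rw [hgf i s]
    push_cast
    rfl
  rw [hsub, Complex.norm_real, Real.norm_eq_abs, hi2] at hν
  rw [abs_of_nonpos (by linarith)] at hν
  linarith
end

section
/- Consider the additive group ℤ^ℤ of all functions ℤ → ℤ under pointwise addition, equipped with the product topology where ℤ carries the discrete topology. Then: (1) ℤ^ℤ is locally quasi-totally bounded, i.e., for every t ≠ 0 there is a symmetric neighborhood V of 0 (V = −V) such that (t + V + V + V) ∩ (V + V + V) = ∅ and there is a finite set F ⊆ ℤ^ℤ with ((V+V+V) + t + (V+V+V) − t) ∪ ((V+V+V) − t + (V+V+V) + t) ⊆ V + F; but (2) ℤ^ℤ is not locally totally bounded: there is no neighborhood U of 0 such that for every neighborhood V of 0 there is a finite set F with U ⊆ V + F. -/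
open scoped Pointwise

/-- The subgroup of functions vanishing at `x₀` is a neighborhood of `0`. -/
lemma vanish_mem_nhds (x₀ : ℤ) : {f : ℤ → ℤ | f x₀ = 0} ∈ nhds (0 : ℤ → ℤ) := by
  have : IsOpen {f : ℤ → ℤ | f x₀ = 0} := by
    have : {f : ℤ → ℤ | f x₀ = 0} = (fun f : ℤ → ℤ => f x₀) ⁻¹' {0} := by
      ext f; simp
    rw [this]
    exact (continuous_apply x₀).isOpen_preimage _ (isOpen_discrete _)
  exact this.mem_nhds (by simp)

lemma mem_vanish_add {x₀ : ℤ} {A B : Set (ℤ → ℤ)} {f : ℤ → ℤ}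
    (hA : ∀ g ∈ A, g x₀ = 0) (hB : ∀ g ∈ B, g x₀ = 0) (hf : f ∈ A + B) :
    f x₀ = 0 := by
  obtain ⟨a, ha, b, hb, rfl⟩ := hf
  simp [hA a ha, hB b hb]

/-- Example 5.4.5(1): the additive group `ℤ^ℤ` with the product topology (each factor
discrete) is locally quasi-totally bounded but not locally totally bounded. -/
theorem stmt6 :
    (∀ t : ℤ → ℤ, t ≠ 0 → ∃ V ∈ nhds (0 : ℤ → ℤ), -V = V ∧
      ((({t} : Set (ℤ → ℤ)) + V + V + V) ∩ (V + V + V) = ∅) ∧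
      ∃ F : Finset (ℤ → ℤ),
        ((V + V + V + ({t} : Set (ℤ → ℤ)) + (V + V + V) + ({-t} : Set (ℤ → ℤ))) ∪
          (V + V + V + ({-t} : Set (ℤ → ℤ)) + (V + V + V) + ({t} : Set (ℤ → ℤ))))
            ⊆ V + (F : Set (ℤ → ℤ))) ∧
    ¬ ∃ U ∈ nhds (0 : ℤ → ℤ), ∀ V ∈ nhds (0 : ℤ → ℤ),
        ∃ F : Finset (ℤ → ℤ), U ⊆ V + (F : Set (ℤ → ℤ)) := by
  constructor
  · intro t ht
    obtain ⟨x₀, hx₀⟩ : ∃ x, t x ≠ 0 := by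
      by_contra h
      push_neg at h
      exact ht (funext fun x => h x)
    set V : Set (ℤ → ℤ) := {f | f x₀ = 0} with hVdef
    have hVmem : ∀ g ∈ V, g x₀ = 0 := fun g hg => hg
    refine ⟨V, vanish_mem_nhds x₀, ?_, ?_, ?_⟩
    · ext f
      simp only [Set.mem_neg, hVdef, Set.mem_setOf_eq, Pi.neg_apply, neg_eq_zero]
    · ext f
      simp only [Set.mem_inter_iff, Set.mem_empty_iff_false, iff_false, not_and]
      intro h1 h2
      have hVV : f x₀ = 0 :=
        mem_vanish_add (fun g hg => mem_vanish_add hVmem hVmem hg) hVmem h2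
      obtain ⟨a, ha, b, hb, rfl⟩ := h1
      obtain ⟨c, hc, d, hd, rfl⟩ := ha
      obtain ⟨e, he, g, hg, rfl⟩ := hc
      simp only [Set.mem_singleton_iff] at he
      have : (e + g + d + b) x₀ = t x₀ := by
        simp [he, hVmem g hg, hVmem d hd, hVmem b hb]
      have hVV' : (e + g + d + b) x₀ = 0 := hVV
      rw [this] at hVV'
      exact hx₀ hVV'
    · refine ⟨{0}, ?_⟩
      intro f hf
      have hfV : f x₀ = 0 := by
        have hVVV : ∀ g ∈ V + V + V, g x₀ = 0 := fun g hg =>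
          mem_vanish_add (fun a ha => mem_vanish_add hVmem hVmem ha) hVmem hg
        have ht' : ∀ g ∈ ({t} : Set (ℤ → ℤ)), g x₀ = t x₀ := by
          intro g hg; simp only [Set.mem_singleton_iff] at hg; subst hg; rfl
        have hnt' : ∀ g ∈ ({-t} : Set (ℤ → ℤ)), g x₀ = -t x₀ := by
          intro g hg; simp only [Set.mem_singleton_iff] at hg; subst hg; simp
        rcases hf with hf | hf <;>
        · obtain ⟨a, ha, b, hb, rfl⟩ := hf
          obtain ⟨c, hc, d, hd, rfl⟩ := ha
          obtain ⟨e, he, g, hg, rfl⟩ := hc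
          simp only [Pi.add_apply]
          first
          | (rw [hVVV e he, ht' g (by exact hg), hVVV d hd, hnt' b hb]; ring)
          | (rw [hVVV e he, hnt' g (by exact hg), hVVV d hd, ht' b hb]; ring)
      refine ⟨f, hfV, 0, by simp, by simp⟩
  · rintro ⟨U, hU, h⟩
    rw [nhds_pi, Filter.mem_pi] at hU
    obtain ⟨I, hIfin, s, hs, hsub⟩ := hU
    obtain ⟨x₀, hx₀⟩ := hIfin.infinite_compl.nonempty
    have hV := vanish_mem_nhds x₀
    obtain ⟨F, hF⟩ := h _ hV
    -- the functions `g n` supported at `x₀` all lie in `U`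
    have hgU : ∀ n : ℤ, (fun x => if x = x₀ then n else 0) ∈ U := by
      intro n
      apply hsub
      intro i hi
      have : i ≠ x₀ := fun e => hx₀ (e ▸ hi)
      simp only [this, if_false]
      exact mem_of_mem_nhds (hs i)
    have key : ∀ n : ℤ, ∃ f ∈ (F : Set (ℤ → ℤ)), f x₀ = n := by
      intro n
      obtain ⟨v, hv, f, hf, hvf⟩ := hF (hgU n)
      refine ⟨f, hf, ?_⟩
      have hv0 : v x₀ = 0 := hv
      have := congrFun hvf x₀
      simpa [hv0] using this
    choose φ hφmem hφval using key
    have hinj : Function.Injective φ := by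
      intro a b hab
      rw [← hφval a, ← hφval b, hab]
    exact (Set.infinite_of_injective_forall_mem hinj hφmem) F.finite_toSet
end

section
/- Let T be a monoid with identity e carrying a topology, and let Y and Z be compact Hausdorff spaces each equipped with a T-action (e acts as the identity and (s·t)•w = s•(t•w)) which is separately continuous: for each t ∈ T the map w ↦ t•w is continuous, and for each point w the map t ↦ t•w is continuous. Let y₀ ∈ Y and z₀ ∈ Z have dense orbits: the closures of {t•y₀ : t ∈ T} and {t•z₀ : t ∈ T} equal Y and Z respectively. Then there exists a continuous surjective map φ : Y → Z with φ(t•y) = t•φ(y) for all t ∈ T, y ∈ Y, and φ(y₀) = z₀, if and only if for every continuous function F : Z → ℂ there exists a continuous function H : Y → ℂ such that F(t•z₀) = H(t•y₀) for all t ∈ T. -/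
/-- Theorem 3.1: for point-transitive compact dynamics `(Y, y₀)` and `(Z, z₀)` of a
monoid `T`, an extension `φ : (Y, y₀) → (Z, z₀)` exists iff `𝔽(Z, z₀) ⊆ 𝔽(Y, y₀)`. -/
theorem stmt7 {T Y Z : Type*} [Monoid T] [TopologicalSpace T]
    [TopologicalSpace Y] [CompactSpace Y] [T2Space Y] [MulAction T Y]
    [TopologicalSpace Z] [CompactSpace Z] [T2Space Z] [MulAction T Z]
    (hY1 : ∀ t : T, Continuous fun y : Y => t • y)
    (hY2 : ∀ y : Y, Continuous fun t : T => t • y)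
    (hZ1 : ∀ t : T, Continuous fun z : Z => t • z)
    (hZ2 : ∀ z : Z, Continuous fun t : T => t • z)
    (y₀ : Y) (z₀ : Z)
    (hy₀ : DenseRange fun t : T => t • y₀)
    (hz₀ : DenseRange fun t : T => t • z₀) :
    (∃ φ : Y → Z, Continuous φ ∧ Function.Surjective φ ∧
        (∀ (t : T) (y : Y), φ (t • y) = t • φ y) ∧ φ y₀ = z₀) ↔
      (∀ F : C(Z, ℂ), ∃ H : C(Y, ℂ), ∀ t : T, F (t • z₀) = H (t • y₀)) := by
  constructor
  · rintro ⟨φ, hc, hs, heq, hy⟩ F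
    refine ⟨F.comp ⟨φ, hc⟩, fun t => ?_⟩
    simp [heq, hy]
  · intro hF
    set S : Set (Y × Z) := Set.range (fun t : T => (t • y₀, t • z₀)) with hSdef
    set R : Set (Y × Z) := closure S with hRdef
    have hRclosed : IsClosed R := isClosed_closure
    -- uniqueness of the second coordinate
    have huniq : ∀ (y : Y) (z₁ z₂ : Z), (y, z₁) ∈ R → (y, z₂) ∈ R → z₁ = z₂ := by
      intro y z₁ z₂ h1 h2
      by_contra hne
      obtain ⟨f, hf1, hf2, -⟩ := exists_continuous_zero_one_of_isClosed
        (isClosed_singleton (x := z₁)) (isClosed_singleton (x := z₂))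
        (Set.disjoint_singleton.mpr hne)
      set F : C(Z, ℂ) := ⟨fun z => (f z : ℂ),
        Complex.continuous_ofReal.comp f.continuous⟩ with hFdef
      obtain ⟨H, hH⟩ := hF F
      have hsub : R ⊆ {p : Y × Z | F p.2 = H p.1} := by
        apply closure_minimal
        · rintro p ⟨t, rfl⟩
          exact hH t
        · exact isClosed_eq (F.continuous.comp continuous_snd)
            (H.continuous.comp continuous_fst)
      have e1 : F z₁ = H y := hsub h1
      have e2 : F z₂ = H y := hsub h2
      have e3 : ((f z₁ : ℝ) : ℂ) = ((f z₂ : ℝ) : ℂ) := e1.trans e2.symm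
      have a1 : f z₁ = 0 := hf1 rfl
      have a2 : f z₂ = 1 := hf2 rfl
      rw [a1, a2] at e3
      norm_num at e3
    -- totality
    have htot : ∀ y : Y, ∃ z : Z, (y, z) ∈ R := by
      intro y
      have hcomp : IsCompact R := hRclosed.isCompact
      have himg : IsClosed (Prod.fst '' R) := (hcomp.image continuous_fst).isClosed
      have hsub : Set.range (fun t : T => t • y₀) ⊆ Prod.fst '' R := by
        rintro _ ⟨t, rfl⟩
        exact ⟨(t • y₀, t • z₀), subset_closure ⟨t, rfl⟩, rfl⟩
      have hdense : Dense (Prod.fst '' R) := hy₀.mono hsub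
      have huniv : Prod.fst '' R = Set.univ := by
        rw [← himg.closure_eq]
        exact hdense.closure_eq
      have : y ∈ Prod.fst '' R := huniv ▸ Set.mem_univ y
      obtain ⟨⟨a, z⟩, hm, ha⟩ := this
      exact ⟨z, by rwa [← ha]⟩
    choose φ hφ using htot
    -- continuity
    have hcont : Continuous φ := by
      rw [continuous_iff_isClosed]
      intro C hC
      have hpre : φ ⁻¹' C = Prod.fst '' (R ∩ Set.univ ×ˢ C) := by
        ext y
        constructor
        · intro h
          exact ⟨(y, φ y), ⟨hφ y, ⟨trivial, h⟩⟩, rfl⟩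
        · rintro ⟨⟨a, b⟩, ⟨hm, -, hb⟩, rfl⟩
          have hb' : b = φ a := huniq a b (φ a) hm (hφ a)
          simpa [← hb'] using hb
      rw [hpre]
      exact ((hRclosed.isCompact.inter_right (isClosed_univ.prod hC)).image
        continuous_fst).isClosed
    -- R is stable under the diagonal action
    have hmapR : ∀ (t : T), ∀ p ∈ R, (t • p.1, t • p.2) ∈ R := by
      intro t p hp
      have hm : Continuous (fun q : Y × Z => (t • q.1, t • q.2)) :=
        ((hY1 t).comp continuous_fst).prodMk ((hZ1 t).comp continuous_snd)
      have hSS : (fun q : Y × Z => (t • q.1, t • q.2)) '' S ⊆ S := by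
        rintro _ ⟨_, ⟨s, rfl⟩, rfl⟩
        exact ⟨t * s, by simp [mul_smul]⟩
      have himg := (image_closure_subset_closure_image hm).trans (closure_mono hSS)
      exact himg ⟨p, hp, rfl⟩
    -- equivariance
    have hequiv : ∀ (t : T) (y : Y), φ (t • y) = t • φ y := by
      intro t y
      exact huniq (t • y) (φ (t • y)) (t • φ y) (hφ (t • y)) (hmapR t (y, φ y) (hφ y))
    -- base point
    have hbase : φ y₀ = z₀ := by
      have h0 : (y₀, z₀) ∈ R := subset_closure ⟨1, by simp⟩
      exact huniq y₀ (φ y₀) z₀ (hφ y₀) h0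
    -- orbit values
    have horb : ∀ t : T, φ (t • y₀) = t • z₀ := by
      intro t
      exact huniq (t • y₀) (φ (t • y₀)) (t • z₀) (hφ (t • y₀)) (subset_closure ⟨t, rfl⟩)
    -- surjectivity
    have hsurj : Function.Surjective φ := by
      have hclosed : IsClosed (Set.range φ) :=
        ((isCompact_range hcont)).isClosed
      have hsub : Set.range (fun t : T => t • z₀) ⊆ Set.range φ := by
        rintro _ ⟨t, rfl⟩
        exact ⟨t • y₀, horb t⟩
      have : Set.range φ = Set.univ := by
        rw [← hclosed.closure_eq]
        exact (hz₀.mono hsub).closure_eq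
      intro z
      exact (Set.eq_univ_iff_forall.mp this z)
    exact ⟨φ, hcont, hsurj, hequiv, hbase⟩
end

section
/- Let T be a monoid with identity e carrying a topology, let X be a compact Hausdorff space with a T-action (e acts as the identity, (s·t)•x = s•(t•x)) such that for every t ∈ T the map x ↦ t•x is continuous, and let x₀, x₁ ∈ X each have dense orbit in X. Then for every continuous function F : X → ℂ, the closure, in the product topology of ℂ^T (pointwise convergence), of the set {s ↦ F(s•(t•x₀)) : t ∈ T} equals the set {s ↦ F(s•y) : y ∈ X}, and likewise equals the closure of {s ↦ F(s•(t•x₁)) : t ∈ T}. -/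
lemma orbit_closure_eq {T X : Type*} [Monoid T] [TopologicalSpace T] [TopologicalSpace X]
    [CompactSpace X] [T2Space X] [MulAction T X]
    (hc : ∀ t : T, Continuous fun x : X => t • x)
    (x : X) (h : DenseRange fun t : T => t • x) (F : C(X, ℂ)) :
    closure {g : T → ℂ | ∃ t : T, g = fun s => F (s • (t • x))}
        = {g : T → ℂ | ∃ y : X, g = fun s => F (s • y)} := by
  set Φ : X → (T → ℂ) := fun y s => F (s • y) with hΦ
  have hΦc : Continuous Φ := continuous_pi fun s => F.continuous.comp (hc s)
  have hset : {g : T → ℂ | ∃ t : T, g = fun s => F (s • (t • x))}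
      = Φ '' Set.range (fun t : T => t • x) := by
    ext g
    constructor
    · rintro ⟨t, rfl⟩; exact ⟨t • x, ⟨t, rfl⟩, rfl⟩
    · rintro ⟨y, ⟨t, rfl⟩, rfl⟩; exact ⟨t, rfl⟩
  have hrange : {g : T → ℂ | ∃ y : X, g = fun s => F (s • y)} = Set.range Φ := by
    ext g; exact ⟨fun ⟨y, hy⟩ => ⟨y, hy.symm⟩, fun ⟨y, hy⟩ => ⟨y, hy.symm⟩⟩
  rw [hset, hrange]
  have hclosed : IsClosed (Set.range Φ) := (isCompact_range hΦc).isClosed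
  apply le_antisymm
  · exact closure_minimal (Set.image_subset_range _ _) hclosed
  · have : Set.range Φ = Φ '' closure (Set.range fun t : T => t • x) := by
      rw [h.closure_range, Set.image_univ]
    rw [this]
    exact (image_closure_subset_closure_image hΦc).trans le_rfl

/-- Lemma 2.4.3: for a compact semiflow with two transitive points `x₀, x₁`, the pointwise
closure of the orbit of `F^{x₀}` equals `F^𝒳 = {F^y : y ∈ X}` and likewise for `x₁`. -/
theorem stmt8 {T X : Type*} [Monoid T] [TopologicalSpace T] [TopologicalSpace X]
    [CompactSpace X] [T2Space X] [MulAction T X]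
    (hc : ∀ t : T, Continuous fun x : X => t • x)
    (x₀ x₁ : X)
    (h0 : DenseRange fun t : T => t • x₀)
    (h1 : DenseRange fun t : T => t • x₁)
    (F : C(X, ℂ)) :
    closure {g : T → ℂ | ∃ t : T, g = fun s => F (s • (t • x₀))}
        = {g : T → ℂ | ∃ y : X, g = fun s => F (s • y)} ∧
      closure {g : T → ℂ | ∃ t : T, g = fun s => F (s • (t • x₁))}
        = {g : T → ℂ | ∃ y : X, g = fun s => F (s • y)} := by
  exact ⟨orbit_closure_eq hc x₀ h0 F, orbit_closure_eq hc x₁ h1 F⟩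
end

section
/- Let T be a monoid with identity e carrying a topology, and let X be a compact Hausdorff space with a jointly continuous T-action (the map (t, x) ↦ t•x from T × X to X is continuous, e•x = x, (s·t)•x = s•(t•x)). Then for every continuous F : X → ℂ and every x₀ ∈ X, the function f : T → ℂ, f(t) = F(t•x₀), is left-uniformly continuous: for every t₀ ∈ T and every ε > 0 there is a neighborhood W of t₀ in T such that |F(t•(s•x₀)) − F(t₀•(s•x₀))| < ε for all t ∈ W and all s ∈ T. -/
/-- Lemma 2.4.1: every function coming from a compact semiflow with jointly continuous
phase map is left-uniformly continuous. -/
theorem stmt9 {T X : Type*} [Monoid T] [TopologicalSpace T] [TopologicalSpace X]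
    [CompactSpace X] [T2Space X] [MulAction T X]
    (hc : Continuous fun p : T × X => p.1 • p.2)
    (F : C(X, ℂ)) (x₀ : X) :
    ∀ t₀ : T, ∀ ε : ℝ, 0 < ε → ∃ W ∈ nhds t₀, ∀ t ∈ W, ∀ s : T,
      ‖F (t • (s • x₀)) - F (t₀ • (s • x₀))‖ < ε := by
  intro t₀ ε hε
  have hG : Continuous fun p : T × X => ‖F (p.1 • p.2) - F (t₀ • p.2)‖ := by
    apply Continuous.norm
    exact (F.continuous.comp hc).sub
      (F.continuous.comp (hc.comp (continuous_const.prodMk continuous_snd)))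
  set U : Set (T × X) := {p | ‖F (p.1 • p.2) - F (t₀ • p.2)‖ < ε} with hU
  have hUopen : IsOpen U := isOpen_lt hG continuous_const
  have hsub : ({t₀} : Set T) ×ˢ (Set.univ : Set X) ⊆ U := by
    rintro ⟨t, x⟩ ⟨ht, -⟩
    simp only [Set.mem_singleton_iff] at ht
    subst ht
    simpa [U] using hε
  obtain ⟨u, v, hu, hv, htu, hxv, huv⟩ :=
    generalized_tube_lemma isCompact_singleton isCompact_univ hUopen hsub
  refine ⟨u, hu.mem_nhds (htu rfl), fun t ht s => ?_⟩
  have : (t, s • x₀) ∈ U := huv ⟨ht, hxv (Set.mem_univ _)⟩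
  simpa [U] using this
end

section
/- Let G be a topological group. Call a function f : G → ℂ Bochner left almost automorphic if f is bounded and for every ultrafilter 𝒰 on G and all functions φ, ψ : G → ℂ the following hold: (i) if for every x ∈ G the function t ↦ f(x·t) converges to φ(x) along 𝒰, then φ is continuous; and (ii) if moreover for every x ∈ G the function t ↦ φ(x·t⁻¹) converges to ψ(x) along 𝒰, then ψ = f. Then the Bochner left almost automorphic functions are closed under uniform limits: if (fᵢ) is a sequence of Bochner left almost automorphic functions on G and f : G → ℂ is bounded with sup_{x ∈ G} |fᵢ(x) − f(x)| → 0, then f is Bochner left almost automorphic. -/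
/-- A bounded function `f` on a topological group `G` is Bochner left almost automorphic
if for every ultrafilter `𝒰` on `G`: whenever the left shifts of `f` converge pointwise
along `𝒰` to `φ`, the limit `φ` is continuous, and whenever moreover the reverse shifts of
`φ` converge pointwise along `𝒰` to `ψ`, then `ψ = f`. -/
def BochnerLeftAA {G : Type*} [Group G] [TopologicalSpace G] (f : G → ℂ) : Prop :=
  (∃ C : ℝ, ∀ x : G, ‖f x‖ ≤ C) ∧
  ∀ (𝒰 : Ultrafilter G) (φ ψ : G → ℂ),
    ((∀ x : G, Filter.Tendsto (fun t => f (x * t)) (𝒰 : Filter G) (nhds (φ x))) →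
      Continuous φ) ∧
    ((∀ x : G, Filter.Tendsto (fun t => f (x * t)) (𝒰 : Filter G) (nhds (φ x))) →
      (∀ x : G, Filter.Tendsto (fun t => φ (x * t⁻¹)) (𝒰 : Filter G) (nhds (ψ x))) →
      ψ = f)

lemma ultra_lim_exists {α : Type*} (𝒰 : Ultrafilter α) {u : α → ℂ} {C : ℝ}
    (h : ∀ t, ‖u t‖ ≤ C) : ∃ a : ℂ, Filter.Tendsto u (𝒰 : Filter α) (nhds a) := by
  have hc : IsCompact (Metric.closedBall (0 : ℂ) C) := isCompact_closedBall 0 C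
  obtain ⟨a, -, ha⟩ := hc.ultrafilter_le_nhds (𝒰.map u) (by
    rw [Ultrafilter.coe_map, Filter.le_principal_iff]
    exact Filter.eventually_map.2 (Filter.Eventually.of_forall fun t => by
      simpa [Metric.mem_closedBall, dist_eq_norm] using h t))
  exact ⟨a, by rwa [Ultrafilter.coe_map] at ha⟩

lemma ultra_dist_le {α : Type*} (𝒰 : Ultrafilter α) {u v : α → ℂ} {a b : ℂ} {c : ℝ}
    (hu : Filter.Tendsto u (𝒰 : Filter α) (nhds a))
    (hv : Filter.Tendsto v (𝒰 : Filter α) (nhds b))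
    (h : ∀ t, dist (u t) (v t) ≤ c) : dist a b ≤ c :=
  le_of_tendsto (hu.dist hv) (Filter.Eventually.of_forall h)

/-- Theorem 6.1.4(4): the Bochner left almost automorphic functions are closed under
uniform limits. -/
theorem stmt10 {G : Type*} [Group G] [TopologicalSpace G] [IsTopologicalGroup G]
    (F : ℕ → G → ℂ) (f : G → ℂ)
    (hF : ∀ i : ℕ, BochnerLeftAA (F i))
    (hb : ∃ C : ℝ, ∀ x : G, ‖f x‖ ≤ C)
    (hconv : TendstoUniformly F f Filter.atTop) :
    BochnerLeftAA f := by
  refine ⟨hb, fun 𝒰 φ ψ => ?_⟩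
  -- for each i, shifts of F i converge along 𝒰 to some φ' i
  have hφ'ex : ∀ i : ℕ, ∃ g : G → ℂ,
      ∀ x : G, Filter.Tendsto (fun t => F i (x * t)) (𝒰 : Filter G) (nhds (g x)) := by
    intro i
    obtain ⟨C, hC⟩ := (hF i).1
    choose g hg using fun x : G =>
      ultra_lim_exists 𝒰 (u := fun t => F i (x * t)) (fun t => hC _)
    exact ⟨g, hg⟩
  choose φ' hφ' using hφ'ex
  have hcont : ∀ i, Continuous (φ' i) := fun i =>
    ((hF i).2 𝒰 (φ' i) (φ' i)).1 (hφ' i)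
  -- uniform estimate between φ and φ' i
  have hEst : ∀ (hfφ : ∀ x : G, Filter.Tendsto (fun t => f (x * t)) (𝒰 : Filter G)
      (nhds (φ x))) (ε : ℝ), 0 < ε →
      ∀ᶠ i in Filter.atTop, ∀ y : G, dist (φ y) (φ' i y) ≤ ε := by
    intro hfφ ε hε
    filter_upwards [Metric.tendstoUniformly_iff.1 hconv ε hε] with i hi y
    exact ultra_dist_le 𝒰 (hfφ y) (hφ' i y) (fun t => (hi (y * t)).le)
  constructor
  · intro hfφ
    have hUnif : TendstoUniformly φ' φ Filter.atTop := by
      rw [Metric.tendstoUniformly_iff]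
      intro ε hε
      filter_upwards [hEst hfφ (ε / 2) (by positivity)] with i hi x
      exact lt_of_le_of_lt (hi x) (by linarith)
    exact hUnif.continuous (Filter.Eventually.of_forall hcont).frequently
  · intro hfφ hφψ
    -- for each i, reverse shifts of φ' i converge along 𝒰 to some ψ' i
    have hψ'ex : ∀ i : ℕ, ∃ g : G → ℂ,
        ∀ x : G, Filter.Tendsto (fun t => φ' i (x * t⁻¹)) (𝒰 : Filter G) (nhds (g x)) := by
      intro i
      obtain ⟨C, hC⟩ := (hF i).1
      have hbound : ∀ y : G, ‖φ' i y‖ ≤ C := fun y =>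
        le_of_tendsto (hφ' i y).norm (Filter.Eventually.of_forall fun t => hC _)
      choose g hg using fun x : G =>
        ultra_lim_exists 𝒰 (u := fun t => φ' i (x * t⁻¹)) (fun t => hbound _)
      exact ⟨g, hg⟩
    choose ψ' hψ' using hψ'ex
    have hψ'eq : ∀ i, ψ' i = F i := fun i =>
      ((hF i).2 𝒰 (φ' i) (ψ' i)).2 (hφ' i) (hψ' i)
    funext x
    refine eq_of_forall_dist_le fun ε hε => ?_
    obtain ⟨i, hi1, hi2⟩ := (Filter.eventually_and.2
      ⟨hEst hfφ (ε / 2) (by positivity),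
        Metric.tendstoUniformly_iff.1 hconv (ε / 2) (by positivity)⟩).exists
    have h1 : dist (ψ x) (ψ' i x) ≤ ε / 2 :=
      ultra_dist_le 𝒰 (hφψ x) (hψ' i x) (fun t => hi1 (x * t⁻¹))
    have h2 : dist (ψ' i x) (f x) ≤ ε / 2 := by
      rw [hψ'eq i, dist_comm]
      exact (hi2 x).le
    calc dist (ψ x) (f x) ≤ dist (ψ x) (ψ' i x) + dist (ψ' i x) (f x) := dist_triangle _ _ _
      _ ≤ ε := by linarith
end

section
/- Let G be a group (no topology). A bounded function f : G → ℂ is left almost automorphic if for every ultrafilter 𝒰 on G and all functions φ, ψ : G → ℂ, whenever for every x ∈ G the function t ↦ f(x·t) converges to φ(x) along 𝒰 and for every x ∈ G the function t ↦ φ(x·t⁻¹) converges to ψ(x) along 𝒰, then ψ = f. It is right almost automorphic if for every ultrafilter 𝒰 on G and all φ, ψ : G → ℂ, whenever for every x ∈ G the function t ↦ f(t·x) converges to φ(x) along 𝒰 and for every x ∈ G the function t ↦ φ(t⁻¹·x) converges to ψ(x) along 𝒰, then ψ = f. Then a bounded function f : G → ℂ is left almost automorphic if and only if it is right almost automorphic.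 -/
/-- A bounded function `f` on an abstract group `G` is left almost automorphic if for every
ultrafilter `𝒰` on `G`: whenever `t ↦ f (x * t)` converges to `φ x` along `𝒰` for all `x`
and `t ↦ φ (x * t⁻¹)` converges to `ψ x` along `𝒰` for all `x`, then `ψ = f`. -/
def LeftAA {G : Type*} [Group G] (f : G → ℂ) : Prop :=
  ∀ (𝒰 : Ultrafilter G) (φ ψ : G → ℂ),
    (∀ x : G, Filter.Tendsto (fun t => f (x * t)) (𝒰 : Filter G) (nhds (φ x))) →
    (∀ x : G, Filter.Tendsto (fun t => φ (x * t⁻¹)) (𝒰 : Filter G) (nhds (ψ x))) →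
    ψ = f

/-- A bounded function `f` on an abstract group `G` is right almost automorphic if for every
ultrafilter `𝒰` on `G`: whenever `t ↦ f (t * x)` converges to `φ x` along `𝒰` for all `x`
and `t ↦ φ (t⁻¹ * x)` converges to `ψ x` along `𝒰` for all `x`, then `ψ = f`. -/
def RightAA {G : Type*} [Group G] (f : G → ℂ) : Prop :=
  ∀ (𝒰 : Ultrafilter G) (φ ψ : G → ℂ),
    (∀ x : G, Filter.Tendsto (fun t => f (t * x)) (𝒰 : Filter G) (nhds (φ x))) →
    (∀ x : G, Filter.Tendsto (fun t => φ (t⁻¹ * x)) (𝒰 : Filter G) (nhds (ψ x))) →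
    ψ = f

open Filter Topology

section VeechAux
variable {G : Type*} [Group G]

set_option linter.unusedSectionVars false

lemma exists_ulim (h : G → ℂ) (C : ℝ) (hb : ∀ y, ‖h y‖ ≤ C) (V : Ultrafilter G) :
    ∃ z : ℂ, ‖z‖ ≤ C ∧ Filter.Tendsto h (V : Filter G) (𝓝 z) := by
  have hmem : Metric.closedBall (0:ℂ) C ∈ V.map h := by
    apply Filter.mem_map.2
    filter_upwards [Filter.univ_mem] with y _
    simpa [Metric.mem_closedBall, dist_eq_norm] using hb y
  obtain ⟨z, hz, hle⟩ := (isCompact_closedBall (0:ℂ) C).ultrafilter_le_nhds (V.map h)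
    (le_principal_iff.2 hmem)
  refine ⟨z, ?_, ?_⟩
  · simpa [Metric.mem_closedBall, dist_eq_norm] using hz
  · rw [Ultrafilter.coe_map] at hle; exact hle

lemma iter_ulim (q : Ultrafilter G) (m : G → G → G) (h : G → ℂ) (d : G → ℂ) (c : ℂ)
    (hin : ∀ t, Filter.Tendsto (fun s => h (m t s)) (q : Filter G) (𝓝 (d t)))
    (hout : Filter.Tendsto d (q : Filter G) (𝓝 c)) :
    Filter.Tendsto h ((q.bind fun t => q.map (m t) : Ultrafilter G) : Filter G) (𝓝 c) := by
  have hcoe : ((q.bind fun t => q.map (m t) : Ultrafilter G) : Filter G)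
      = (q : Filter G).bind (fun t => Filter.map (m t) (q : Filter G)) := rfl
  rw [hcoe]
  rw [Metric.tendsto_nhds] at hout ⊢
  intro ε hε
  rw [Filter.eventually_bind]
  filter_upwards [hout (ε/2) (by linarith)] with t ht
  rw [Filter.eventually_map]
  filter_upwards [Metric.tendsto_nhds.mp (hin t) (ε/2) (by linarith)] with s hs
  calc dist (h (m t s)) c ≤ dist (h (m t s)) (d t) + dist (d t) c := dist_triangle _ _ _
    _ < ε/2 + ε/2 := add_lt_add hs ht
    _ = ε := by ring

/-- Tendsto along a mapped ultrafilter. -/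
lemma tendsto_umap {α : Type*} (V : Ultrafilter α) (m : α → α) (h : α → ℂ) (c : ℂ) :
    Filter.Tendsto h ((V.map m : Ultrafilter α) : Filter α) (𝓝 c)
      ↔ Filter.Tendsto (fun t => h (m t)) (V : Filter α) (𝓝 c) := by
  rw [Ultrafilter.coe_map, Filter.tendsto_map'_iff]
  rfl

/-- Core lemma: if `f` is left almost automorphic and bounded, then all double limits of the
form `lim_t lim_s f (x * s * t⁻¹)` (both along the same ultrafilter) equal `f x`. -/
lemma core {f : G → ℂ} (C : ℝ) (hC : ∀ y, ‖f y‖ ≤ C) (hL : LeftAA f)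
    (q : Ultrafilter G) (x : G) (c : G → ℂ) (L : ℂ)
    (hin : ∀ t, Filter.Tendsto (fun s => f (x * s * t⁻¹)) (q : Filter G) (𝓝 (c t)))
    (hout : Filter.Tendsto c (q : Filter G) (𝓝 L)) : L = f x := by
  -- F = R_{q⁻¹} f
  have hFex : ∀ y : G, ∃ z : ℂ, ‖z‖ ≤ C ∧
      Filter.Tendsto (fun t => f (y * t⁻¹)) (q : Filter G) (𝓝 z) := fun y =>
    exists_ulim (fun t => f (y * t⁻¹)) C (fun t => hC _) q
  choose F hFb hF using hFex
  -- G2 = R_q F ; LeftAA at q.map inv gives G2 = f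
  have hG2ex : ∀ y : G, ∃ z : ℂ,  ‖z‖ ≤ C ∧
      Filter.Tendsto (fun t => F (y * t)) (q : Filter G) (𝓝 z) := fun y =>
    exists_ulim (fun t => F (y * t)) C (fun t => hFb _) q
  choose G2 _ hG2 using hG2ex
  have hstep1 : G2 = f := by
    apply hL (q.map Inv.inv) F G2
    · intro y
      rw [tendsto_umap]
      exact hF y
    · intro y
      rw [tendsto_umap]
      simpa only [inv_inv] using hG2 y
  -- rewrite: R_q F = f pointwise
  have hstar : ∀ y : G, Filter.Tendsto (fun t => F (y * t)) (q : Filter G) (𝓝 (f y)) := by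
    intro y; have := hG2 y; rwa [hstep1] at this
  -- the ultrafilter r with r-lim h = lim_t lim_s h (s * t⁻¹)
  set r : Ultrafilter G := q.bind (fun t => q.map (fun s => s * t⁻¹)) with hr
  -- (I1) : f (y * u⁻¹) → f y along r
  have hI1 : ∀ y : G, Filter.Tendsto (fun u => f (y * u⁻¹)) (r : Filter G) (𝓝 (f y)) := by
    intro y
    apply iter_ulim q (fun t s => s * t⁻¹) (fun u => f (y * u⁻¹)) (fun t => F (y * t)) (f y)
    · intro t
      have := hF (y * t)
      simpa [mul_assoc, mul_inv_rev] using this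
    · exact hstar y
  -- (I2) : f (x * u) → L along r
  have hI2 : Filter.Tendsto (fun u => f (x * u)) (r : Filter G) (𝓝 L) := by
    apply iter_ulim q (fun t s => s * t⁻¹) (fun u => f (x * u)) c L
    · intro t
      simpa [mul_assoc] using hin t
    · exact hout
  -- Psi = R_r f ; LeftAA at r.map inv gives Psi = f
  have hPsiex : ∀ y : G, ∃ z : ℂ, ‖z‖ ≤ C ∧
      Filter.Tendsto (fun u => f (y * u)) (r : Filter G) (𝓝 z) := fun y =>
    exists_ulim (fun u => f (y * u)) C (fun u => hC _) r
  choose Psi _ hPsi using hPsiex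
  have hstep2 : Psi = f := by
    apply hL (r.map Inv.inv) f Psi
    · intro y
      rw [tendsto_umap]
      exact hI1 y
    · intro y
      rw [tendsto_umap]
      simpa only [inv_inv] using hPsi y
  have hfix : Filter.Tendsto (fun u => f (x * u)) (r : Filter G) (𝓝 (f x)) := by
    have := hPsi x; rwa [hstep2] at this
  exact tendsto_nhds_unique hI2 hfix


variable {G : Type*} [Group G]

/-- Left-to-right direction of Veech's theorem. -/
lemma leftAA_to_rightAA {f : G → ℂ} (C : ℝ) (hC : ∀ y, ‖f y‖ ≤ C) (hL : LeftAA f) :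
    RightAA f := by
  intro 𝒰 φ ψ h1 h2
  funext x
  -- conjugated ultrafilter
  set q : Ultrafilter G := 𝒰.map (fun t => x⁻¹ * t) with hq
  refine core C hC hL q x (fun t => φ t⁻¹) (ψ x) ?_ ?_
  · intro t
    rw [tendsto_umap]
    have := h1 t⁻¹
    refine this.congr' ?_
    filter_upwards [Filter.univ_mem] with s _
    group
  · rw [tendsto_umap]
    have := h2 x
    refine this.congr' ?_
    filter_upwards [Filter.univ_mem] with t _
    congr 1
    group

/-- `RightAA f` transfers to `LeftAA` of `x ↦ f x⁻¹`. -/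
lemma rightAA_inv {f : G → ℂ} (hR : RightAA f) : LeftAA (fun x => f x⁻¹) := by
  intro 𝒰 φ ψ h1 h2
  have key : (fun y => ψ y⁻¹) = f := by
    apply hR (𝒰.map Inv.inv) (fun y => φ y⁻¹) (fun y => ψ y⁻¹)
    · intro y
      rw [tendsto_umap]
      have := h1 y⁻¹
      refine this.congr' ?_
      filter_upwards [Filter.univ_mem] with t _
      simp [mul_inv_rev]
    · intro y
      rw [tendsto_umap]
      have := h2 y⁻¹
      refine this.congr' ?_
      filter_upwards [Filter.univ_mem] with t _
      simp [mul_inv_rev]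
  funext z
  have := congrFun key z⁻¹
  simpa using this

end VeechAux

/-- Theorem 6.1.4(4) (Veech's Theorem 1.3.1): a bounded function on a group is left
almost automorphic iff it is right almost automorphic. -/
theorem stmt11 {G : Type*} [Group G] (f : G → ℂ) (hb : ∃ C : ℝ, ∀ x : G, ‖f x‖ ≤ C) :
    LeftAA f ↔ RightAA f := by
  obtain ⟨C, hC⟩ := hb
  constructor
  · exact fun hL => leftAA_to_rightAA C hC hL
  · intro hR
    have h1 : LeftAA (fun x : G => f x⁻¹) := rightAA_inv hR
    have h2 : RightAA (fun x : G => f x⁻¹) := leftAA_to_rightAA C (fun y => hC _) h1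
    have h3 : LeftAA (fun x : G => f x⁻¹⁻¹) := rightAA_inv h2
    have he : (fun x : G => f x⁻¹⁻¹) = f := by funext z; rw [inv_inv]
    rwa [he] at h3
end

section
/- Let G be a group and let f : G → ℂ be a bounded left almost automorphic function (for every ultrafilter 𝒰 on G and all φ, ψ : G → ℂ, if t ↦ f(x·t) converges to φ(x) along 𝒰 for every x and t ↦ φ(x·t⁻¹) converges to ψ(x) along 𝒰 for every x, then ψ = f). Then the left hull of f is minimal: for every φ in the closure, in the product topology on ℂ^G, of the set {x ↦ f(x·t) : t ∈ G}, the function f lies in the closure, in the product topology on ℂ^G, of the set {x ↦ φ(x·t) : t ∈ G}. -/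
/-- Lemmas 6.1.5 / 6.1.6: the left hull (pointwise closure of the set of left shifts) of a
bounded left almost automorphic function is minimal. -/
theorem stmt12 {G : Type*} [Group G] (f : G → ℂ)
    (hb : ∃ C : ℝ, ∀ x : G, ‖f x‖ ≤ C) (hf : LeftAA f) :
    ∀ φ ∈ closure {g : G → ℂ | ∃ t : G, g = fun x => f (x * t)},
      f ∈ closure {g : G → ℂ | ∃ t : G, g = fun x => φ (x * t)} := by
  obtain ⟨C, hC⟩ := hb
  intro φ hφ
  rw [mem_closure_iff_ultrafilter] at hφ
  obtain ⟨u, hSu, hu⟩ := hφ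
  set T : G → (G → ℂ) := fun t x => f (x * t) with hT
  have hrange : Set.range T ∈ u := by
    apply Filter.mem_of_superset hSu
    rintro g ⟨t, rfl⟩
    exact ⟨t, rfl⟩
  have hne : (Filter.comap T (u : Filter (G → ℂ))).NeBot := by
    apply Filter.comap_neBot
    intro s hs
    have : s ∩ Set.range T ∈ u := Filter.inter_mem hs hrange
    obtain ⟨g, hgs, t, rfl⟩ := Filter.nonempty_of_mem this
    exact ⟨t, hgs⟩
  set 𝒰 : Ultrafilter G := @Ultrafilter.of _ _ hne with h𝒰
  have hmap : Filter.Tendsto T (𝒰 : Filter G) (nhds φ) := by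
    have h1 : (𝒰 : Filter G) ≤ Filter.comap T u := Ultrafilter.of_le _
    calc Filter.map T (𝒰 : Filter G) ≤ Filter.map T (Filter.comap T u) :=
          Filter.map_mono h1
      _ ≤ u := Filter.map_comap_le
      _ ≤ nhds φ := hu
  have h1 : ∀ x : G, Filter.Tendsto (fun t => f (x * t)) (𝒰 : Filter G) (nhds (φ x)) := by
    intro x
    exact (tendsto_pi_nhds.mp hmap) x
  have hφC : ∀ x : G, ‖φ x‖ ≤ C := by
    intro x
    have := ((h1 x).norm)
    exact le_of_tendsto this (Filter.Eventually.of_forall (fun t => hC _))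
  -- define ψ as ultrafilter limits in the compact ball
  have hlim : ∀ x : G, ∃ z : ℂ,
      Filter.Tendsto (fun t => φ (x * t⁻¹)) (𝒰 : Filter G) (nhds z) := by
    intro x
    have hmem : ∀ t : G, φ (x * t⁻¹) ∈ Metric.closedBall (0 : ℂ) C := by
      intro t
      simpa using hφC (x * t⁻¹)
    have hcomp : IsCompact (Metric.closedBall (0 : ℂ) C) := isCompact_closedBall _ _
    have hle : (𝒰.map (fun t => φ (x * t⁻¹)) : Filter ℂ) ≤
        Filter.principal (Metric.closedBall (0 : ℂ) C) := by
      rw [Filter.le_principal_iff]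
      exact Filter.mem_map.mpr (Filter.univ_mem' hmem)
    obtain ⟨z, _, hz⟩ := hcomp.ultrafilter_le_nhds (𝒰.map (fun t => φ (x * t⁻¹))) hle
    exact ⟨z, hz⟩
  choose ψ hψ using hlim
  have hψf : ψ = f := hf 𝒰 φ ψ h1 hψ
  -- conclude: f is a pointwise limit of shifts of φ
  have hS : Filter.Tendsto (fun t : G => (fun x => φ (x * t⁻¹))) (𝒰 : Filter G) (nhds f) := by
    rw [tendsto_pi_nhds]
    intro x
    simpa [hψf] using hψ x
  exact mem_closure_of_tendsto hS (Filter.Eventually.of_forall (fun t => ⟨t⁻¹, rfl⟩))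
end

section
/- Let G be a group and let f : G → ℂ be a bounded left almost automorphic function (for every ultrafilter 𝒰 on G and all φ, ψ : G → ℂ, if t ↦ f(x·t) converges to φ(x) along 𝒰 for every x and t ↦ φ(x·t⁻¹) converges to ψ(x) along 𝒰 for every x, then ψ = f). Then for every finite set N ⊆ G and every ε > 0, there exist a finite set M ⊆ G with N ⊆ M and a real number δ with 0 < δ < ε, such that for every τ ∈ G: if |f(x·τ) − f(x)| < δ for all x ∈ M, then |f(x·τ) − f(x)| < ε and |f(x·τ⁻¹) − f(x)| < ε for all x ∈ N. -/
open Filter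



lemma bdd_ultra_lim {G : Type*} (g : G → ℂ) (C : ℝ) (hC : ∀ x, ‖g x‖ ≤ C)
    (𝒰 : Ultrafilter G) : ∃ z : ℂ, Tendsto g (𝒰 : Filter G) (nhds z) := by
  obtain ⟨z, -, hz⟩ := (isCompact_closedBall (0:ℂ) C).ultrafilter_le_nhds (𝒰.map g)
    (by
      rw [Ultrafilter.coe_map]
      exact le_principal_iff.2 (Filter.mem_map.2 (Filter.univ_mem' fun x => by
        simpa [Metric.mem_closedBall, dist_eq_norm] using hC x)))
  exact ⟨z, by rwa [Ultrafilter.coe_map] at hz⟩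


/-- Lemma 6.1.8: `N_G(f,U(f;M,δ))⁻¹ ∪ N_G(f,U(f;M,δ)) ⊆ N_G(f,U(f;N,ε))`. -/
theorem stmt13 {G : Type*} [Group G] (f : G → ℂ)
    (hb : ∃ C : ℝ, ∀ x : G, ‖f x‖ ≤ C) (hf : LeftAA f) :
    ∀ (N : Finset G) (ε : ℝ), 0 < ε →
      ∃ (M : Finset G) (δ : ℝ), N ⊆ M ∧ 0 < δ ∧ δ < ε ∧
        ∀ τ : G, (∀ x ∈ M, ‖f (x * τ) - f x‖ < δ) →
          ∀ x ∈ N, ‖f (x * τ) - f x‖ < ε ∧ ‖f (x * τ⁻¹) - f x‖ < ε := by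
  classical
  obtain ⟨C, hC⟩ := hb
  intro N ε hε
  by_contra h
  push_neg at h
  -- h : ∀ M δ, N ⊆ M → 0 < δ → δ < ε → ∃ τ, (∀ x ∈ M, ...) ∧ ∃ x ∈ N, ...
  set S : Finset G × ℕ → Set G := fun i =>
    {τ | (∀ x ∈ i.1 ∪ N, ‖f (x * τ) - f x‖ < 1 / (i.2 + 1)) ∧
      ∃ x ∈ N, ε ≤ ‖f (x * τ⁻¹) - f x‖} with hSdef
  have hSne : ∀ i, (S i).Nonempty := by
    intro ⟨M, n⟩
    have hδpos : (0:ℝ) < min (ε/2) (1/(n+1)) := by positivity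
    have hδlt : min (ε/2) (1/(n+1)) < ε := lt_of_le_of_lt (min_le_left _ _) (by linarith)
    obtain ⟨τ, hτ1, x₀, hx₀N, hx₀⟩ := h (M ∪ N) (min (ε/2) (1/(n+1)))
      (Finset.subset_union_right) hδpos hδlt
    refine ⟨τ, ⟨fun x hx => lt_of_lt_of_le (hτ1 x hx) (min_le_right _ _), x₀, hx₀N, ?_⟩⟩
    apply hx₀
    exact lt_of_lt_of_le (lt_of_lt_of_le (hτ1 x₀ (Finset.mem_union_right _ hx₀N))
      (min_le_left _ _)) (by linarith)
  have hdir : Directed (· ≥ ·) (fun i => Filter.principal (S i)) := by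
    intro i j
    refine ⟨(i.1 ∪ j.1, max i.2 j.2), ?_, ?_⟩ <;>
    · refine principal_mono.2 fun τ hτ => ⟨fun x hx => lt_of_lt_of_le (hτ.1 x ?_) ?_, hτ.2⟩
      · simp only [Finset.mem_union] at hx ⊢; tauto
      · apply one_div_le_one_div_of_le (by positivity)
        push_cast
        simp [le_max_iff]
  have : ∀ i, (Filter.principal (S i)).NeBot := fun i => principal_neBot_iff.2 (hSne i)
  have hF : (⨅ i, Filter.principal (S i)).NeBot := iInf_neBot_of_directed hdir this
  set 𝒰 : Ultrafilter G := @Ultrafilter.of G (⨅ i, Filter.principal (S i)) hF with h𝒰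
  have hle : (𝒰 : Filter G) ≤ ⨅ i, Filter.principal (S i) := Ultrafilter.of_le _
  have hmem : ∀ i, S i ∈ 𝒰 := fun i =>
    hle (le_principal_iff.mp (iInf_le (fun i => Filter.principal (S i)) i))
  -- define φ
  have hφex : ∀ x : G, ∃ z, Tendsto (fun t => f (x * t)) (𝒰 : Filter G) (nhds z) :=
    fun x => bdd_ultra_lim _ C (fun t => hC _) 𝒰
  choose φ hφ using hφex
  have hφf : φ = f := by
    funext x
    have key : ∀ n : ℕ, ‖φ x - f x‖ ≤ 1 / (n + 1) := by
      intro n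
      have hmemx : S ({x}, n) ∈ 𝒰 := hmem ({x}, n)
      have hev : ∀ᶠ t in (𝒰 : Filter G), f (x * t) ∈ Metric.closedBall (f x) (1/(n+1)) :=
        Filter.mem_of_superset hmemx fun τ hτ => by
          have := hτ.1 x (Finset.mem_union_left _ (Finset.mem_singleton_self x))
          simpa [Metric.mem_closedBall, dist_eq_norm] using this.le
      have := Metric.isClosed_closedBall.mem_of_tendsto (hφ x) hev
      simpa [Metric.mem_closedBall, dist_eq_norm] using this
    have h0 : ‖φ x - f x‖ ≤ 0 :=
      ge_of_tendsto' tendsto_one_div_add_atTop_nhds_zero_nat key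
    have : φ x - f x = 0 := norm_le_zero_iff.mp h0
    exact sub_eq_zero.mp this
  rw [hφf] at hφ
  have hψex : ∀ x : G, ∃ z, Tendsto (fun t => f (x * t⁻¹)) (𝒰 : Filter G) (nhds z) :=
    fun x => bdd_ultra_lim _ C (fun t => hC _) 𝒰
  choose ψ hψ using hψex
  have hψf : ψ = f := hf 𝒰 f ψ hφ hψ
  rw [hψf] at hψ
  have hB : (⋃ x ∈ (N : Set G), {τ : G | ε ≤ ‖f (x * τ⁻¹) - f x‖}) ∈ 𝒰 :=
    Filter.mem_of_superset (hmem (∅, 0)) (fun τ hτ => by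
      obtain ⟨x, hxN, hx⟩ := hτ.2
      exact Set.mem_biUnion (Finset.mem_coe.2 hxN) hx)
  obtain ⟨x₀, hx₀N, hx₀⟩ := (Ultrafilter.finite_biUnion_mem_iff N.finite_toSet).mp hB
  have hclosed : IsClosed {z : ℂ | ε ≤ ‖z - f x₀‖} :=
    isClosed_le continuous_const (by continuity)
  have hev : ∀ᶠ τ in (𝒰 : Filter G), f (x₀ * τ⁻¹) ∈ {z : ℂ | ε ≤ ‖z - f x₀‖} :=
    Filter.mem_of_superset hx₀ fun τ hτ => hτ
  have := hclosed.mem_of_tendsto (hψ x₀) hev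
  simp only [Set.mem_setOf_eq, sub_self, norm_zero] at this
  linarith
end

section
/- Let G be a group and let f : G → ℂ be a bounded almost automorphic function on the discrete group G (for every ultrafilter 𝒰 on G and all φ, ψ : G → ℂ, if t ↦ f(x·t) converges to φ(x) along 𝒰 for every x and t ↦ φ(x·t⁻¹) converges to ψ(x) along 𝒰 for every x, then ψ = f). Then for every finite set N ⊆ G and every ε > 0, the set C(f;N,ε) = {τ ∈ G : |f(s·τ·t) − f(s·t)| < ε for all s, t ∈ N} contains a symmetric syndetic subset: there exists S ⊆ C(f;N,ε) with S = S⁻¹ and a finite set K ⊆ G with G = K⁻¹·S. Consequently C(f;N,ε) is relatively dense in G: there is a finite set L ⊆ G with G = L·C(f;N,ε) = C(f;N,ε)·L. -/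
open scoped Pointwise

/-- `C(f;N,ε) = {τ : |f(sτt) − f(st)| < ε for all s, t ∈ N}`. -/
def Cset {G : Type*} [Group G] (f : G → ℂ) (N : Finset G) (ε : ℝ) : Set G :=
  {τ : G | ∀ s ∈ N, ∀ t ∈ N, ‖f (s * τ * t) - f (s * t)‖ < ε}

attribute [local instance] Ultrafilter.mul Ultrafilter.semigroup

open Filter in
/-- Ultrafilter limits of bounded functions into `ℂ` exist. -/
lemma exists_ulim_s14 {α : Type*} (𝒰 : Ultrafilter α) (h : α → ℂ) (C : ℝ)
    (hC : ∀ x, ‖h x‖ ≤ C) : ∃ L : ℂ, ‖L‖ ≤ C ∧ Filter.Tendsto h (𝒰 : Filter α) (nhds L) := by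
  have hle : (𝒰.map h : Filter ℂ) ≤ Filter.principal (Metric.closedBall (0 : ℂ) C) := by
    rw [Ultrafilter.coe_map]
    refine Filter.le_principal_iff.mpr ?_
    refine Filter.mem_map.mpr (Filter.univ_mem' fun x => ?_)
    simpa [Metric.mem_closedBall, dist_zero_right] using hC x
  obtain ⟨L, hL1, hL2⟩ := (isCompact_closedBall (0 : ℂ) C).ultrafilter_le_nhds (𝒰.map h) hle
  refine ⟨L, by simpa [Metric.mem_closedBall, dist_zero_right] using hL1, ?_⟩
  rwa [Ultrafilter.coe_map] at hL2

open Filter in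
/-- The key analytic lemma: if `f` is bounded and left almost automorphic and `𝒰` is an
idempotent ultrafilter on `G`, then for all `z t : G` the limits of `f (z * g * t)` and
`f (z * g⁻¹ * t)` along `𝒰` both equal `f (z * t)`. -/
lemma key_lemma {G : Type*} [Group G] (f : G → ℂ) (C : ℝ) (hC : ∀ x, ‖f x‖ ≤ C)
    (hf : LeftAA f) (𝒰 : Ultrafilter G) (hidem : 𝒰 * 𝒰 = 𝒰) (t : G) :
    (∀ z : G, Tendsto (fun g => f (z * g * t)) (𝒰 : Filter G) (nhds (f (z * t)))) ∧
    (∀ z : G, Tendsto (fun g => f (z * g⁻¹ * t)) (𝒰 : Filter G) (nhds (f (z * t)))) := by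
  -- the ultrafilter 𝒱 = image of 𝒰 under g ↦ g⁻¹ * t
  set 𝒱 : Ultrafilter G := 𝒰.map (fun g => g⁻¹ * t) with h𝒱
  -- y x = lim_{g→𝒰} f (x * (g⁻¹ * t))
  have hy' : ∀ x : G, ∃ L : ℂ, ‖L‖ ≤ C ∧
      Tendsto (fun g => f (x * (g⁻¹ * t))) (𝒰 : Filter G) (nhds L) :=
    fun x => exists_ulim_s14 𝒰 _ C (fun g => hC _)
  choose y hyb hy using hy'
  have h1 : ∀ x : G, Tendsto (fun w => f (x * w)) (𝒱 : Filter G) (nhds (y x)) := by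
    intro x
    rw [h𝒱, Ultrafilter.coe_map, Filter.tendsto_map'_iff]
    exact hy x
  have hψ' : ∀ x : G, ∃ L : ℂ, ‖L‖ ≤ C ∧
      Tendsto (fun g => y (x * (g⁻¹ * t)⁻¹)) (𝒰 : Filter G) (nhds L) :=
    fun x => exists_ulim_s14 𝒰 _ C (fun g => hyb _)
  choose ψ hψb hψ using hψ'
  have h2 : ∀ x : G, Tendsto (fun w => y (x * w⁻¹)) (𝒱 : Filter G) (nhds (ψ x)) := by
    intro x
    rw [h𝒱, Ultrafilter.coe_map, Filter.tendsto_map'_iff]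
    exact hψ x
  have hψf : ψ = f := hf 𝒱 y ψ h1 h2
  -- hence: lim_{g→𝒰} y (z * g) = f (z * t)
  have h4 : ∀ z : G, Tendsto (fun g => y (z * g)) (𝒰 : Filter G) (nhds (f (z * t))) := by
    intro z
    have := hψ (z * t)
    rw [hψf] at this
    simpa [mul_inv_rev, mul_assoc] using this
  -- part 1, via idempotency
  have part1 : ∀ z : G, Tendsto (fun g => f (z * g * t)) (𝒰 : Filter G) (nhds (f (z * t))) := by
    intro z
    rw [Metric.tendsto_nhds]
    intro δ hδ
    have hA : ∀ᶠ w in (𝒰 : Filter G), dist (y (z * w)) (f (z * t)) < δ / 2 :=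
      Metric.tendsto_nhds.mp (h4 z) (δ / 2) (by linarith)
    rw [← hidem] at hA
    have hA2 := (Ultrafilter.eventually_mul 𝒰 𝒰 _).mp hA
    filter_upwards [hA2] with g hg
    have hmem : f (z * g * t) ∈ Metric.closedBall (f (z * t)) (δ / 2) := by
      refine IsClosed.mem_of_tendsto Metric.isClosed_closedBall (h4 (z * g)) ?_
      filter_upwards [hg] with h hh
      rw [Metric.mem_closedBall]
      rw [← mul_assoc] at hh
      exact le_of_lt hh
    rw [Metric.mem_closedBall] at hmem
    linarith
  refine ⟨part1, ?_⟩
  -- part 2, via another application of almost automorphy, now for 𝒲 = 𝒰.map (· * t)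
  set 𝒲 : Ultrafilter G := 𝒰.map (fun g => g * t) with h𝒲
  have h1' : ∀ x : G, Tendsto (fun w => f (x * w)) (𝒲 : Filter G) (nhds (f (x * t))) := by
    intro x
    rw [h𝒲, Ultrafilter.coe_map, Filter.tendsto_map'_iff]
    have := part1 x
    simpa [mul_assoc, Function.comp_def] using this
  have hψ2' : ∀ x : G, ∃ L : ℂ, ‖L‖ ≤ C ∧
      Tendsto (fun g => f (x * (g * t)⁻¹ * t)) (𝒰 : Filter G) (nhds L) :=
    fun x => exists_ulim_s14 𝒰 _ C (fun g => hC _)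
  choose ψ₂ hψ₂b hψ₂ using hψ2'
  have h2' : ∀ x : G, Tendsto (fun w => f (x * w⁻¹ * t)) (𝒲 : Filter G) (nhds (ψ₂ x)) := by
    intro x
    rw [h𝒲, Ultrafilter.coe_map, Filter.tendsto_map'_iff]
    exact hψ₂ x
  have hψ₂f : ψ₂ = f := hf 𝒲 (fun x => f (x * t)) ψ₂ h1' h2'
  intro z
  have := hψ₂ (z * t)
  rw [hψ₂f] at this
  simpa [mul_inv_rev, mul_assoc] using this

open Filter in
/-- Lemma 6.1.9 and its Corollary: `C(f;N,ε)` contains a symmetric syndetic subset, and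
consequently is relatively dense in `G`. -/
theorem stmt14 {G : Type*} [Group G] (f : G → ℂ)
    (hb : ∃ C : ℝ, ∀ x : G, ‖f x‖ ≤ C) (hf : LeftAA f)
    (N : Finset G) (ε : ℝ) (hε : 0 < ε) :
    (∃ S : Set G, S ⊆ Cset f N ε ∧ S⁻¹ = S ∧
      ∃ K : Finset G, (K : Set G)⁻¹ * S = Set.univ) ∧
    ∃ L : Finset G, (L : Set G) * Cset f N ε = Set.univ ∧
      Cset f N ε * (L : Set G) = Set.univ := by
  classical
  obtain ⟨C, hC⟩ := hb
  set Cε : Set G := Cset f N ε with hCε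
  set S : Set G := Cε ∩ Cε⁻¹ with hS
  have hSsub : S ⊆ Cε := Set.inter_subset_left
  have hSsym : S⁻¹ = S := by
    rw [hS, Set.inter_inv, inv_inv, Set.inter_comm]
  -- main step: S is (left) syndetic
  have main : ∃ K : Finset G, (K : Set G)⁻¹ * S = Set.univ := by
    by_contra hcon
    push_neg at hcon
    have hthick : ∀ K : Finset G, ∃ g : G, ∀ k ∈ K, k * g ∉ S := by
      intro K
      rcases (Set.ne_univ_iff_exists_notMem _).mp (hcon K) with ⟨x, hx⟩
      refine ⟨x, fun k hk hmem => hx ?_⟩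
      refine ⟨k⁻¹, ?_, k * x, hmem, by group⟩
      rw [Set.mem_inv, inv_inv]
      exact hk
    set D : G → Set G := fun k => {g | k * g ∉ S} with hD
    -- the set of ultrafilters containing all D k is a nonempty compact subsemigroup
    set T : Set (Ultrafilter G) := {p | ∀ k : G, D k ∈ p} with hT
    have hTrepr : T = ⋂ k : G, {p : Ultrafilter G | D k ∈ p} := by
      ext p; simp [hT]
    have hTclosed : IsClosed T := by
      rw [hTrepr]
      exact isClosed_iInter fun k => ultrafilter_isClosed_basic _
    have hTne : T.Nonempty := by
      set Z : Finset G → Set (Ultrafilter G) :=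
        fun K => {p | ∀ k ∈ K, D k ∈ p} with hZ
      have hZrepr : ∀ K, Z K = ⋂ k ∈ K, {p : Ultrafilter G | D k ∈ p} := by
        intro K; ext p; simp [hZ]
      have hZne : ∀ K, (Z K).Nonempty := by
        intro K
        obtain ⟨g, hg⟩ := hthick K
        exact ⟨pure g, fun k hk => (Ultrafilter.mem_pure).mpr (hg k hk)⟩
      have hZcl : ∀ K, IsClosed (Z K) := by
        intro K
        rw [hZrepr]
        exact isClosed_biInter fun k _ => ultrafilter_isClosed_basic _
      have hZdir : Directed (· ⊇ ·) Z := by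
        intro K K'
        refine ⟨K ∪ K', fun p hp k hk => hp k ?_, fun p hp k hk => hp k ?_⟩
        · exact Finset.mem_union_left _ hk
        · exact Finset.mem_union_right _ hk
      have := IsCompact.nonempty_iInter_of_directed_nonempty_isCompact_isClosed Z hZdir hZne
        (fun K => (hZcl K).isCompact) hZcl
      obtain ⟨p, hp⟩ := this
      refine ⟨p, fun k => ?_⟩
      have := Set.mem_iInter.mp hp {k}
      exact this k (Finset.mem_singleton_self k)
    have hTmul : ∀ p ∈ T, ∀ q ∈ T, p * q ∈ T := by
      intro p hp q hq k
      refine (Ultrafilter.eventually_mul p q _).mpr ?_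
      refine Filter.Eventually.of_forall fun a => ?_
      have hev : ∀ᶠ b in (q : Filter G), (k * a) * b ∉ S := hq (k * a)
      refine hev.mono fun b hb => ?_
      simpa [mul_assoc] using hb
    obtain ⟨𝒰, h𝒰T, h𝒰idem⟩ := exists_idempotent_in_compact_subsemigroup
      Ultrafilter.continuous_mul_left T hTne (hTclosed.isCompact) hTmul
    -- now derive the contradiction: S ∈ 𝒰 but also D 1 ∈ 𝒰
    have hCmem : Cε ∈ 𝒰 := by
      have : ∀ᶠ g in (𝒰 : Filter G), ∀ s ∈ N, ∀ t ∈ N, ‖f (s * g * t) - f (s * t)‖ < ε := by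
        rw [Filter.eventually_all_finset]
        intro s hs
        rw [Filter.eventually_all_finset]
        intro t ht
        have h1 := (key_lemma f C hC hf 𝒰 h𝒰idem t).1 s
        have := Metric.tendsto_nhds.mp h1 ε hε
        refine this.mono fun g hg => ?_
        rwa [dist_eq_norm] at hg
      exact this
    have hCinv : Cε⁻¹ ∈ 𝒰 := by
      have : ∀ᶠ g in (𝒰 : Filter G), ∀ s ∈ N, ∀ t ∈ N, ‖f (s * g⁻¹ * t) - f (s * t)‖ < ε := by
        rw [Filter.eventually_all_finset]
        intro s hs
        rw [Filter.eventually_all_finset]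
        intro t ht
        have h1 := (key_lemma f C hC hf 𝒰 h𝒰idem t).2 s
        have := Metric.tendsto_nhds.mp h1 ε hε
        refine this.mono fun g hg => ?_
        rwa [dist_eq_norm] at hg
      exact this.mono fun g hg s hs t ht => hg s hs t ht
    have hSmem : S ∈ 𝒰 := by
      rw [hS]
      exact Filter.inter_mem hCmem hCinv
    have hD1 : D 1 ∈ 𝒰 := h𝒰T 1
    have : (S ∩ D 1).Nonempty := Ultrafilter.nonempty_of_mem (Filter.inter_mem hSmem hD1)
    obtain ⟨g, hgS, hgD⟩ := this
    rw [hD, Set.mem_setOf_eq, one_mul] at hgD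
    exact hgD hgS
  obtain ⟨K, hK⟩ := main
  refine ⟨⟨S, hSsub, hSsym, K, hK⟩, K⁻¹ ∪ K, ?_, ?_⟩
  · apply Set.eq_univ_of_univ_subset
    rw [← hK]
    refine Set.mul_subset_mul ?_ hSsub
    rw [Finset.coe_union, Finset.coe_inv]
    exact Set.subset_union_left
  · apply Set.eq_univ_of_univ_subset
    have hK2 : S * (K : Set G) = Set.univ := by
      have := congrArg (·⁻¹) hK
      simpa [mul_inv_rev, hSsym, Set.inv_univ] using this
    rw [← hK2]
    refine Set.mul_subset_mul hSsub ?_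
    rw [Finset.coe_union]
    exact Set.subset_union_right
end

section
/- Let G be a topological group, let X be a compact Hausdorff space with a jointly continuous G-action, and let x₀ ∈ X. Then x₀ is an almost automorphic point — i.e., for every ultrafilter 𝒰 on G and every y ∈ X, if t ↦ t•x₀ converges to y along 𝒰 then t ↦ t⁻¹•y converges to x₀ along 𝒰 — if and only if for every continuous F : X → ℂ the function t ↦ F(t•x₀) is Bochner left almost automorphic on G, i.e., it is bounded and for every ultrafilter 𝒰 on G and all φ, ψ : G → ℂ: (i) if t ↦ F((x·t)•x₀) converges to φ(x) along 𝒰 for every x ∈ G, then φ is continuous; and (ii) if moreover t ↦ φ(x·t⁻¹) converges to ψ(x) along 𝒰 for every x ∈ G, then ψ equals t ↦ F(t•x₀). -/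
/-- `x₀` is an almost automorphic point: for every ultrafilter `𝒰` on `G` and every `y`,
if `t ↦ t • x₀` converges to `y` along `𝒰` then `t ↦ t⁻¹ • y` converges to `x₀` along `𝒰`. -/
def AAPoint (G : Type*) {X : Type*} [Group G] [TopologicalSpace X] [MulAction G X]
    (x₀ : X) : Prop :=
  ∀ (𝒰 : Ultrafilter G) (y : X),
    Filter.Tendsto (fun t : G => t • x₀) (𝒰 : Filter G) (nhds y) →
    Filter.Tendsto (fun t : G => t⁻¹ • y) (𝒰 : Filter G) (nhds x₀)

/-- Lemma 6.2.4: `x₀` is an almost automorphic point of a compact flow iff every function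
coming from `(𝒳, x₀)` is Bochner left almost automorphic on `G`. -/
theorem stmt16 {G X : Type*} [Group G] [TopologicalSpace G] [IsTopologicalGroup G]
    [TopologicalSpace X] [CompactSpace X] [T2Space X] [MulAction G X]
    (hc : Continuous fun p : G × X => p.1 • p.2) (x₀ : X) :
    AAPoint G x₀ ↔ ∀ F : C(X, ℂ), BochnerLeftAA (fun t : G => F (t • x₀)) := by
  have smulc : ∀ x : G, Continuous fun p : X => x • p := fun x =>
    hc.comp (continuous_const.prodMk continuous_id)
  have smulc' : ∀ y : X, Continuous fun g : G => g • y := fun y =>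
    hc.comp (continuous_id.prodMk continuous_const)
  constructor
  · intro haa F
    refine ⟨?_, ?_⟩
    · have : Nonempty X := ⟨x₀⟩
      obtain ⟨c, hC⟩ := F.continuous.norm.exists_forall_ge (by simp [Filter.cocompact_eq_bot])
      exact ⟨‖F c‖, fun x => hC _⟩
    · intro 𝒰 φ ψ
      -- limit of t • x₀ along 𝒰
      obtain ⟨y, -, hy⟩ := isCompact_univ.ultrafilter_le_nhds (𝒰.map fun t : G => t • x₀)
        (by simp)
      have hy' : Filter.Tendsto (fun t : G => t • x₀) (𝒰 : Filter G) (nhds y) := hy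
      have hx₀ : Filter.Tendsto (fun t : G => t⁻¹ • y) (𝒰 : Filter G) (nhds x₀) :=
        haa 𝒰 y hy'
      have key : ∀ x : G, Filter.Tendsto (fun t : G => F ((x * t) • x₀)) (𝒰 : Filter G)
          (nhds (F (x • y))) := by
        intro x
        have : Filter.Tendsto (fun t : G => x • (t • x₀)) (𝒰 : Filter G) (nhds (x • y)) :=
          ((smulc x).tendsto y).comp hy'
        have := (F.continuous.tendsto _).comp this
        simpa [mul_smul, Function.comp_def] using this
      constructor
      · intro hφ
        have hφeq : φ = fun x : G => F (x • y) := by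
          funext x
          exact tendsto_nhds_unique (hφ x) (key x)
        rw [hφeq]
        exact F.continuous.comp (smulc' y)
      · intro hφ hψ
        have hφeq : φ = fun x : G => F (x • y) := by
          funext x
          exact tendsto_nhds_unique (hφ x) (key x)
        funext x
        have : Filter.Tendsto (fun t : G => x • (t⁻¹ • y)) (𝒰 : Filter G) (nhds (x • x₀)) :=
          ((smulc x).tendsto x₀).comp hx₀
        have h2 : Filter.Tendsto (fun t : G => φ (x * t⁻¹)) (𝒰 : Filter G)
            (nhds (F (x • x₀))) := by
          rw [hφeq]
          simpa [mul_smul, Function.comp_def] using (F.continuous.tendsto _).comp this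
        exact tendsto_nhds_unique (hψ x) h2
  · intro h 𝒰 y hy
    obtain ⟨z, -, hz⟩ := isCompact_univ.ultrafilter_le_nhds (𝒰.map fun t : G => t⁻¹ • y)
      (by simp)
    have hz' : Filter.Tendsto (fun t : G => t⁻¹ • y) (𝒰 : Filter G) (nhds z) := hz
    suffices hzx : z = x₀ by rwa [hzx] at hz'
    by_contra hne
    obtain ⟨g, hg0, hg1, -⟩ := exists_continuous_zero_one_of_isClosed
      (isClosed_singleton (x := z)) (isClosed_singleton (x := x₀))
      (by simpa [Set.disjoint_singleton] using hne)
    set F : C(X, ℂ) := ⟨fun p => (g p : ℂ), Complex.continuous_ofReal.comp g.continuous⟩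
    obtain ⟨-, hmain⟩ := h F
    have key : ∀ x : G, Filter.Tendsto (fun t : G => F ((x * t) • x₀)) (𝒰 : Filter G)
        (nhds (F (x • y))) := by
      intro x
      have : Filter.Tendsto (fun t : G => x • (t • x₀)) (𝒰 : Filter G) (nhds (x • y)) :=
        ((smulc x).tendsto y).comp hy
      simpa [mul_smul, Function.comp_def] using (F.continuous.tendsto _).comp this
    have key2 : ∀ x : G, Filter.Tendsto (fun t : G => F ((x * t⁻¹) • y)) (𝒰 : Filter G)
        (nhds (F (x • z))) := by
      intro x
      have : Filter.Tendsto (fun t : G => x • (t⁻¹ • y)) (𝒰 : Filter G) (nhds (x • z)) :=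
        ((smulc x).tendsto z).comp hz'
      simpa [mul_smul, Function.comp_def] using (F.continuous.tendsto _).comp this
    have := (hmain 𝒰 (fun x => F (x • y)) (fun x => F (x • z))).2 key key2
    have h1 := congrFun this 1
    simp only [one_smul] at h1
    have : g z = g x₀ := by
      simp only [F, ContinuousMap.coe_mk] at h1
      exact_mod_cast h1
    rw [hg0 rfl, hg1 rfl] at this
    simp at this
end
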